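/- arXiv:2007.09579 — 12 statements merged into one kernel-verified Lean document; each statement's English description precedes it below -/
import Mathlib

section
/- Let T be a finite type set with |T| = m, let f be the uniform distribution on T, let O be a finite outcome set, and let v : T × O → ℝ≥0 be a valuation. For every ε ≥ 0 and every mechanism M on this data that is ε-BIC and IR, there exists a mechanism M' on the same data that is BIC and IR and satisfies W(M') ≥ W(M) and R(M') ≥ R(M) − m·ε. -/
/-!
Write `A t s` for the value of type `t` for the lottery reported by `s`, and `u t = A t t - p t`.
Reassign the lotteries along a permutation `π` maximising `∑ t, A t (π t)`; this choice of `π` is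
exactly what rules out positive cycles for the weights `g t s = A t (π s) - A s (π s)`. So Rochet's
construction applies: the heaviest simple path out of `t` has a weight `U t ≥ U s + g t s`, and
charging `A t (π t) - U t` makes the reassigned mechanism BIC with utility `U`.
By ε-BIC, `g t s ≤ u t - u s + c s` with `c s = ε + u s + p (π s) - A s (π s) ≥ 0`, and
`∑ c = m ε - (welfare gain) ≤ m ε`. Telescoping along a simple path gives `U t ≤ u t + ∑ c`,
so summed over the `m` types the payments drop by at most `m² ε`.
-/

open Finset

variable {T : Type}

/-- `pathWeight g t [s₁, …, sₖ] = g t s₁ + g s₁ s₂ + ⋯ + g sₖ₋₁ sₖ`. -/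
def pathWeight (g : T → T → ℝ) : T → List T → ℝ
  | _, [] => 0
  | t, s :: l => g t s + pathWeight g s l

section PathWeight

variable (g : T → T → ℝ)

theorem pathWeight_append (t : T) (l₁ l₂ : List T) :
    pathWeight g t (l₁ ++ l₂) = pathWeight g t l₁ + pathWeight g (l₁.getLastD t) l₂ := by
  induction l₁ generalizing t with
  | nil => simp [pathWeight]
  | cons s l ih => rw [List.cons_append, pathWeight, pathWeight, ih, List.getLastD_cons, add_assoc]

theorem pathWeight_le_of_le_sub_add {φ c : T → ℝ} (h : ∀ t s, g t s ≤ φ t - φ s + c s)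
    (t : T) (l : List T) : pathWeight g t l ≤ φ t - φ (l.getLastD t) + (l.map c).sum := by
  induction l generalizing t with
  | nil => simp [pathWeight]
  | cons s l ih =>
    simp only [pathWeight, List.getLastD_cons, List.map_cons, List.sum_cons]
    linarith [h t s, ih s]

theorem pathWeight_append_eq_sum_map (f : T → T) (t : T) (l : List T)
    (hf : (t :: l).IsChain fun a b => f a = b) :
    pathWeight g t (l ++ [f (l.getLastD t)]) = ((t :: l).map fun s => g s (f s)).sum := by
  induction l generalizing t with
  | nil => simp [pathWeight]
  | cons s l ih =>
    obtain ⟨rfl, hf⟩ := List.isChain_cons_cons.1 hf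
    rw [List.cons_append, pathWeight, List.getLastD_cons, ih _ hf]
    simp only [List.map_cons, List.sum_cons]

theorem List.isChain_formPerm [DecidableEq T] {l : List T} (hl : l.Nodup) :
    l.IsChain fun a b => l.formPerm a = b :=
  List.isChain_iff_getElem.2 fun i hi => l.formPerm_apply_lt_getElem hl i hi

variable [Fintype T] {g}

theorem pathWeight_cycle_nonpos (hg₀ : ∀ t, g t t = 0) (hg : ∀ σ : Equiv.Perm T, ∑ s, g s (σ s) ≤ 0)
    {t : T} {l : List T} (hl : (t :: l).Nodup) : pathWeight g t (l ++ [t]) ≤ 0 := by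
  classical
  have hclose : (t :: l).formPerm (l.getLastD t) = t := by
    rw [← List.getLast_eq_getLastD (List.cons_ne_nil t l), List.formPerm_apply_getLast]
  have hcycle := pathWeight_append_eq_sum_map g _ t l (List.isChain_formPerm hl)
  rw [hclose] at hcycle
  calc pathWeight g t (l ++ [t])
      = ∑ s ∈ (t :: l).toFinset, g s ((t :: l).formPerm s) := by
        rw [hcycle, List.sum_toFinset _ hl]
    _ = ∑ s, g s ((t :: l).formPerm s) :=
        sum_subset (subset_univ _) fun s _ hs => by
          rw [List.formPerm_apply_of_notMem (by simpa using hs), hg₀]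
    _ ≤ 0 := hg _

theorem pathWeight_le_neg_of_cycle_nonpos (hg₀ : ∀ t, g t t = 0)
    (hg : ∀ σ : Equiv.Perm T, ∑ s, g s (σ s) ≤ 0) {t : T} {l : List T} (hl : (t :: l).Nodup) :
    pathWeight g t l ≤ -g (l.getLastD t) t := by
  have hcycle := pathWeight_cycle_nonpos hg₀ hg hl
  rw [pathWeight_append] at hcycle
  simp only [pathWeight] at hcycle
  linarith

end PathWeight

section MaxPathWeight

noncomputable def maxPathWeight (g : T → T → ℝ) (t : T) : ℝ :=
  ⨆ l : {l : List T // (t :: l).Nodup}, pathWeight g t l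

variable {g : T → T → ℝ}

theorem maxPathWeight_le {t : T} {b : ℝ} (h : ∀ l, (t :: l).Nodup → pathWeight g t l ≤ b) :
    maxPathWeight g t ≤ b :=
  have : Nonempty {l : List T // (t :: l).Nodup} := ⟨⟨[], List.nodup_singleton t⟩⟩
  ciSup_le fun l => h l.1 l.2

variable [Fintype T]

instance (t : T) : Finite {l : List T // (t :: l).Nodup} :=
  Finite.of_injective (fun l => (⟨l.1, l.2.of_cons⟩ : {l : List T // l.Nodup}))
    fun _ _ h => Subtype.ext (Subtype.mk.inj h)

theorem pathWeight_le_maxPathWeight {t : T} {l : List T} (hl : (t :: l).Nodup) :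
    pathWeight g t l ≤ maxPathWeight g t :=
  le_ciSup (f := fun l : {l : List T // (t :: l).Nodup} => pathWeight g t l)
    (Set.finite_range _).bddAbove ⟨l, hl⟩

theorem maxPathWeight_nonneg (t : T) : 0 ≤ maxPathWeight g t :=
  pathWeight_le_maxPathWeight (l := []) (List.nodup_singleton t)

theorem maxPathWeight_add_le (hg₀ : ∀ t, g t t = 0) (hg : ∀ σ : Equiv.Perm T, ∑ s, g s (σ s) ≤ 0)
    (t s : T) : maxPathWeight g s + g t s ≤ maxPathWeight g t := by
  suffices h : ∀ l, (s :: l).Nodup → g t s + pathWeight g s l ≤ maxPathWeight g t by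
    linarith [maxPathWeight_le (g := g) (b := maxPathWeight g t - g t s)
      fun l hl => by linarith [h l hl]]
  intro l hl
  by_cases ht : t ∈ s :: l
  · -- a path through `t` splits into a cycle at `t`, of weight `≤ 0`, and a simple path from `t`
    obtain ⟨l₁, l₂, hsplit⟩ := List.append_of_mem ht
    rw [hsplit, List.nodup_middle] at hl
    have hcycle := pathWeight_cycle_nonpos hg₀ hg
      (hl.sublist ((List.sublist_append_left l₁ l₂).cons_cons t))
    have hrest := pathWeight_le_maxPathWeight (g := g)
      (hl.sublist ((List.sublist_append_right l₁ l₂).cons_cons t))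
    have hsum : g t s + pathWeight g s l = pathWeight g t (l₁ ++ [t]) + pathWeight g t l₂ :=
      calc g t s + pathWeight g s l = pathWeight g t ((l₁ ++ [t]) ++ l₂) := by
            rw [List.append_assoc, List.singleton_append, ← hsplit, pathWeight]
        _ = _ := by rw [pathWeight_append, List.getLastD_concat]
    linarith
  · exact pathWeight_le_maxPathWeight (g := g) (l := s :: l) (hl.cons ht)

theorem maxPathWeight_le_add_sum {φ c : T → ℝ} (hφ : ∀ t, 0 ≤ φ t) (hc : ∀ s, 0 ≤ c s)
    (h : ∀ t s, g t s ≤ φ t - φ s + c s) (t : T) : maxPathWeight g t ≤ φ t + ∑ s, c s := by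
  classical
  refine maxPathWeight_le fun l hl => ?_
  have hsum : (l.map c).sum ≤ ∑ s, c s := by
    rw [← List.sum_toFinset c hl.of_cons]
    exact sum_le_univ_sum_of_nonneg hc
  linarith [pathWeight_le_of_le_sub_add g h t l, hφ (l.getLastD t)]

end MaxPathWeight

theorem exists_perm_BIC_of_epsBIC [Fintype T] (A : T → T → ℝ) (hA : ∀ t s, 0 ≤ A t s)
    (p : T → ℝ) (ε : ℝ) (hBIC : ∀ t s, A t s - p s - ε ≤ A t t - p t)
    (hIR : ∀ t, 0 ≤ A t t - p t) :
    ∃ (π : Equiv.Perm T) (p' : T → ℝ), (∀ t, 0 ≤ p' t) ∧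
      (∀ t s, A t (π s) - p' s ≤ A t (π t) - p' t) ∧ (∀ t, 0 ≤ A t (π t) - p' t) ∧
      ∑ t, A t t ≤ ∑ t, A t (π t) ∧
      ∑ t, p t - Fintype.card T * (Fintype.card T * ε) ≤ ∑ t, p' t := by
  classical
  obtain ⟨π, -, hπ⟩ := exists_max_image univ (fun σ : Equiv.Perm T => ∑ t, A t (σ t))
    univ_nonempty
  set g : T → T → ℝ := fun t s => A t (π s) - A s (π s)
  have hg₀ : ∀ t, g t t = 0 := fun _ => sub_self _
  have hg : ∀ σ : Equiv.Perm T, ∑ s, g s (σ s) ≤ 0 := by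
    intro σ
    have hπσ := hπ (π * σ) (mem_univ _)
    simp only [Equiv.Perm.coe_mul, Function.comp_apply] at hπσ
    simp only [g, sum_sub_distrib, Equiv.sum_comp σ fun s => A s (π s)]
    linarith
  have hW : ∑ t, A t t ≤ ∑ t, A t (π t) := by simpa using hπ 1 (mem_univ _)
  set U := maxPathWeight g
  have hUA (t : T) : U t ≤ A t (π t) := maxPathWeight_le fun l hl => by
    linarith [pathWeight_le_neg_of_cycle_nonpos hg₀ hg hl, hA (l.getLastD t) (π t)]
  have hUu (t : T) : U t ≤ (A t t - p t) + ∑ s, (ε + (A s s - p s) + p (π s) - A s (π s)) :=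
    maxPathWeight_le_add_sum hIR (fun s => by linarith [hBIC s (π s)])
      (fun t s => by simp only [g]; linarith [hBIC t (π s)]) t
  refine ⟨π, fun t => A t (π t) - U t, fun t => sub_nonneg.2 (hUA t), fun t s => ?_,
    fun t => by simpa using maxPathWeight_nonneg t, hW, ?_⟩
  · have := maxPathWeight_add_le hg₀ hg t s
    simp only [g] at this
    linarith
  · have hUsum := sum_le_sum fun t (_ : t ∈ univ) => hUu t
    simp only [sum_add_distrib, sum_sub_distrib, sum_const, card_univ, nsmul_eq_mul,
      Equiv.sum_comp π p] at hUsum ⊢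
    have hgain : 0 ≤ (Fintype.card T : ℝ) * (∑ t, A t (π t) - ∑ t, A t t) :=
      mul_nonneg (Nat.cast_nonneg _) (sub_nonneg.2 hW)
    linarith

theorem epsBIC_to_BIC_uniform_general
    {T O : Type} [Fintype T] [Fintype O]
    (m : ℕ) (hm : Fintype.card T = m)
    (v : T → O → ℝ) (hv : ∀ t o, 0 ≤ v t o)
    (ε : ℝ)
    (x : T → O → ℝ) (p : T → ℝ)
    (hx0 : ∀ t o, 0 ≤ x t o) (hx1 : ∀ t, ∑ o, x t o = 1)
    -- M is ε-BIC
    (hBIC : ∀ t t' : T,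
      (∑ o, x t o * v t o) - p t ≥ (∑ o, x t' o * v t o) - p t' - ε)
    -- M is IR
    (hIR : ∀ t : T, 0 ≤ (∑ o, x t o * v t o) - p t) :
    ∃ (x' : T → O → ℝ) (p' : T → ℝ),
      (∀ t o, 0 ≤ x' t o) ∧ (∀ t, ∑ o, x' t o = 1) ∧ (∀ t, 0 ≤ p' t) ∧
      -- M' is BIC
      (∀ t t' : T,
        (∑ o, x' t o * v t o) - p' t ≥ (∑ o, x' t' o * v t o) - p' t') ∧
      -- M' is IR
      (∀ t : T, 0 ≤ (∑ o, x' t o * v t o) - p' t) ∧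
      -- W(M') ≥ W(M)
      (∑ t, (1 / (m : ℝ)) * ∑ o, x' t o * v t o)
        ≥ (∑ t, (1 / (m : ℝ)) * ∑ o, x t o * v t o) ∧
      -- R(M') ≥ R(M) − m·ε
      (∑ t, (1 / (m : ℝ)) * p' t) ≥ (∑ t, (1 / (m : ℝ)) * p t) - m * ε := by
  obtain ⟨π, p', hp'0, hBIC', hIR', hW, hR⟩ :=
    exists_perm_BIC_of_epsBIC (fun t s => ∑ o, x s o * v t o)
      (fun t s => sum_nonneg fun o _ => mul_nonneg (hx0 s o) (hv t o)) p ε hBIC hIR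
  refine ⟨fun t => x (π t), p', fun t o => hx0 _ _, fun t => hx1 _, hp'0, hBIC', hIR', ?_, ?_⟩
  · simp only [← mul_sum]
    exact mul_le_mul_of_nonneg_left hW (by positivity)
  · rw [hm] at hR
    simp only [← mul_sum]
    calc 1 / (m : ℝ) * ∑ t, p t - m * ε = 1 / m * (∑ t, p t - m * (m * ε)) := by
          rw [mul_sub, ← mul_assoc, ← mul_assoc, one_div, inv_mul_mul_self]
      _ ≤ 1 / m * ∑ t, p' t := mul_le_mul_of_nonneg_left hR (by positivity)

/-- For a single agent with uniform type distribution over `m` types,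
every `ε`-BIC and IR mechanism can be transformed into a BIC and IR mechanism with
at least the same expected social welfare and expected revenue loss at most `m·ε`. -/
theorem epsBIC_to_BIC_uniform
    {T O : Type} [Fintype T] [Fintype O] [Nonempty T]
    (m : ℕ) (hm : Fintype.card T = m)
    (v : T → O → ℝ) (hv : ∀ t o, 0 ≤ v t o)
    (ε : ℝ) (hε : 0 ≤ ε)
    (x : T → O → ℝ) (p : T → ℝ)
    (hx0 : ∀ t o, 0 ≤ x t o) (hx1 : ∀ t, ∑ o, x t o = 1)
    (hp : ∀ t, 0 ≤ p t)
    -- M is ε-BIC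
    (hBIC : ∀ t t' : T,
      (∑ o, x t o * v t o) - p t ≥ (∑ o, x t' o * v t o) - p t' - ε)
    -- M is IR
    (hIR : ∀ t : T, 0 ≤ (∑ o, x t o * v t o) - p t) :
    ∃ (x' : T → O → ℝ) (p' : T → ℝ),
      (∀ t o, 0 ≤ x' t o) ∧ (∀ t, ∑ o, x' t o = 1) ∧ (∀ t, 0 ≤ p' t) ∧
      -- M' is BIC
      (∀ t t' : T,
        (∑ o, x' t o * v t o) - p' t ≥ (∑ o, x' t' o * v t o) - p' t') ∧
      -- M' is IR
      (∀ t : T, 0 ≤ (∑ o, x' t o * v t o) - p' t) ∧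
      -- W(M') ≥ W(M)
      (∑ t, (1 / (m : ℝ)) * ∑ o, x' t o * v t o)
        ≥ (∑ t, (1 / (m : ℝ)) * ∑ o, x t o * v t o) ∧
      -- R(M') ≥ R(M) − m·ε
      (∑ t, (1 / (m : ℝ)) * p' t) ≥ (∑ t, (1 / (m : ℝ)) * p t) - m * ε :=
  epsBIC_to_BIC_uniform_general m hm v hv ε x p hx0 hx1 hBIC hIR
end

section
/- For every integer m ≥ 2 and every ε > 0, there exist a finite type set T with |T| = m, a finite outcome set O, and a valuation v : T × O → ℝ≥0, together with a mechanism M that is ε-BIC (and also ε-EEIC) and IR with respect to the uniform distribution f on T, such that every mechanism M' on the same data that is BIC and IR and satisfies W(M') ≥ W(M) must satisfy R(M') ≤ R(M) − (m−1)·ε/2. In particular, any welfare-preserving ε-BIC-to-BIC transformation must suffer revenue loss Ω(m·ε). -/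
/-!
Take types `0, …, m-1` and outcomes `0, …, m-1`; type `t` values outcome `t` at `(2t+1)ε`,
outcome `t-1` at `2tε`, and everything else at `0`. The mechanism that gives each type its own
outcome at full price is IR and extracts all welfare, and the only profitable deviation,
from `t` down to `t-1`, gains exactly `ε`. A BIC, IR mechanism with at least the same welfare
must still hand every type its own outcome, since that outcome is its strict favourite; then
BIC along the chain `t-1 → t` forces the utility of type `t` up by `ε` per step, so type `t`
keeps at least `tε`, and averaging `tε` over `t` gives the loss `(m-1)ε/2`.
-/


open Finset

section Lottery

variable {ι : Type*} [Fintype ι]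

theorem eq_boole_of_le_sum_mul [DecidableEq ι] {x v : ι → ℝ} (hx0 : ∀ o, 0 ≤ x o)
    (hx1 : ∑ o, x o = 1) {a : ι} (hv : ∀ o ≠ a, v o < v a) (h : v a ≤ ∑ o, x o * v o) :
    x = fun o => if a = o then 1 else 0 := by
  have hgap_nonneg : ∀ o ∈ univ, 0 ≤ x o * (v a - v o) := fun o _ => by
    obtain rfl | ho := eq_or_ne o a
    · simp
    · exact mul_nonneg (hx0 o) (sub_pos.mpr (hv o ho)).le
  have hgap : ∑ o, x o * (v a - v o) = 0 := by
    refine le_antisymm ?_ (sum_nonneg hgap_nonneg)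
    simp only [mul_sub, sum_sub_distrib, ← sum_mul, hx1, one_mul]
    linarith
  have hzero : ∀ o ≠ a, x o = 0 := fun o ho =>
    (mul_eq_zero.mp ((sum_eq_zero_iff_of_nonneg hgap_nonneg).mp hgap o (mem_univ o))).resolve_right
      (sub_ne_zero.mpr (hv o ho).ne')
  have hone : x a = 1 := by
    rwa [sum_eq_single a (fun o _ => hzero o) (by simp)] at hx1
  funext o
  obtain rfl | ho := eq_or_ne a o
  · simpa using hone
  · simpa [ho] using hzero o (Ne.symm ho)

theorem sum_mul_le_of_le {x v : ι → ℝ} (hx0 : ∀ o, 0 ≤ x o) (hx1 : ∑ o, x o = 1) {c : ℝ}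
    (hv : ∀ o, v o ≤ c) : ∑ o, x o * v o ≤ c :=
  calc ∑ o, x o * v o ≤ ∑ o, x o * c :=
        sum_le_sum fun o _ => mul_le_mul_of_nonneg_left (hv o) (hx0 o)
    _ = c := by rw [← sum_mul, hx1, one_mul]

theorem le_of_sum_mul_le_sum_mul {f g : ι → ℝ} {c : ℝ} (hc : 0 < c) (hfg : ∀ i, f i ≤ g i)
    (h : ∑ i, c * g i ≤ ∑ i, c * f i) (i : ι) : g i ≤ f i := by
  rw [← mul_sum, ← mul_sum, mul_le_mul_iff_right₀ hc] at h
  exact ((sum_eq_sum_iff_of_le fun i _ => hfg i).mp (le_antisymm (sum_le_sum fun i _ => hfg i) h)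
    i (mem_univ i)).ge

end Lottery

theorem Fin.nat_mul_le_of_add_le {m : ℕ} {u : Fin m → ℝ} {ε : ℝ} (h0 : ∀ t, 0 ≤ u t)
    (hstep : ∀ s t : Fin m, (s : ℕ) + 1 = t → u s + ε ≤ u t) (t : Fin m) :
    (t : ℕ) * ε ≤ u t := by
  obtain ⟨n, hn⟩ := t
  induction n with
  | zero => simpa using h0 ⟨0, hn⟩
  | succ n ih =>
    have := hstep ⟨n, by omega⟩ ⟨n + 1, hn⟩ rfl
    push_cast
    linarith [ih (by omega)]

theorem Fin.sum_val_cast (m : ℕ) : ∑ t : Fin m, ((t : ℕ) : ℝ) = m * (m - 1) / 2 := by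
  induction m with
  | zero => simp
  | succ m ih => rw [Fin.sum_univ_castSucc]; simp [ih]; ring

section HardValuation

variable {m : ℕ} {ε : ℝ}

noncomputable def hardValuation (ε : ℝ) (t o : Fin m) : ℝ :=
  if o = t then (2 * (t : ℕ) + 1) * ε else if (o : ℕ) + 1 = t then 2 * (t : ℕ) * ε else 0

@[simp]
theorem hardValuation_self (t : Fin m) : hardValuation ε t t = (2 * (t : ℕ) + 1) * ε := by
  simp [hardValuation]

theorem hardValuation_nonneg (hε : 0 ≤ ε) (t o : Fin m) : 0 ≤ hardValuation ε t o := by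
  unfold hardValuation; split_ifs <;> positivity

theorem hardValuation_lt_self (hε : 0 < ε) {t o : Fin m} (h : o ≠ t) :
    hardValuation ε t o < hardValuation ε t t := by
  rw [hardValuation_self, hardValuation, if_neg h]
  split_ifs <;> nlinarith

theorem hardValuation_le_self (hε : 0 ≤ ε) (t o : Fin m) :
    hardValuation ε t o ≤ hardValuation ε t t := by
  rw [hardValuation_self, hardValuation]
  split_ifs <;> nlinarith

theorem hardValuation_of_succ {s t : Fin m} (h : (s : ℕ) + 1 = t) :
    hardValuation ε t s = hardValuation ε s s + ε := by
  have hst : s ≠ t := fun h' => by simp [h'] at h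
  rw [hardValuation, if_neg hst, if_pos h, hardValuation_self, ← h]
  push_cast; ring

theorem hardValuation_le_add (hε : 0 ≤ ε) (t s : Fin m) :
    hardValuation ε t s ≤ hardValuation ε s s + ε := by
  by_cases h : (s : ℕ) + 1 = t
  · rw [hardValuation_of_succ h]
  · have := hardValuation_nonneg hε s s
    rw [hardValuation, if_neg h]
    split_ifs with hst
    · subst hst; simpa using hε
    · linarith

theorem hardValuation_nat_mul_le_utility (hε : 0 < ε) {x : Fin m → Fin m → ℝ} {p : Fin m → ℝ}
    (hx0 : ∀ t o, 0 ≤ x t o) (hx1 : ∀ t, ∑ o, x t o = 1)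
    (hbic : ∀ t t',
      ∑ o, x t' o * hardValuation ε t o - p t' ≤ ∑ o, x t o * hardValuation ε t o - p t)
    (hir : ∀ t, 0 ≤ ∑ o, x t o * hardValuation ε t o - p t)
    (hwelfare : ∀ t, hardValuation ε t t ≤ ∑ o, x t o * hardValuation ε t o) (t : Fin m) :
    (t : ℕ) * ε ≤ hardValuation ε t t - p t := by
  have hx : ∀ t, x t = fun o => if t = o then 1 else 0 := fun t =>
    eq_boole_of_le_sum_mul (hx0 t) (hx1 t) (fun o => hardValuation_lt_self hε) (hwelfare t)
  simp only [hx, sum_boole_mul, mem_univ, if_true] at hbic hir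
  refine Fin.nat_mul_le_of_add_le hir (fun s t hst => ?_) t
  linarith [hbic t s, hardValuation_of_succ (ε := ε) hst]

end HardValuation

/-- Lower bound on revenue loss (single agent, uniform distribution):
for every `m ≥ 2` and `ε > 0` there is an instance (type set `Fin m`, outcome set
`Fin k`, valuation `v`) and an `ε`-BIC, `ε`-EEIC and IR mechanism `(x, p)` such that
every BIC and IR mechanism `(x', p')` preserving social welfare loses at least
`(m−1)·ε/2` revenue. -/
theorem lower_bound_revenue_loss_single_agent
    (m : ℕ) (hm : 2 ≤ m) (ε : ℝ) (hε : 0 < ε) :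
    ∃ (k : ℕ) (v : Fin m → Fin k → ℝ) (x : Fin m → Fin k → ℝ) (p : Fin m → ℝ),
      (∀ t o, 0 ≤ v t o) ∧
      (∀ t o, 0 ≤ x t o) ∧ (∀ t, ∑ o, x t o = 1) ∧ (∀ t, 0 ≤ p t) ∧
      -- M is ε-BIC
      (∀ t t' : Fin m,
        (∑ o, x t o * v t o) - p t ≥ (∑ o, x t' o * v t o) - p t' - ε) ∧
      -- M is ε-EEIC (w.r.t. the uniform distribution)
      (∑ t, (1 / (m : ℝ)) *
        ((Finset.univ.sup' (Finset.univ_nonempty_iff.mpr ⟨⟨0, by omega⟩⟩)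
            fun t' => (∑ o, x t' o * v t o) - p t')
          - ((∑ o, x t o * v t o) - p t)) ≤ ε) ∧
      -- M is IR
      (∀ t : Fin m, 0 ≤ (∑ o, x t o * v t o) - p t) ∧
      -- every welfare-preserving BIC and IR mechanism loses at least (m−1)·ε/2 revenue
      (∀ (x' : Fin m → Fin k → ℝ) (p' : Fin m → ℝ),
        (∀ t o, 0 ≤ x' t o) → (∀ t, ∑ o, x' t o = 1) → (∀ t, 0 ≤ p' t) →
        (∀ t t' : Fin m,
          (∑ o, x' t o * v t o) - p' t ≥ (∑ o, x' t' o * v t o) - p' t') →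
        (∀ t : Fin m, 0 ≤ (∑ o, x' t o * v t o) - p' t) →
        (∑ t, (1 / (m : ℝ)) * ∑ o, x' t o * v t o)
          ≥ (∑ t, (1 / (m : ℝ)) * ∑ o, x t o * v t o) →
        (∑ t, (1 / (m : ℝ)) * p' t)
          ≤ (∑ t, (1 / (m : ℝ)) * p t) - ((m : ℝ) - 1) * ε / 2) := by
  have hm0 : m ≠ 0 := by omega
  have huniform : ∑ _t : Fin m, 1 / (m : ℝ) = 1 := by simp [hm0]
  refine ⟨m, hardValuation ε, fun t o => if t = o then 1 else 0, fun t => hardValuation ε t t,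
    fun t o => hardValuation_nonneg hε.le t o, fun t o => by positivity, fun t => by simp,
    fun t => hardValuation_nonneg hε.le t t, ?_, ?_, ?_, ?_⟩ <;>
    simp only [sum_boole_mul, mem_univ, if_true, sub_self, sub_zero]
  · exact fun t t' => by linarith [hardValuation_le_add hε.le t t']
  · refine sum_mul_le_of_le (fun _ => by positivity) huniform fun t => ?_
    exact sup'_le _ _ fun s _ => sub_le_iff_le_add'.mpr (hardValuation_le_add hε.le t s)
  · exact fun _ => le_rfl
  · intro x' p' hx0 hx1 _ hbic hir hW
    have hwelfare := le_of_sum_mul_le_sum_mul (by positivity)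
      (fun t => sum_mul_le_of_le (hx0 t) (hx1 t) (hardValuation_le_self hε.le t)) hW
    have hutil := hardValuation_nat_mul_le_utility hε hx0 hx1 hbic hir hwelfare
    calc ∑ t, 1 / (m : ℝ) * p' t ≤ ∑ t, 1 / (m : ℝ) * (hardValuation ε t t - (t : ℕ) * ε) :=
          sum_le_sum fun t _ => by gcongr; linarith [hutil t]
      _ = ∑ t, 1 / (m : ℝ) * hardValuation ε t t - (m - 1) * ε / 2 := by
          simp only [mul_sub, sum_sub_distrib, ← mul_sum, ← sum_mul, Fin.sum_val_cast]
          field_simp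
end

section
/- Let T be a finite type set with |T| = m, let f be the uniform distribution on T, let O be a finite outcome set, and let v : T × O → ℝ≥0 be a valuation. Let ε ≥ 0 and let M = (x, p) be an ε-BIC mechanism whose menu {(x(t), p(t)) : t ∈ T} contains exactly C distinct elements. Then there exists a BIC mechanism M' on the same data with W(M') ≥ W(M) and R(M') ≥ R(M) − C·ε. -/
open Finset

/-- Discount function on the set `S` of prices: for `q ∈ S`,
`dfun S ε q = min_{s ∈ S, s ≤ q} (q - s + (|{r ∈ S : r ≤ s}| - 1)·ε)`. -/
noncomputable def dfun (S : Finset ℝ) (ε : ℝ) (q : ℝ) : ℝ :=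
  if h : (S.filter (fun s => s ≤ q)).Nonempty then
    (S.filter (fun s => s ≤ q)).inf' h
      (fun s => q - s + (((S.filter (fun r => r ≤ s)).card : ℝ) - 1) * ε)
  else 0

lemma dfun_le (S : Finset ℝ) (ε : ℝ) {q s : ℝ} (hs : s ∈ S) (hsq : s ≤ q) :
    dfun S ε q ≤ q - s + (((S.filter (fun r => r ≤ s)).card : ℝ) - 1) * ε := by
  have hne : (S.filter (fun r => r ≤ q)).Nonempty := ⟨s, by simp [hs, hsq]⟩
  rw [dfun, dif_pos hne]
  exact Finset.inf'_le _ (by simp [hs, hsq])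

lemma dfun_attain (S : Finset ℝ) (ε : ℝ) {q : ℝ} (hq : q ∈ S) :
    ∃ s ∈ S, s ≤ q ∧ dfun S ε q
      = q - s + (((S.filter (fun r => r ≤ s)).card : ℝ) - 1) * ε := by
  have hne : (S.filter (fun r => r ≤ q)).Nonempty := ⟨q, by simp [hq]⟩
  rw [dfun, dif_pos hne]
  obtain ⟨s, hsmem, hset⟩ := Finset.exists_mem_eq_inf' hne
    (fun s => q - s + (((S.filter (fun r => r ≤ s)).card : ℝ) - 1) * ε)
  simp only [Finset.mem_filter] at hsmem
  exact ⟨s, hsmem.1, hsmem.2, hset⟩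

lemma card_filter_pos (S : Finset ℝ) {s : ℝ} (hs : s ∈ S) :
    1 ≤ ((S.filter (fun r => r ≤ s)).card : ℝ) := by
  have : 0 < (S.filter (fun r => r ≤ s)).card :=
    Finset.card_pos.mpr ⟨s, by simp [hs]⟩
  exact_mod_cast this

lemma dfun_nonneg (S : Finset ℝ) {ε : ℝ} (hε : 0 ≤ ε) {q : ℝ} (hq : q ∈ S) :
    0 ≤ dfun S ε q := by
  obtain ⟨s, hsS, hsq, heq⟩ := dfun_attain S ε hq
  have h1 := card_filter_pos S hsS
  nlinarith

/-- Lipschitz / monotonicity property: `dfun q' ≤ dfun q + (q' - q)` for `q ≤ q'`. -/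
lemma dfun_mono (S : Finset ℝ) (ε : ℝ) {q q' : ℝ} (hq : q ∈ S) (hle : q ≤ q') :
    dfun S ε q' ≤ dfun S ε q + (q' - q) := by
  obtain ⟨s, hsS, hsq, heq⟩ := dfun_attain S ε hq
  have h := dfun_le S ε hsS (le_trans hsq hle)
  linarith

/-- Gap property: if `q < q'` and the discounts differ by less than `ε`,
then they differ by exactly `q' - q`. -/
lemma dfun_gap (S : Finset ℝ) {ε : ℝ} (hε : 0 ≤ ε) {q q' : ℝ}
    (hq : q ∈ S) (hq' : q' ∈ S) (hlt : q < q')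
    (hsmall : dfun S ε q' - dfun S ε q < ε) :
    dfun S ε q' - dfun S ε q = q' - q := by
  obtain ⟨s', hs'S, hs'q', heq'⟩ := dfun_attain S ε hq'
  by_cases hsq : s' ≤ q
  · -- minimizer for q' is also feasible for q
    have h1 := dfun_le S ε hs'S hsq
    have h2 := dfun_mono S ε hq (le_of_lt hlt)
    linarith
  · -- minimizer strictly above q : forces gap at least ε, contradiction
    push_neg at hsq
    have hsub : S.filter (fun r => r ≤ q) ⊂ S.filter (fun r => r ≤ s') := by
      refine Finset.ssubset_iff_of_subset ?_ |>.mpr ⟨s', by simp [hs'S], by simp [not_le.mpr hsq]⟩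
      intro r hr
      simp only [Finset.mem_filter] at hr ⊢
      exact ⟨hr.1, le_trans hr.2 (le_of_lt hsq)⟩
    have hcard : (S.filter (fun r => r ≤ q)).card + 1 ≤ (S.filter (fun r => r ≤ s')).card :=
      Finset.card_lt_card hsub
    have hcardR : ((S.filter (fun r => r ≤ q)).card : ℝ) + 1
        ≤ ((S.filter (fun r => r ≤ s')).card : ℝ) := by exact_mod_cast hcard
    have hdq := dfun_le S ε hq (le_refl q)
    have : dfun S ε q' ≥ (((S.filter (fun r => r ≤ s')).card : ℝ) - 1) * ε := by
      rw [heq']; nlinarith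
    exfalso
    nlinarith

/-- Tighter revenue-loss bound for finite menus (single agent, uniform
distribution): if the menu of an `ε`-BIC mechanism has exactly `C` distinct elements,
then there is a BIC mechanism preserving welfare with revenue loss at most `C·ε`. -/
theorem epsBIC_to_BIC_menu_bound
    {T O : Type} [Fintype T] [Fintype O] [Nonempty T]
    (m : ℕ) (hm : Fintype.card T = m)
    (v : T → O → ℝ) (hv : ∀ t o, 0 ≤ v t o)
    (ε : ℝ) (hε : 0 ≤ ε)
    (x : T → O → ℝ) (p : T → ℝ)
    (hx0 : ∀ t o, 0 ≤ x t o) (hx1 : ∀ t, ∑ o, x t o = 1)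
    (hp : ∀ t, 0 ≤ p t)
    -- M is ε-BIC
    (hBIC : ∀ t t' : T,
      (∑ o, x t o * v t o) - p t ≥ (∑ o, x t' o * v t o) - p t' - ε)
    -- the menu of M has exactly C distinct elements
    (C : ℕ) (hmenu : (Set.range fun t => (x t, p t)).ncard = C) :
    ∃ (x' : T → O → ℝ) (p' : T → ℝ),
      (∀ t o, 0 ≤ x' t o) ∧ (∀ t, ∑ o, x' t o = 1) ∧ (∀ t, 0 ≤ p' t) ∧
      -- M' is BIC
      (∀ t t' : T,
        (∑ o, x' t o * v t o) - p' t ≥ (∑ o, x' t' o * v t o) - p' t') ∧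
      -- W(M') ≥ W(M)
      (∑ t, (1 / (m : ℝ)) * ∑ o, x' t o * v t o)
        ≥ (∑ t, (1 / (m : ℝ)) * ∑ o, x t o * v t o) ∧
      -- R(M') ≥ R(M) − C·ε
      (∑ t, (1 / (m : ℝ)) * p' t) ≥ (∑ t, (1 / (m : ℝ)) * p t) - C * ε := by
  classical
  set S : Finset ℝ := Finset.image p Finset.univ with hSdef
  have hpS : ∀ t, p t ∈ S := fun t => Finset.mem_image_of_mem p (Finset.mem_univ t)
  -- number of distinct prices is at most C
  have hScard : (S.card : ℝ) ≤ (C : ℝ) := by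
    have h1 : (S : Set ℝ) = Set.range p := by
      rw [hSdef]; simp [Set.image_univ]
    have h2 : Set.range p = Prod.snd '' (Set.range fun t => (x t, p t)) := by
      rw [← Set.range_comp]; rfl
    have h3 : (Prod.snd '' (Set.range fun t => (x t, p t))).ncard
        ≤ (Set.range fun t => (x t, p t)).ncard :=
      Set.ncard_image_le (Set.finite_range _)
    have h4 : S.card ≤ C := by
      rw [← Set.ncard_coe_finset S, h1, h2, ← hmenu] at *
      exact h3
    exact_mod_cast h4
  set D : T → ℝ := fun s => dfun S ε (p s) with hDdef
  have hDnn : ∀ s, 0 ≤ D s := fun s => dfun_nonneg S hε (hpS s)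
  have hDub : ∀ s, D s ≤ C * ε := by
    intro s
    have h1 := dfun_le S ε (hpS s) (le_refl (p s))
    have h2 : ((S.filter (fun r => r ≤ p s)).card : ℝ) ≤ S.card := by
      exact_mod_cast Finset.card_filter_le S _
    have := card_filter_pos S (hpS s)
    nlinarith
  -- utilities
  set u : T → T → ℝ := fun t s => (∑ o, x s o * v t o) - p s with hudef
  set U : T → T → ℝ := fun t s => u t s + D s with hUdef
  -- argmax with ties broken to maximal price
  have hkex : ∀ t : T, ∃ k : T, (∀ s, U t s ≤ U t k) ∧ (∀ s, U t k ≤ U t s → p s ≤ p k) := by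
    intro t
    obtain ⟨a, -, ha⟩ := Finset.exists_max_image (Finset.univ : Finset T) (U t)
      Finset.univ_nonempty
    obtain ⟨b, hb, hbmax⟩ := Finset.exists_max_image
      (Finset.univ.filter fun s => U t a ≤ U t s) p ⟨a, by simp⟩
    simp only [Finset.mem_filter] at hb
    refine ⟨b, fun s => le_trans (ha s (Finset.mem_univ s)) hb.2, fun s hs => hbmax s ?_⟩
    simp only [Finset.mem_filter]
    exact ⟨Finset.mem_univ s, le_trans hb.2 hs⟩
  choose k hk1 hk2 using hkex
  -- key per-type facts
  have keyA : ∀ t, p t - D t ≤ p (k t) - D (k t) ∧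
      (∑ o, x t o * v t o) ≤ (∑ o, x (k t) o * v t o) := by
    intro t
    have hU1 : U t t ≤ U t (k t) := hk1 t t
    by_cases hpc : p t ≤ p (k t)
    · -- chosen entry has (weakly) higher price
      have hmono : dfun S ε (p (k t)) ≤ dfun S ε (p t) + (p (k t) - p t) :=
        dfun_mono S ε (hpS t) hpc
      have hA : p t - D t ≤ p (k t) - D (k t) := by
        simp only [hDdef]; linarith
      refine ⟨hA, ?_⟩
      have hexp : (∑ o, x t o * v t o) - p t + D t
          ≤ (∑ o, x (k t) o * v t o) - p (k t) + D (k t) := hU1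
      linarith
    · -- chosen entry has strictly lower price: strict preference, gap lemma
      push_neg at hpc
      have hstrict : U t t < U t (k t) := by
        rcases lt_or_ge (U t t) (U t (k t)) with h | h
        · exact h
        · exact absurd (hk2 t t h) (not_le.mpr hpc)
      have hbic : u t t ≥ u t (k t) - ε := hBIC t (k t)
      have hsm : dfun S ε (p t) - dfun S ε (p (k t)) < ε := by
        have : u t t + D t < u t (k t) + D (k t) := hstrict
        simp only [hDdef] at this ⊢
        linarith
      have hgap : dfun S ε (p t) - dfun S ε (p (k t)) = p t - p (k t) :=
        dfun_gap S hε (hpS (k t)) (hpS t) hpc hsm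
      have hA : p t - D t ≤ p (k t) - D (k t) := by
        simp only [hDdef]; linarith
      refine ⟨hA, ?_⟩
      have hexp : (∑ o, x t o * v t o) - p t + D t
          < (∑ o, x (k t) o * v t o) - p (k t) + D (k t) := hstrict
      simp only [hDdef] at hexp
      linarith
  -- nonnegativity of new prices
  have hminS : ∀ s, 0 ≤ p s - D s := by
    intro s
    have hmin := S.min'_mem ⟨p s, hpS s⟩
    obtain ⟨t0, -, ht0⟩ := Finset.mem_image.mp hmin
    have hminle : S.min' ⟨p s, hpS s⟩ ≤ p s := S.min'_le _ (hpS s)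
    have hfilter : S.filter (fun r => r ≤ S.min' ⟨p s, hpS s⟩) = {S.min' ⟨p s, hpS s⟩} := by
      ext r
      simp only [Finset.mem_filter, Finset.mem_singleton]
      constructor
      · rintro ⟨hrS, hrle⟩
        exact le_antisymm hrle (S.min'_le _ hrS)
      · rintro rfl
        exact ⟨hmin, le_refl _⟩
    have h1 := dfun_le S ε hmin hminle
    rw [hfilter] at h1
    simp only [Finset.card_singleton] at h1
    have hmin0 : 0 ≤ S.min' ⟨p s, hpS s⟩ := ht0 ▸ hp t0
    simp only [hDdef]
    push_cast at h1
    linarith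
  refine ⟨fun t => x (k t), fun t => p (k t) - D (k t),
    fun t o => hx0 (k t) o, fun t => hx1 (k t), fun t => hminS (k t), ?_, ?_, ?_⟩
  · -- BIC
    intro t t'
    have h1 : U t (k t') ≤ U t (k t) := hk1 t (k t')
    have h2 : u t (k t') + D (k t') ≤ u t (k t) + D (k t) := h1
    simp only [hudef] at h2
    show (∑ o, x (k t) o * v t o) - (p (k t) - D (k t))
      ≥ (∑ o, x (k t') o * v t o) - (p (k t') - D (k t'))
    linarith
  · -- welfare
    apply Finset.sum_le_sum
    intro t _
    have := (keyA t).2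
    have hmpos : 0 ≤ 1 / (m : ℝ) := by positivity
    nlinarith
  · -- revenue
    have hmne : (m : ℝ) ≠ 0 := by
      have : 0 < Fintype.card T := Fintype.card_pos
      rw [hm] at this
      exact_mod_cast this.ne'
    have step : ∀ t : T, (1 / (m : ℝ)) * (p t - C * ε) ≤ (1 / (m : ℝ)) * (p (k t) - D (k t)) := by
      intro t
      have h1 := (keyA t).1
      have h2 := hDub t
      have hmpos : 0 ≤ 1 / (m : ℝ) := by positivity
      nlinarith
    have hsum : ∑ t, (1 / (m : ℝ)) * (p t - C * ε)
        ≤ ∑ t, (1 / (m : ℝ)) * (p (k t) - D (k t)) :=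
      Finset.sum_le_sum fun t _ => step t
    have hlhs : ∑ t, (1 / (m : ℝ)) * (p t - C * ε)
        = (∑ t, (1 / (m : ℝ)) * p t) - C * ε := by
      simp only [mul_sub]
      rw [Finset.sum_sub_distrib]
      simp only [Finset.sum_const, Finset.card_univ, hm, nsmul_eq_mul]
      field_simp
    calc ∑ t, (1 / (m : ℝ)) * (p (k t) - D (k t))
        ≥ ∑ t, (1 / (m : ℝ)) * (p t - C * ε) := hsum
      _ = (∑ t, (1 / (m : ℝ)) * p t) - C * ε := hlhs
end

section
/- For every integer m ≥ 3 and every ε with 0 < ε < m, there exist a finite type set T with |T| = m, a non-uniform full-support probability distribution f on T, a finite outcome set O, a valuation v : T × O → ℝ≥0, and a mechanism M that is ε-EEIC and IR, such that every mechanism M' on the same data that is BIC and IR and satisfies W(M') ≥ W(M) must satisfy R(M') ≤ R(M) − m/2. In particular, no welfare-preserving ε-EEIC-to-BIC transformation can achieve revenue loss that vanishes as ε → 0. -/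
/-!
Take types `0, …, m-1`, outcome `t` being the one type `t` wants, and let type `t + 1` also like
outcome `t`: as much as type `t` does, plus `r = m` when `t = 0`. Selling every type its own
outcome at its full value is IR, and only type `1` gains (namely `r`) by misreporting; giving it
prior mass `τ = ε / (4m)` makes this mechanism `ε`-EEIC. A mechanism with at least the same welfare
must still give every type its own outcome, because other outcomes are strictly worse for it.
Under BIC type `1` then keeps a rent `r` over type `0`, and since type `n + 1` can mimic type `n`
at no loss, every type `t ≥ 1` keeps a rent `r`. These types carry prior mass `1/2 + τ`, so
revenue drops by at least `m / 2`.
-/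

open Finset

section Lotteries

variable {ι κ : Type*} [Fintype ι] [Fintype κ]

theorem sum_mul_le_of_le_of_sum_eq_one {q w : κ → ℝ} {c : ℝ} (hq : ∀ o, 0 ≤ q o)
    (hq1 : ∑ o, q o = 1) (hw : ∀ o, w o ≤ c) : ∑ o, q o * w o ≤ c :=
  calc ∑ o, q o * w o ≤ ∑ o, q o * c :=
        sum_le_sum fun o _ => mul_le_mul_of_nonneg_left (hw o) (hq o)
    _ = c := by rw [← sum_mul, hq1, one_mul]

theorem eq_ite_of_sum_mul_eq [DecidableEq κ] {q w : κ → ℝ} {i : κ} (hq : ∀ o, 0 ≤ q o)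
    (hq1 : ∑ o, q o = 1) (hw : ∀ o, o ≠ i → w o < w i) (heq : ∑ o, q o * w o = w i) :
    q = fun o => if o = i then 1 else 0 := by
  have hle (o : κ) : 0 ≤ q o * (w i - w o) := by
    rcases eq_or_ne o i with rfl | ho
    exacts [by simp, mul_nonneg (hq o) (sub_nonneg.2 (hw o ho).le)]
  have hgap : ∑ o, q o * (w i - w o) = 0 := by
    simp only [mul_sub, sum_sub_distrib, ← sum_mul, hq1, one_mul, heq, sub_self]
  have hterm := (sum_eq_zero_iff_of_nonneg fun o _ => hle o).1 hgap
  have hzero (o : κ) (ho : o ≠ i) : q o = 0 :=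
    (mul_eq_zero.1 (hterm o (mem_univ o))).resolve_right (sub_ne_zero.2 (hw o ho).ne')
  funext o
  split_ifs with ho
  · rw [ho, ← hq1]
    exact (sum_eq_single i (fun o _ => hzero o) (by simp)).symm
  · exact hzero o ho

theorem eq_of_le_of_sum_mul_le {f a b : ι → ℝ} (hf : ∀ t, 0 < f t) (hab : ∀ t, a t ≤ b t)
    (h : ∑ t, f t * b t ≤ ∑ t, f t * a t) (t : ι) : a t = b t := by
  have hle : ∀ t ∈ univ, f t * a t ≤ f t * b t := fun t _ =>
    mul_le_mul_of_nonneg_left (hab t) (hf t).le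
  exact mul_left_cancel₀ (hf t).ne'
    ((sum_eq_sum_iff_of_le hle).1 (le_antisymm (sum_le_sum hle) h) t (mem_univ t))

theorem allocation_eq_of_welfare_le [DecidableEq κ] {f : ι → ℝ} (hf : ∀ t, 0 < f t)
    {v : ι → κ → ℝ} {σ : ι → κ} (hσ : ∀ t o, o ≠ σ t → v t o < v t (σ t))
    {x : ι → κ → ℝ} (hx : ∀ t o, 0 ≤ x t o) (hx1 : ∀ t, ∑ o, x t o = 1)
    (hW : ∑ t, f t * v t (σ t) ≤ ∑ t, f t * ∑ o, x t o * v t o) :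
    x = fun t o => if o = σ t then 1 else 0 := by
  have hle : ∀ t o, v t o ≤ v t (σ t) := fun t o => by
    rcases eq_or_ne o (σ t) with rfl | ho
    exacts [le_rfl, (hσ t o ho).le]
  funext t
  exact eq_ite_of_sum_mul_eq (hx t) (hx1 t) (hσ t) <| eq_of_le_of_sum_mul_le hf
    (fun t => sum_mul_le_of_le_of_sum_eq_one (hx t) (hx1 t) (hle t)) hW t

theorem sum_mul_sup'_sub_le (hne : (univ : Finset ι).Nonempty) {f : ι → ℝ}
    (hf : ∀ t, 0 ≤ f t) (g : ι → ι → ℝ) (b : ι → ℝ) (hg : ∀ t t', g t t' - g t t ≤ b t) :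
    ∑ t, f t * (univ.sup' hne (g t) - g t t) ≤ ∑ t, f t * b t :=
  sum_le_sum fun t _ => mul_le_mul_of_nonneg_left
    (sub_le_iff_le_add.2 (sup'_le hne _ fun t' _ => sub_le_iff_le_add.1 (hg t t'))) (hf t)

end Lotteries

theorem Fin.sum_univ_eq_add_add_mul {m : ℕ} (hm : 2 ≤ m) {g : ℕ → ℝ} {c : ℝ}
    (hg : ∀ i, 2 ≤ i → g i = c) : ∑ t : Fin m, g t = g 0 + g 1 + (m - 2 : ℝ) * c := by
  obtain ⟨n, rfl⟩ := Nat.exists_eq_add_of_le' hm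
  rw [Fin.sum_univ_eq_sum_range, sum_range_succ', sum_range_succ',
    sum_congr rfl fun i _ => hg (i + 1 + 1) (by omega)]
  simp only [Finset.sum_const, card_range, nsmul_eq_mul, Nat.cast_add, Nat.cast_ofNat,
    add_sub_cancel_right, zero_add]
  ring

namespace RentChain

variable (r : ℝ)

def ownValue (t : ℕ) : ℝ := if t = 0 then 1 else r + 1 + t

def valuation (t o : ℕ) : ℝ := if o = t then ownValue r t else if o + 1 = t then r + t else 0

variable {r}

theorem one_le_ownValue (hr : 0 ≤ r) (t : ℕ) : 1 ≤ ownValue r t := by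
  unfold ownValue
  split_ifs
  · rfl
  · have := t.cast_nonneg (α := ℝ)
    linarith

theorem valuation_self (t : ℕ) : valuation r t t = ownValue r t := if_pos rfl

theorem valuation_nonneg (hr : 0 ≤ r) (t o : ℕ) : 0 ≤ valuation r t o := by
  unfold valuation
  split_ifs
  · linarith [one_le_ownValue hr t]
  · positivity
  · rfl

theorem valuation_lt_ownValue (hr : 0 ≤ r) {t o : ℕ} (h : o ≠ t) :
    valuation r t o < ownValue r t := by
  unfold valuation
  split_ifs with h₁ h₂
  · exact absurd h₁ h
  · unfold ownValue
    rw [if_neg (by omega)]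
    linarith
  · linarith [one_le_ownValue hr t]

theorem valuation_succ_sub_ownValue (n : ℕ) :
    valuation r (n + 1) n - ownValue r n = if n = 0 then r else 0 := by
  rcases n with _ | n
  · simp [valuation, ownValue]
  · simp only [valuation, ownValue, Nat.left_eq_add, one_ne_zero, if_false, if_true,
      Nat.add_eq_zero_iff, and_false, Nat.cast_add, Nat.cast_one]
    ring

theorem valuation_sub_ownValue_le (hr : 0 ≤ r) (t o : ℕ) :
    valuation r t o - ownValue r o ≤ if t = 1 then r else 0 := by
  rcases eq_or_ne o t with rfl | hot
  · rw [valuation_self, sub_self]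
    split_ifs <;> [exact hr; rfl]
  rcases eq_or_ne (o + 1) t with rfl | hot'
  · rw [valuation_succ_sub_ownValue]
    split_ifs <;> first | exact le_rfl | omega
  · rw [valuation, if_neg hot, if_neg hot', zero_sub]
    split_ifs <;> linarith [one_le_ownValue hr o]

theorem ite_le_ownValue_sub_of_bic {m : ℕ} {p : Fin m → ℝ}
    (hbic : ∀ t t' : Fin m, valuation r t t' - p t' ≤ valuation r t t - p t)
    (hir : ∀ t : Fin m, 0 ≤ valuation r t t - p t) (t : Fin m) :
    (if (t : ℕ) = 0 then 0 else r) ≤ ownValue r t - p t := by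
  obtain ⟨n, hn⟩ := t
  induction n with
  | zero => simpa [valuation_self] using hir ⟨0, hn⟩
  | succ n ih =>
    have hstep := hbic ⟨n + 1, hn⟩ ⟨n, by omega⟩
    have hprev := ih (by omega)
    have hgain := valuation_succ_sub_ownValue (r := r) n
    rw [if_neg n.succ_ne_zero]
    rw [valuation_self] at hstep
    split_ifs at hgain hprev <;> linarith

/-- Type `1`, the only type with positive regret under truthful full extraction, gets the small
mass `τ`; the types above it, which all collect the rent `r` under BIC, share mass `1/2`. -/
noncomputable def prior (m : ℕ) (τ : ℝ) (t : ℕ) : ℝ :=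
  if t = 0 then 1 / 2 - τ else if t = 1 then τ else 1 / (2 * (m - 2))

variable {m : ℕ} {τ : ℝ}

theorem prior_pos (hm : 3 ≤ m) (hτ0 : 0 < τ) (hτ : τ < 1 / 2) (t : ℕ) : 0 < prior m τ t := by
  have : (3 : ℝ) ≤ m := by exact_mod_cast hm
  unfold prior
  split_ifs
  · linarith
  · exact hτ0
  · have : (0 : ℝ) < m - 2 := by linarith
    positivity

theorem sum_fin_mul_prior (hm : 3 ≤ m) (g : ℕ → ℝ) (c : ℝ) (hg : ∀ i, 2 ≤ i → g i = c) :
    ∑ t : Fin m, prior m τ t * g t = (1 / 2 - τ) * g 0 + τ * g 1 + c / 2 := by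
  have : (m - 2 : ℝ) ≠ 0 := by
    have : (3 : ℝ) ≤ m := by exact_mod_cast hm
    linarith
  refine (Fin.sum_univ_eq_add_add_mul (g := fun t => prior m τ t * g t) (by omega)
    (c := 1 / (2 * (m - 2)) * c) fun i hi => ?_).trans ?_
  · rw [prior, if_neg (by omega), if_neg (by omega), hg i hi]
  · simp only [prior, if_pos, one_ne_zero, if_false]
    field_simp

theorem sum_prior (hm : 3 ≤ m) : ∑ t : Fin m, prior m τ t = 1 := by
  have h := sum_fin_mul_prior (τ := τ) hm (fun _ => 1) 1 fun _ _ => rfl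
  simp only [mul_one] at h
  linarith

theorem sum_prior_mul_regret_le (hr : 0 ≤ r) (hm : 3 ≤ m) (hτ0 : 0 < τ) (hτ : τ < 1 / 2)
    (hne : (univ : Finset (Fin m)).Nonempty) :
    ∑ t : Fin m, prior m τ t *
      (univ.sup' hne (fun t' => ∑ o, (if o = t' then 1 else 0) * valuation r t o - ownValue r t')
        - (∑ o, (if o = t then 1 else 0) * valuation r t o - ownValue r t)) ≤ τ * r := by
  have hregret (t t' : Fin m) :
      (∑ o, (if o = t' then 1 else 0) * valuation r t o - ownValue r t') -
        (∑ o, (if o = t then 1 else 0) * valuation r t o - ownValue r t) ≤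
        if (t : ℕ) = 1 then r else 0 := by
    simpa [valuation_self] using valuation_sub_ownValue_le hr t t'
  calc _ ≤ ∑ t : Fin m, prior m τ t * (if (t : ℕ) = 1 then r else 0) :=
        sum_mul_sup'_sub_le _ (fun t : Fin m => (prior_pos hm hτ0 hτ t).le) _ _ hregret
    _ = τ * r := by
        simpa using sum_fin_mul_prior hm (fun t => if t = 1 then r else 0) 0
          fun i hi => if_neg (by omega)

theorem sum_prior_mul_le_of_bic (hr : 0 ≤ r) (hm : 3 ≤ m) (hτ0 : 0 < τ) (hτ : τ < 1 / 2)
    {p : Fin m → ℝ}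
    (hbic : ∀ t t' : Fin m, valuation r t t' - p t' ≤ valuation r t t - p t)
    (hir : ∀ t : Fin m, 0 ≤ valuation r t t - p t) :
    ∑ t : Fin m, prior m τ t * p t ≤ ∑ t : Fin m, prior m τ t * ownValue r t - r / 2 := by
  have hrents : ∑ t : Fin m, prior m τ t * (if (t : ℕ) = 0 then 0 else r) ≤
      ∑ t : Fin m, prior m τ t * (ownValue r t - p t) :=
    sum_le_sum fun t _ => mul_le_mul_of_nonneg_left (ite_le_ownValue_sub_of_bic hbic hir t)
      (prior_pos hm hτ0 hτ t).le
  have hloss : ∑ t : Fin m, prior m τ t * (if (t : ℕ) = 0 then 0 else r) = τ * r + r / 2 := by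
    simpa using sum_fin_mul_prior hm (fun t => if t = 0 then 0 else r) r
      fun i hi => if_neg (by omega)
  rw [hloss] at hrents
  simp only [mul_sub, sum_sub_distrib] at hrents
  linarith [mul_nonneg hτ0.le hr]

end RentChain

open RentChain in
/-- Impossibility of welfare-preserving `ε`-EEIC to BIC transformation
with negligible revenue loss for non-uniform type distributions: for `m ≥ 3` and
`0 < ε < m` there is an instance with a non-uniform full-support distribution and an
`ε`-EEIC and IR mechanism such that every welfare-preserving BIC and IR mechanism
loses at least `m/2` revenue. -/
theorem impossibility_EEIC_nonuniform
    (m : ℕ) (hm : 3 ≤ m) (ε : ℝ) (hε0 : 0 < ε) (hεm : ε < m) :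
    ∃ (k : ℕ) (f : Fin m → ℝ) (v : Fin m → Fin k → ℝ)
      (x : Fin m → Fin k → ℝ) (p : Fin m → ℝ),
      -- f is a full-support probability distribution ...
      (∀ t, 0 < f t) ∧ (∑ t, f t = 1) ∧
      -- ... which is non-uniform
      (∃ t t' : Fin m, f t ≠ f t') ∧
      (∀ t o, 0 ≤ v t o) ∧
      (∀ t o, 0 ≤ x t o) ∧ (∀ t, ∑ o, x t o = 1) ∧ (∀ t, 0 ≤ p t) ∧
      -- M is ε-EEIC
      (∑ t, f t *
        ((Finset.univ.sup' (Finset.univ_nonempty_iff.mpr ⟨⟨0, by omega⟩⟩)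
            fun t' => (∑ o, x t' o * v t o) - p t')
          - ((∑ o, x t o * v t o) - p t)) ≤ ε) ∧
      -- M is IR
      (∀ t : Fin m, 0 ≤ (∑ o, x t o * v t o) - p t) ∧
      -- every welfare-preserving BIC and IR mechanism loses at least m/2 revenue
      (∀ (x' : Fin m → Fin k → ℝ) (p' : Fin m → ℝ),
        (∀ t o, 0 ≤ x' t o) → (∀ t, ∑ o, x' t o = 1) → (∀ t, 0 ≤ p' t) →
        (∀ t t' : Fin m,
          (∑ o, x' t o * v t o) - p' t ≥ (∑ o, x' t' o * v t o) - p' t') →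
        (∀ t : Fin m, 0 ≤ (∑ o, x' t o * v t o) - p' t) →
        (∑ t, f t * ∑ o, x' t o * v t o) ≥ (∑ t, f t * ∑ o, x t o * v t o) →
        (∑ t, f t * p' t) ≤ (∑ t, f t * p t) - (m : ℝ) / 2) := by
  have hr : (0 : ℝ) ≤ m := m.cast_nonneg
  set τ := ε / (4 * m)
  have hτ0 : 0 < τ := by positivity
  have hτ : τ < 1 / 4 := by
    rw [div_lt_iff₀ (by positivity)]
    linarith
  have hprior (t : Fin m) : 0 < prior m τ t := prior_pos hm hτ0 (by linarith) t
  refine ⟨m, fun t => prior m τ t, fun t o => valuation m t o, fun t o => if o = t then 1 else 0,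
    fun t => ownValue m t, hprior, sum_prior hm, ⟨⟨0, by omega⟩, ⟨1, by omega⟩, ?_⟩,
    fun t o => valuation_nonneg hr t o, fun t o => by positivity, fun t => by simp,
    fun t => by linarith [one_le_ownValue hr t], ?_, fun t => by simp [valuation_self], ?_⟩
  · exact show (1 / 2 - τ : ℝ) ≠ τ from (by linarith : τ < 1 / 2 - τ).ne'
  · refine (sum_prior_mul_regret_le hr hm hτ0 (by linarith) _).trans ?_
    have : τ * m = ε / 4 := by
      simp only [τ]
      field_simp
    linarith
  · intro x' p' hx' hx'1 _ hbic hir hW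
    obtain rfl : x' = fun t o => if o = t then 1 else 0 :=
      allocation_eq_of_welfare_le hprior (v := fun t o : Fin m => valuation m t o) (σ := id)
        (fun t o ho => by simpa [valuation_self] using
          valuation_lt_ownValue hr (Fin.val_injective.ne ho))
        hx' hx'1 (by simpa using hW)
    exact sum_prior_mul_le_of_bic hr hm hτ0 (by linarith) (fun t t' => by simpa using hbic t t')
      fun t => by simpa using hir t
end

section
/- Let M = (x, p) be an n-agent mechanism on finite type sets T_1, …, T_n with independent full-support type distributions f_1, …, f_n, finite outcome set O, and valuations v_1, …, v_n. For every ε ≥ 0, if M is ε-BIC and interim IR, then there exists an n-agent mechanism M' = (x', p') on the same data that is BIC and interim IR, satisfies W(M') ≥ W(M) and R(M') ≥ R(M) − (∑_{i=1}^n |T_i|)·ε, and is (ex ante) allocation-invariant: E_{t∼f}[x'(t)] = E_{t∼f}[x(t)] as distributions over O. -/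
/-
Fix an agent and write `u s s'` for its interim utility when its type is `s` and it reports `s'`.
Match types to surrogate types by a kernel `K` that preserves the type distribution `f`, so as to
maximize `∑ f s K s s' u s s'`. The dual of this assignment problem asks for surrogate prices `π`
minimizing `∑ f s max_{s'} (u s s' - π s') + ∑ f π`. A minimizer exists by compactness (the
objective is invariant under adding a constant to `π`), and a separation argument at a minimizer
produces an `f`-preserving `K` that sends every type only to surrogates it demands at prices `π`.
Running the mechanism on surrogates drawn from `K` and charging the surrogate's payment plus its
price, shifted so that the worst-off type gets utility zero, is then BIC and IR. Welfare does not
drop because the identity matching is feasible. Among normalized minimizers (`π ≥ 0`, some price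
`0`), take one of least total price. ε-BIC then forces the sorted prices to climb in steps of at
most `ε`, since otherwise every price above a gap could be lowered. Hence `π ≤ (|T_i| - 1) ε`, and
agent `i` costs at most `|T_i| ε` of revenue. Since types are independent, resampling each report
separately leaves the other agents' interim view and the ex-ante allocation unchanged.
-/

open Finset

namespace Stmt6

variable {n : ℕ} {T : Fin n → Type} {O : Type}

/-- The interim utility `U_i(s, s')` of agent `i` with true type `s` reporting `s'`,
where `f j` is the (full-support, normalized) type distribution of agent `j`:
`U_i(s, s') = v_i(s, X_i(s')) − P_i(s')`. -/
noncomputable def interimU [∀ i, Fintype (T i)] [Fintype O]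
    (f : ∀ i, T i → ℝ) (v : (i : Fin n) → T i → O → ℝ)
    (x : (∀ i, T i) → O → ℝ) (p : Fin n → (∀ i, T i) → ℝ)
    (i : Fin n) (s s' : T i) : ℝ :=
  (∑ o, (∑ t : ∀ j, T j, (∏ j, f j (t j)) * x (Function.update t i s') o) * v i s o)
    - ∑ t : ∀ j, T j, (∏ j, f j (t j)) * p i (Function.update t i s')

/-- Expected revenue `R(M) = E_{t∼f}[∑_i p_i(t)]`. -/
noncomputable def Rev [∀ i, Fintype (T i)]
    (f : ∀ i, T i → ℝ) (p : Fin n → (∀ i, T i) → ℝ) : ℝ :=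
  ∑ t : ∀ j, T j, (∏ j, f j (t j)) * ∑ i, p i t

/-- Expected social welfare `W(M) = E_{t∼f}[∑_i v_i(t_i, x(t))]`. -/
noncomputable def Wel [∀ i, Fintype (T i)] [Fintype O]
    (f : ∀ i, T i → ℝ) (v : (i : Fin n) → T i → O → ℝ)
    (x : (∀ i, T i) → O → ℝ) : ℝ :=
  ∑ t : ∀ j, T j, (∏ j, f j (t j)) * ∑ i, ∑ o, x t o * v i (t i) o

end Stmt6

open Stmt6

open Filter Topology

section IndirectUtility

variable {S : Type*} [Fintype S] [Nonempty S]

noncomputable def indirectUtility (u : S → S → ℝ) (π : S → ℝ) (s : S) : ℝ :=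
  univ.sup' univ_nonempty fun t => u s t - π t

noncomputable def dualObjective (f : S → ℝ) (u : S → S → ℝ) (π : S → ℝ) : ℝ :=
  ∑ s, f s * indirectUtility u π s + ∑ t, f t * π t

noncomputable def demand (u : S → S → ℝ) (π : S → ℝ) (s : S) : Finset S :=
  {t | u s t - π t = indirectUtility u π s}

variable {u : S → S → ℝ} {π : S → ℝ}

theorem mem_demand {s t : S} : t ∈ demand u π s ↔ u s t - π t = indirectUtility u π s := by
  simp [demand]

theorem sub_le_indirectUtility (s t : S) : u s t - π t ≤ indirectUtility u π s :=
  le_sup' (fun t => u s t - π t) (mem_univ t)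

theorem indirectUtility_le_iff {s : S} {c : ℝ} :
    indirectUtility u π s ≤ c ↔ ∀ t, u s t - π t ≤ c := by
  simp [indirectUtility, sup'_le_iff]

theorem demand_nonempty (s : S) : (demand u π s).Nonempty := by
  obtain ⟨t, -, ht⟩ := exists_mem_eq_sup' univ_nonempty fun t => u s t - π t
  exact ⟨t, mem_demand.2 ht.symm⟩

theorem continuous_dualObjective (f : S → ℝ) (u : S → S → ℝ) :
    Continuous (dualObjective f u) := by
  unfold dualObjective indirectUtility
  refine .add (continuous_finsetSum _ fun s _ => continuous_const.mul ?_)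
    (continuous_finsetSum _ fun t _ => continuous_const.mul (continuous_apply t))
  exact Continuous.finset_sup'_apply _ fun t _ => continuous_const.sub (continuous_apply t)

theorem indirectUtility_sub_const (c : ℝ) (s : S) :
    indirectUtility u (fun t => π t - c) s = indirectUtility u π s + c := by
  simp only [indirectUtility, sup'_add, sub_sub_eq_add_sub, add_sub_right_comm]

theorem dualObjective_sub_const {f : S → ℝ} (hf1 : ∑ s, f s = 1) (c : ℝ) :
    dualObjective f u (fun t => π t - c) = dualObjective f u π := by
  simp only [dualObjective, indirectUtility_sub_const, mul_add, mul_sub, sum_add_distrib,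
    sum_sub_distrib, ← sum_mul, hf1]
  ring

theorem eventually_indirectUtility_sub_mul_le (d : S → ℝ) {s : S} {c : ℝ}
    (hc : ∀ t ∈ demand u π s, d t ≤ c) :
    ∀ᶠ δ in 𝓝[>] 0,
      indirectUtility u (fun t => π t - δ * d t) s ≤ indirectUtility u π s + δ * c := by
  simp only [indirectUtility_le_iff, eventually_all]
  intro t
  by_cases ht : t ∈ demand u π s
  · filter_upwards [self_mem_nhdsWithin] with δ (hδ : 0 < δ)
    nlinarith [mem_demand.1 ht, hc t ht]
  · have hlt : u s t - π t < indirectUtility u π s :=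
      (sub_le_indirectUtility s t).lt_of_ne (mt mem_demand.2 ht)
    refine (ContinuousAt.eventually_lt (by fun_prop) (by fun_prop) ?_).filter_mono
      nhdsWithin_le_nhds |>.mono fun δ h => h.le
    simpa using hlt

theorem eventually_dualObjective_sub_mul_le {f : S → ℝ} (hf : ∀ s, 0 ≤ f s) (d c : S → ℝ)
    (hc : ∀ s, ∀ t ∈ demand u π s, d t ≤ c s) :
    ∀ᶠ δ in 𝓝[>] 0, dualObjective f u (fun t => π t - δ * d t) ≤
      dualObjective f u π + δ * (∑ s, f s * c s - ∑ t, f t * d t) := by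
  filter_upwards [eventually_all.2 fun s => eventually_indirectUtility_sub_mul_le d (hc s)]
    with δ hδ
  calc dualObjective f u (fun t => π t - δ * d t)
      ≤ ∑ s, f s * (indirectUtility u π s + δ * c s) + ∑ t, f t * (π t - δ * d t) :=
        add_le_add_left (sum_le_sum fun s _ => mul_le_mul_of_nonneg_left (hδ s) (hf s)) _
    _ = _ := by
        simp only [dualObjective, mul_add, mul_sub, sum_add_distrib, sum_sub_distrib, mul_sum,
          mul_left_comm δ]
        ring

end IndirectUtility

theorem mem_convexHull_range_of_forall_exists_le {ι κ : Type*} [Fintype ι] [Finite κ]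
    (z : κ → ι → ℝ) (y : ι → ℝ) (h : ∀ d : ι → ℝ, ∃ k, ∑ i, y i * d i ≤ ∑ i, z k i * d i) :
    y ∈ convexHull ℝ (Set.range z) := by
  classical
  by_contra hy
  obtain ⟨g, c, hg, hgy⟩ := geometric_hahn_banach_closed_point (convex_convexHull ℝ _)
    ((Set.finite_range z).isCompact_convexHull ℝ).isClosed hy
  have hrep (x : ι → ℝ) : g x = ∑ i, x i * g fun j => if i = j then 1 else 0 := by
    simpa using LinearMap.pi_apply_eq_sum_univ (g : (ι → ℝ) →ₗ[ℝ] ℝ) x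
  obtain ⟨k, hk⟩ := h fun i => g fun j => if i = j then 1 else 0
  have hzk := hg _ (subset_convexHull ℝ _ (Set.mem_range_self k))
  rw [hrep] at hzk hgy
  linarith

theorem le_card_sub_one_mul_of_forall_exists_gap {S : Type*} [Fintype S] (g : S → ℝ) {ε : ℝ}
    (hε : 0 ≤ ε) (h0 : ∃ t, g t ≤ 0)
    (hgap : ∀ c, 0 ≤ c → (∃ t, c < g t) → ∃ b, c < g b ∧ g b ≤ c + ε) (t : S) :
    g t ≤ (Fintype.card S - 1) * ε := by
  classical
  -- The level sets `{g ≤ k ε}` gain an element at every step until they exhaust `S`.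
  have key (k : ℕ) : (∀ t, g t ≤ k * ε) ∨ k + 1 ≤ #(univ.filter fun t => g t ≤ k * ε) := by
    induction k with
    | zero =>
      obtain ⟨t₀, ht₀⟩ := h0
      exact .inr (card_pos.2 ⟨t₀, by simpa using ht₀⟩)
    | succ k ih =>
      by_cases hall : ∀ t, g t ≤ (k + 1 : ℕ) * ε
      · exact .inl hall
      obtain ⟨t₁, ht₁⟩ := not_forall.1 hall
      have hk : (k : ℝ) * ε ≤ (k + 1 : ℕ) * ε := by push_cast; linarith
      obtain ⟨b, hb, hb'⟩ := hgap (k * ε) (by positivity) ⟨t₁, hk.trans_lt (not_le.1 ht₁)⟩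
      have hsub : (univ.filter fun t => g t ≤ k * ε) ⊂
          univ.filter fun t => g t ≤ (k + 1 : ℕ) * ε := by
        refine (ssubset_iff_of_subset fun t ht => ?_).2 ⟨b, ?_, ?_⟩
        · simp only [mem_filter, mem_univ, true_and] at ht ⊢
          exact ht.trans hk
        · simp only [mem_filter, mem_univ, true_and]
          push_cast
          linarith
        · simpa using hb
      rcases ih with ih | ih
      · exact absurd (ih b) (not_le.2 hb)
      · have := card_lt_card hsub
        exact .inr (by omega)
  have hcard : 0 < Fintype.card S := Fintype.card_pos_iff.2 ⟨t⟩
  have hcast : ((Fintype.card S - 1 : ℕ) : ℝ) = Fintype.card S - 1 := by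
    rw [Nat.cast_sub hcard, Nat.cast_one]
  rcases key (Fintype.card S - 1) with h | h
  · simpa [hcast] using h t
  · have hfull : #(univ.filter fun t => g t ≤ (Fintype.card S - 1 : ℕ) * ε) =
        Fintype.card S := (card_le_univ _).antisymm (by omega)
    have ht := (eq_univ_of_card _ hfull).symm ▸ mem_univ t
    simpa [hcast] using ht

section Kernel

variable {S : Type*} [Fintype S]

structure IsStationaryKernel (f : S → ℝ) (K : S → S → ℝ) : Prop where
  nonneg : ∀ s t, 0 ≤ K s t
  sum_eq_one : ∀ s, ∑ t, K s t = 1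
  stationary : ∀ t, ∑ s, f s * K s t = f t

theorem sum_mul_sum_mul_of_stationary {f : S → ℝ} {K : S → S → ℝ}
    (hK : ∀ t, ∑ s, f s * K s t = f t) (g : S → ℝ) :
    ∑ s, f s * ∑ t, K s t * g t = ∑ t, f t * g t := by
  simp only [mul_sum, ← mul_assoc]
  rw [sum_comm]
  simp only [← sum_mul, hK]

variable [DecidableEq S]

def pushforward (f : S → ℝ) (σ : S → S) (t : S) : ℝ :=
  ∑ s, f s * if σ s = t then 1 else 0

theorem sum_pushforward_mul (f : S → ℝ) (σ : S → S) (d : S → ℝ) :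
    ∑ t, pushforward f σ t * d t = ∑ s, f s * d (σ s) := by
  simp only [pushforward, sum_mul, mul_assoc, ite_mul, one_mul, zero_mul]
  rw [sum_comm]
  simp

theorem exists_isStationaryKernel_of_mem_convexHull {f : S → ℝ} {D : S → Finset S}
    (h : f ∈ convexHull ℝ (Set.range fun σ : {σ : S → S // ∀ s, σ s ∈ D s} => pushforward f σ)) :
    ∃ K, IsStationaryKernel f K ∧ ∀ s t, K s t ≠ 0 → t ∈ D s := by
  obtain ⟨ι, _, w, z, hw0, hw1, hz, hwz⟩ := mem_convexHull_iff_exists_fintype.1 h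
  choose σ hσ using hz
  refine ⟨fun s t => ∑ i, w i * if (σ i).1 s = t then 1 else 0, ⟨?_, ?_, ?_⟩, ?_⟩
  · exact fun s t => sum_nonneg fun i _ => mul_nonneg (hw0 i) (by split_ifs <;> norm_num)
  · intro s
    rw [sum_comm]
    simp [hw1]
  · intro t
    rw [← congrFun hwz t]
    simp only [← hσ, Finset.sum_apply, Pi.smul_apply, smul_eq_mul, pushforward, mul_sum]
    rw [sum_comm]
    exact sum_congr rfl fun i _ => sum_congr rfl fun s _ => by ring
  · intro s t hst
    obtain ⟨i, -, hi⟩ := exists_ne_zero_of_sum_ne_zero hst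
    by_contra ht
    refine hi ?_
    rw [if_neg fun h : (σ i).1 s = t => ht (h ▸ (σ i).2 s), mul_zero]

end Kernel

section Duality

variable {S : Type*} [Fintype S] [Nonempty S] {f : S → ℝ} {u : S → S → ℝ} {π : S → ℝ}

theorem exists_isStationaryKernel_supported_in_demand (hf : ∀ s, 0 ≤ f s)
    (hmin : ∀ π', dualObjective f u π ≤ dualObjective f u π') :
    ∃ K, IsStationaryKernel f K ∧ ∀ s t, K s t ≠ 0 → t ∈ demand u π s := by
  classical
  refine exists_isStationaryKernel_of_mem_convexHull
    (mem_convexHull_range_of_forall_exists_le _ _ fun d => ?_)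
  -- Moving `π` in direction `-d` changes each indirect utility at rate `max d` over the demand
  -- set, so minimality of `π` puts `f` on the good side of every hyperplane.
  choose σ hσ hσmax using fun s => exists_max_image (demand u π s) d (demand_nonempty s)
  refine ⟨⟨σ, hσ⟩, ?_⟩
  rw [sum_pushforward_mul]
  obtain ⟨δ, hδ, hδpos⟩ := ((eventually_dualObjective_sub_mul_le hf d (fun s => d (σ s))
    hσmax).and self_mem_nhdsWithin).exists
  have hdescent := (hmin _).trans hδ
  nlinarith

theorem isCompact_normalized_sublevel (hf : ∀ s, 0 < f s) (hf1 : ∑ s, f s = 1)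
    (u : S → S → ℝ) (c : ℝ) :
    IsCompact {π : S → ℝ | (∀ t, 0 ≤ π t) ∧ (∃ t, π t = 0) ∧ dualObjective f u π ≤ c} := by
  set L := univ.inf' univ_nonempty fun p : S × S => u p.1 p.2
  refine (isCompact_univ_pi fun t => isCompact_Icc (a := 0) (b := (c - L) / f t))
    |>.of_isClosed_subset ?_ ?_
  · simp only [Set.ofPred_and, Set.ofPred_forall, Set.ofPred_exists]
    exact (isClosed_iInter fun t => isClosed_le continuous_const (continuous_apply t)).inter
      ((isClosed_iUnion_of_finite fun t => isClosed_eq (continuous_apply t) continuous_const).inter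
        (isClosed_le (continuous_dualObjective f u) continuous_const))
  rintro π ⟨hπ, ⟨t₀, ht₀⟩, hπc⟩ t -
  refine ⟨hπ t, (le_div_iff₀ (hf t)).2 ?_⟩
  have hL : ∑ s, f s * L ≤ ∑ s, f s * indirectUtility u π s := by
    refine sum_le_sum fun s _ => mul_le_mul_of_nonneg_left ?_ (hf s).le
    have := sub_le_indirectUtility (u := u) (π := π) s t₀
    rw [ht₀, sub_zero] at this
    exact (inf'_le _ (mem_univ (s, t₀))).trans this
  have ht : f t * π t ≤ ∑ t, f t * π t :=
    single_le_sum (fun t _ => mul_nonneg (hf t).le (hπ t)) (mem_univ t)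
  rw [← sum_mul, hf1, one_mul] at hL
  unfold dualObjective at hπc
  linarith

theorem exists_normalized_dualObjective_eq (hf1 : ∑ s, f s = 1) (π : S → ℝ) :
    ∃ π', (∀ t, 0 ≤ π' t) ∧ (∃ t, π' t = 0) ∧ dualObjective f u π' = dualObjective f u π := by
  obtain ⟨t₀, -, ht₀⟩ := exists_min_image univ π univ_nonempty
  exact ⟨fun t => π t - π t₀, fun t => sub_nonneg.2 (ht₀ t (mem_univ t)), ⟨t₀, sub_self _⟩,
    dualObjective_sub_const hf1 _⟩

theorem exists_forall_dualObjective_le (hf : ∀ s, 0 < f s) (hf1 : ∑ s, f s = 1)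
    (u : S → S → ℝ) : ∃ π, ∀ π', dualObjective f u π ≤ dualObjective f u π' := by
  obtain ⟨π, hπ, hmin⟩ := (isCompact_normalized_sublevel hf hf1 u (dualObjective f u 0))
    |>.exists_isMinOn ⟨0, fun _ => le_rfl, ⟨Classical.arbitrary S, rfl⟩, le_rfl⟩
      (continuous_dualObjective f u).continuousOn
  refine ⟨π, fun π' => ?_⟩
  obtain ⟨π'', h0, hz, heq⟩ := exists_normalized_dualObjective_eq (u := u) hf1 π'
  rcases le_total (dualObjective f u π') (dualObjective f u 0) with h | h
  · exact heq ▸ hmin ⟨h0, hz, heq ▸ h⟩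
  · exact hπ.2.2.trans h

theorem exists_demand_crossing (hf : ∀ s, 0 ≤ f s) (hπ : ∀ t, 0 ≤ π t) (hzero : ∃ t, π t = 0)
    (hsum : ∀ π', (∀ t, 0 ≤ π' t) → (∃ t, π' t = 0) →
      dualObjective f u π' ≤ dualObjective f u π → ∑ t, π t ≤ ∑ t, π' t)
    {c : ℝ} (hc : 0 ≤ c) (hhigh : ∃ t, c < π t) :
    ∃ a b, π a ≤ c ∧ c < π b ∧ b ∈ demand u π a := by
  classical
  by_contra! hcross
  -- Otherwise lowering every price above `c` by a small `δ` keeps `π` optimal and normalized.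
  set d : S → ℝ := fun t => if c < π t then 1 else 0
  have hd0 (t : S) : 0 ≤ d t := by simp only [d]; split_ifs <;> norm_num
  have hd (s : S) : ∀ t ∈ demand u π s, d t ≤ d s := by
    intro t ht
    by_cases hs : c < π s
    · simp only [d, if_pos hs]; split_ifs <;> norm_num
    · have ht' : ¬c < π t := fun h => hcross s t (not_lt.1 hs) h ht
      simp [d, hs, ht']
  have hpos : ∀ᶠ δ in 𝓝[>] 0, ∀ t, 0 ≤ π t - δ * d t := by
    refine eventually_all.2 fun t => ?_
    by_cases ht : c < π t
    · refine ((ContinuousAt.eventually_lt (f := fun _ => (0 : ℝ)) (by fun_prop) (by fun_prop)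
        ?_).filter_mono nhdsWithin_le_nhds).mono fun δ h => h.le
      simpa using hc.trans_lt ht
    · exact .of_forall fun δ => by simp [d, ht, hπ t]
  obtain ⟨δ, ⟨hΦ, hδπ⟩, hδ : 0 < δ⟩ :=
    (((eventually_dualObjective_sub_mul_le hf d d hd).and hpos).and self_mem_nhdsWithin).exists
  obtain ⟨t₀, ht₀⟩ := hzero
  obtain ⟨b, hb⟩ := hhigh
  have hle := hsum _ hδπ ⟨t₀, by simp [d, ht₀, not_lt.2 hc]⟩ (by simpa using hΦ)
  have hlt : ∑ t, (π t - δ * d t) < ∑ t, π t :=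
    sum_lt_sum (fun t _ => by nlinarith [hd0 t, hδ])
      ⟨b, mem_univ b, by simpa [d, hb] using hδ⟩
  linarith

theorem exists_bounded_dualObjective_minimizer (hf : ∀ s, 0 < f s) (hf1 : ∑ s, f s = 1)
    {ε : ℝ} (hε : 0 ≤ ε) (hBIC : ∀ s t, u s t ≤ u s s + ε) :
    ∃ π, (∀ π', dualObjective f u π ≤ dualObjective f u π') ∧ (∀ t, 0 ≤ π t) ∧
      ∀ t, π t ≤ (Fintype.card S - 1) * ε := by
  obtain ⟨π₀, hπ₀⟩ := exists_forall_dualObjective_le hf hf1 u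
  obtain ⟨π₁, h0, hz, heq⟩ := exists_normalized_dualObjective_eq (u := u) hf1 π₀
  obtain ⟨π, ⟨hπ, hzero, hπΦ⟩, hmin⟩ := (isCompact_normalized_sublevel hf hf1 u _).exists_isMinOn
    ⟨π₁, h0, hz, heq.le⟩ (continuous_finsetSum univ fun t _ => continuous_apply t).continuousOn
  refine ⟨π, fun π' => hπΦ.trans (hπ₀ π'), hπ,
    le_card_sub_one_mul_of_forall_exists_gap π hε ⟨_, hzero.choose_spec.le⟩ fun c hc hhigh => ?_⟩
  obtain ⟨a, b, ha, hb, hab⟩ := exists_demand_crossing (fun s => (hf s).le) hπ hzero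
    (fun π' h0 hz hΦ => hmin ⟨h0, hz, hΦ.trans hπΦ⟩) hc hhigh
  refine ⟨b, hb, ?_⟩
  linarith [mem_demand.1 hab, sub_le_indirectUtility (u := u) (π := π) a a, hBIC a b]

theorem sum_mul_sub_le_indirectUtility {K : S → S → ℝ} (hK0 : ∀ s t, 0 ≤ K s t)
    (hK1 : ∀ s, ∑ t, K s t = 1) (s s' : S) :
    ∑ t, K s' t * (u s t - π t) ≤ indirectUtility u π s :=
  calc ∑ t, K s' t * (u s t - π t) ≤ ∑ t, K s' t * indirectUtility u π s :=
        sum_le_sum fun t _ => mul_le_mul_of_nonneg_left (sub_le_indirectUtility s t) (hK0 s' t)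
    _ = indirectUtility u π s := by rw [← sum_mul, hK1, one_mul]

theorem sum_mul_sub_eq_indirectUtility {K : S → S → ℝ} (hK1 : ∀ s, ∑ t, K s t = 1)
    (hKd : ∀ s t, K s t ≠ 0 → t ∈ demand u π s) (s : S) :
    ∑ t, K s t * (u s t - π t) = indirectUtility u π s :=
  calc ∑ t, K s t * (u s t - π t) = ∑ t, K s t * indirectUtility u π s := by
        refine sum_congr rfl fun t _ => ?_
        rcases eq_or_ne (K s t) 0 with h | h
        · simp [h]
        · rw [mem_demand.1 (hKd s t h)]
    _ = indirectUtility u π s := by rw [← sum_mul, hK1, one_mul]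

theorem exists_isStationaryKernel_incentiveCompatible (hf : ∀ s, 0 < f s)
    (hf1 : ∑ s, f s = 1) {ε : ℝ} (hε : 0 ≤ ε) (hBIC : ∀ s t, u s t ≤ u s s + ε)
    (hIR : ∀ s, 0 ≤ u s s) :
    ∃ (K : S → S → ℝ) (ρ : S → ℝ), IsStationaryKernel f K ∧
      (∀ s s', ∑ t, K s' t * (u s t - ρ t) ≤ ∑ t, K s t * (u s t - ρ t)) ∧
      (∀ s, 0 ≤ ∑ t, K s t * (u s t - ρ t)) ∧
      (∃ s₀, ∀ t, u s₀ t ≤ ρ t) ∧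
      -((Fintype.card S - 1) * ε) ≤ ∑ t, f t * ρ t ∧
      ∑ s, f s * u s s ≤ ∑ s, f s * ∑ t, K s t * u s t := by
  obtain ⟨π, hmin, hπ, hπε⟩ := exists_bounded_dualObjective_minimizer hf hf1 hε hBIC
  obtain ⟨K, hK, hKd⟩ := exists_isStationaryKernel_supported_in_demand (fun s => (hf s).le) hmin
  obtain ⟨s₀, -, hs₀⟩ := exists_min_image univ (indirectUtility u π) univ_nonempty
  -- Shifting all prices by `m₀` leaves the worst-off type `s₀` with utility exactly `0`.
  set m₀ := indirectUtility u π s₀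
  have hshift (s s' : S) :
      ∑ t, K s' t * (u s t - (π t + m₀)) = ∑ t, K s' t * (u s t - π t) - m₀ := by
    simp only [← sub_sub, mul_sub, sum_sub_distrib, ← sum_mul, hK.sum_eq_one, one_mul]
  have htruth := sum_mul_sub_eq_indirectUtility hK.sum_eq_one hKd
  refine ⟨K, fun t => π t + m₀, hK, fun s s' => ?_, fun s => ?_, ⟨s₀, fun t => ?_⟩, ?_, ?_⟩
  · rw [hshift, hshift, htruth]
    linarith [sum_mul_sub_le_indirectUtility (u := u) (π := π) hK.nonneg hK.sum_eq_one s s']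
  · rw [hshift, htruth]
    linarith [hs₀ s (mem_univ s)]
  · linarith [sub_le_indirectUtility (u := u) (π := π) s₀ t]
  · have hfπ : 0 ≤ ∑ t, f t * π t := sum_nonneg fun t _ => mul_nonneg (hf t).le (hπ t)
    have hm₀ : u s₀ s₀ - π s₀ ≤ m₀ := sub_le_indirectUtility s₀ s₀
    simp only [mul_add, sum_add_distrib, ← sum_mul, hf1, one_mul]
    linarith [hIR s₀, hπε s₀]
  · calc ∑ s, f s * u s s ≤ ∑ s, f s * (indirectUtility u π s + π s) :=
          sum_le_sum fun s _ => mul_le_mul_of_nonneg_left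
            (by linarith [sub_le_indirectUtility (u := u) (π := π) s s]) (hf s).le
      _ = ∑ s, f s * (∑ t, K s t * (u s t - π t) + ∑ t, K s t * π t) := by
          simp only [htruth, mul_add, sum_add_distrib, sum_mul_sum_mul_of_stationary hK.stationary]
      _ = ∑ s, f s * ∑ t, K s t * u s t := by
          simp only [← sum_add_distrib, ← mul_add, sub_add_cancel]

end Duality

section ProductWeights

variable {ι : Type*} [Fintype ι] [DecidableEq ι] {T : ι → Type*}

theorem prod_compl_update_apply (g : ∀ j, T j → ℝ) (i : ι) (c : T i → ℝ) (t : ∀ j, T j) :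
    ∏ j ∈ {i}ᶜ, Function.update g i c j (t j) = ∏ j ∈ {i}ᶜ, g j (t j) :=
  prod_congr rfl fun j hj => by rw [Function.update_of_ne (by simpa using hj)]

theorem prod_compl_apply_update (g : ∀ j, T j → ℝ) (i : ι) (t : ∀ j, T j) (s : T i) :
    ∏ j ∈ {i}ᶜ, g j (Function.update t i s j) = ∏ j ∈ {i}ᶜ, g j (t j) :=
  prod_congr rfl fun j hj => by rw [Function.update_of_ne (by simpa using hj)]

variable [∀ i, Fintype (T i)]

noncomputable def interim (f : ∀ i, T i → ℝ) (i : ι) (F : (∀ j, T j) → ℝ) (s : T i) : ℝ :=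
  ∑ t, (∏ j, f j (t j)) * F (Function.update t i s)

theorem sum_prod_eq_one {f : ∀ i, T i → ℝ} (hf1 : ∀ i, ∑ s, f i s = 1) :
    ∑ t : ∀ i, T i, ∏ i, f i (t i) = 1 := by
  rw [← Fintype.prod_sum]
  simp [hf1]

theorem sum_mul_interim {f : ∀ i, T i → ℝ} {i : ι} (hf1 : ∑ s, f i s = 1) (c : T i → ℝ)
    (F : (∀ j, T j) → ℝ) :
    ∑ s, c s * interim f i F s = ∑ t, (∏ j, Function.update f i c j (t j)) * F t := by
  -- `(t, s) ↦ (update t i s, t i)` is an involution carrying one side to the other.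
  set G : (∀ j, T j) × T i → ℝ :=
    fun p => f i p.2 * ((∏ j, Function.update f i c j (p.1 j)) * F p.1)
  have hinv : Function.Involutive
      fun p : (∀ j, T j) × T i => (Function.update p.1 i p.2, p.1 i) := by
    rintro ⟨t, s⟩
    simp
  calc ∑ s, c s * interim f i F s = ∑ p, G (hinv.toPerm _ p) := by
        simp only [interim, mul_sum]
        rw [sum_comm, ← Fintype.sum_prod_type']
        refine sum_congr rfl fun p _ => ?_
        simp only [G, Function.Involutive.coe_toPerm, Fintype.prod_eq_mul_prod_compl i,
          Function.update_self, prod_compl_update_apply, prod_compl_apply_update]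
        ring
    _ = ∑ t, (∏ j, Function.update f i c j (t j)) * F t := by
        rw [Equiv.sum_comp, Fintype.sum_prod_type]
        simp only [G, ← sum_mul, hf1, one_mul]

theorem sum_prod_mul_eq_sum_interim {f : ∀ i, T i → ℝ} (hf1 : ∀ i, ∑ s, f i s = 1) (i : ι)
    (F : (∀ j, T j) → ℝ) :
    ∑ t, (∏ j, f j (t j)) * F t = ∑ s, f i s * interim f i F s := by
  rw [sum_mul_interim (hf1 i), Function.update_eq_self]

theorem interim_apply_eval {f : ∀ i, T i → ℝ} (hf1 : ∀ i, ∑ s, f i s = 1) {i : ι}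
    (g : T i → ℝ) (s : T i) : interim f i (fun t => g (t i)) s = g s := by
  simp [interim, ← sum_mul, sum_prod_eq_one hf1]

theorem sum_prod_mul_sum_prod_mul (g : ∀ j, T j → ℝ) (K : ∀ j, T j → T j → ℝ)
    (F : (∀ j, T j) → ℝ) :
    ∑ t : ∀ j, T j, (∏ j, g j (t j)) * ∑ t', (∏ j, K j (t j) (t' j)) * F t' =
      ∑ t', (∏ j, ∑ a, g j a * K j a (t' j)) * F t' := by
  simp only [mul_sum]
  rw [sum_comm]
  refine sum_congr rfl fun t' _ => ?_
  simp only [Fintype.prod_sum, ← mul_assoc, ← sum_mul, ← prod_mul_distrib]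

variable {f : ∀ i, T i → ℝ} {K : ∀ j, T j → T j → ℝ}

theorem sum_prod_mul_resample (hK : ∀ j τ, ∑ a, f j a * K j a τ = f j τ) (F : (∀ j, T j) → ℝ) :
    ∑ t : ∀ j, T j, (∏ j, f j (t j)) * ∑ t', (∏ j, K j (t j) (t' j)) * F t' =
      ∑ t, (∏ j, f j (t j)) * F t := by
  simp only [sum_prod_mul_sum_prod_mul, hK]

theorem interim_resample (hf1 : ∀ i, ∑ s, f i s = 1) (hK : ∀ j τ, ∑ a, f j a * K j a τ = f j τ)
    (i : ι) (F : (∀ j, T j) → ℝ) (s : T i) :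
    interim f i (fun t => ∑ t', (∏ j, K j (t j) (t' j)) * F t') s =
      ∑ τ, K i s τ * interim f i F τ := by
  classical
  set G : (∀ j, T j) → ℝ := fun t => ∑ t', (∏ j, K j (t j) (t' j)) * F t'
  have hδ : interim f i G s = ∑ s', (Pi.single s 1 : T i → ℝ) s' * interim f i G s' := by
    simp [Pi.single_apply]
  rw [hδ, sum_mul_interim (hf1 i), sum_mul_interim (hf1 i), sum_prod_mul_sum_prod_mul]
  refine sum_congr rfl fun t' _ => congrArg (· * F t') (prod_congr rfl fun j _ => ?_)
  by_cases hj : j = i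
  · subst hj
    simp [Pi.single_apply]
  · simp only [Function.update_of_ne hj, hK]

end ProductWeights

section Mechanism

variable {n : ℕ} {T : Fin n → Type} [∀ i, Fintype (T i)] {O : Type}
  {f : ∀ i, T i → ℝ} {K : ∀ i, T i → T i → ℝ}

-- Each report `s` of agent `i` is replaced by a surrogate `τ ∼ K i s`, the original mechanism is
-- run on the surrogates, and agent `i` pays the surrogate's interim payment plus the price `ρ i τ`.
noncomputable def resampleAlloc (K : ∀ i, T i → T i → ℝ) (x : (∀ i, T i) → O → ℝ) :
    (∀ i, T i) → O → ℝ :=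
  fun t o => ∑ t', (∏ j, K j (t j) (t' j)) * x t' o

noncomputable def resamplePay (f : ∀ i, T i → ℝ) (K : ∀ i, T i → T i → ℝ) (ρ : ∀ i, T i → ℝ)
    (p : Fin n → (∀ i, T i) → ℝ) : Fin n → (∀ i, T i) → ℝ :=
  fun i t => ∑ τ, K i (t i) τ * (interim f i (p i) τ + ρ i τ)

theorem resampleAlloc_nonneg (hK0 : ∀ i s τ, 0 ≤ K i s τ) {x : (∀ i, T i) → O → ℝ}
    (hx0 : ∀ t o, 0 ≤ x t o) (t : ∀ i, T i) (o : O) : 0 ≤ resampleAlloc K x t o :=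
  sum_nonneg fun t' _ => mul_nonneg (prod_nonneg fun j _ => hK0 j _ _) (hx0 t' o)

variable [Fintype O]

theorem sum_resampleAlloc (hK1 : ∀ i s, ∑ τ, K i s τ = 1) {x : (∀ i, T i) → O → ℝ}
    (hx1 : ∀ t, ∑ o, x t o = 1) (t : ∀ i, T i) : ∑ o, resampleAlloc K x t o = 1 := by
  simp only [resampleAlloc]
  rw [sum_comm]
  simp only [← mul_sum, hx1, mul_one]
  exact sum_prod_eq_one fun j => hK1 j (t j)

noncomputable def interimValue (f : ∀ i, T i → ℝ) (v : (i : Fin n) → T i → O → ℝ)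
    (x : (∀ i, T i) → O → ℝ) (i : Fin n) (s s' : T i) : ℝ :=
  ∑ o, interim f i (fun t => x t o) s' * v i s o

theorem interimU_eq (v : (i : Fin n) → T i → O → ℝ) (x : (∀ i, T i) → O → ℝ)
    (p : Fin n → (∀ i, T i) → ℝ) (i : Fin n) (s s' : T i) :
    interimU f v x p i s s' = interimValue f v x i s s' - interim f i (p i) s' :=
  rfl

theorem interimValue_nonneg (hf : ∀ i t, 0 ≤ f i t) {v : (i : Fin n) → T i → O → ℝ}
    (hv : ∀ i t o, 0 ≤ v i t o) {x : (∀ i, T i) → O → ℝ} (hx0 : ∀ t o, 0 ≤ x t o)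
    (i : Fin n) (s s' : T i) : 0 ≤ interimValue f v x i s s' :=
  sum_nonneg fun o _ => mul_nonneg (sum_nonneg fun t _ =>
    mul_nonneg (prod_nonneg fun j _ => hf j (t j)) (hx0 _ o)) (hv i s o)

theorem interimValue_self (v : (i : Fin n) → T i → O → ℝ) (x : (∀ i, T i) → O → ℝ)
    (i : Fin n) (s : T i) :
    interimValue f v x i s s = interim f i (fun t => ∑ o, x t o * v i (t i) o) s := by
  simp only [interimValue, interim, Function.update_self, mul_sum, sum_mul, mul_assoc]
  exact sum_comm

theorem interimValue_resampleAlloc (hf1 : ∀ i, ∑ s, f i s = 1)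
    (hK : ∀ j τ, ∑ a, f j a * K j a τ = f j τ) (v : (i : Fin n) → T i → O → ℝ)
    (x : (∀ i, T i) → O → ℝ) (i : Fin n) (s s' : T i) :
    interimValue f v (resampleAlloc K x) i s s' = ∑ τ, K i s' τ * interimValue f v x i s τ := by
  simp only [interimValue, resampleAlloc, interim_resample hf1 hK, sum_mul, mul_sum, mul_assoc]
  exact sum_comm

theorem interim_resamplePay (hf1 : ∀ i, ∑ s, f i s = 1) (ρ : ∀ i, T i → ℝ)
    (p : Fin n → (∀ i, T i) → ℝ) (i : Fin n) (s : T i) :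
    interim f i (resamplePay f K ρ p i) s = ∑ τ, K i s τ * (interim f i (p i) τ + ρ i τ) :=
  interim_apply_eval hf1 (fun a => ∑ τ, K i a τ * (interim f i (p i) τ + ρ i τ)) s

theorem interimU_resample (hf1 : ∀ i, ∑ s, f i s = 1) (hK : ∀ j τ, ∑ a, f j a * K j a τ = f j τ)
    (v : (i : Fin n) → T i → O → ℝ) (x : (∀ i, T i) → O → ℝ) (ρ : ∀ i, T i → ℝ)
    (p : Fin n → (∀ i, T i) → ℝ) (i : Fin n) (s s' : T i) :
    interimU f v (resampleAlloc K x) (resamplePay f K ρ p) i s s' =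
      ∑ τ, K i s' τ * (interimU f v x p i s τ - ρ i τ) := by
  rw [interimU_eq, interimValue_resampleAlloc hf1 hK, interim_resamplePay hf1, ← sum_sub_distrib]
  exact sum_congr rfl fun τ _ => by rw [interimU_eq]; ring

theorem Wel_eq_sum_interimValue (hf1 : ∀ i, ∑ s, f i s = 1) (v : (i : Fin n) → T i → O → ℝ)
    (x : (∀ i, T i) → O → ℝ) :
    Wel f v x = ∑ i, ∑ s, f i s * interimValue f v x i s s := by
  simp only [Wel, mul_sum (s := univ (α := Fin n)), interimValue_self]
  rw [sum_comm]
  exact sum_congr rfl fun i _ => sum_prod_mul_eq_sum_interim hf1 i _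

theorem Rev_eq_sum_interim (hf1 : ∀ i, ∑ s, f i s = 1) (p : Fin n → (∀ i, T i) → ℝ) :
    Rev f p = ∑ i, ∑ s, f i s * interim f i (p i) s := by
  simp only [Rev, mul_sum]
  rw [sum_comm]
  exact sum_congr rfl fun i _ => sum_prod_mul_eq_sum_interim hf1 i (p i)

theorem Wel_le_Wel_resampleAlloc (hf1 : ∀ i, ∑ s, f i s = 1)
    (hK : ∀ i τ, ∑ a, f i a * K i a τ = f i τ) {v : (i : Fin n) → T i → O → ℝ}
    {x : (∀ i, T i) → O → ℝ} {p : Fin n → (∀ i, T i) → ℝ}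
    (hwel : ∀ i, ∑ s, f i s * interimU f v x p i s s ≤
      ∑ s, f i s * ∑ τ, K i s τ * interimU f v x p i s τ) :
    Wel f v x ≤ Wel f v (resampleAlloc K x) := by
  rw [Wel_eq_sum_interimValue hf1, Wel_eq_sum_interimValue hf1]
  refine sum_le_sum fun i _ => ?_
  have hV (s τ : T i) :
      interimValue f v x i s τ = interimU f v x p i s τ + interim f i (p i) τ := by
    rw [interimU_eq]; ring
  simp only [interimValue_resampleAlloc hf1 hK, hV, mul_add, sum_add_distrib,
    sum_mul_sum_mul_of_stationary (hK i)]
  linarith [hwel i]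

theorem Rev_resamplePay (hf1 : ∀ i, ∑ s, f i s = 1) (hK : ∀ i τ, ∑ a, f i a * K i a τ = f i τ)
    (ρ : ∀ i, T i → ℝ) (p : Fin n → (∀ i, T i) → ℝ) :
    Rev f (resamplePay f K ρ p) = Rev f p + ∑ i, ∑ τ, f i τ * ρ i τ := by
  simp only [Rev_eq_sum_interim hf1, interim_resamplePay hf1, sum_mul_sum_mul_of_stationary (hK _),
    mul_add, sum_add_distrib]

end Mechanism

theorem epsBIC_to_BIC_multi_agent_general
    {n : ℕ} {T : Fin n → Type} {O : Type}
    [∀ i, Fintype (T i)] [∀ i, Nonempty (T i)] [Fintype O]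
    (f : ∀ i, T i → ℝ) (hf : ∀ i t, 0 < f i t) (hf1 : ∀ i, ∑ t, f i t = 1)
    (v : (i : Fin n) → T i → O → ℝ) (hv : ∀ i t o, 0 ≤ v i t o)
    (ε : ℝ) (hε : 0 ≤ ε)
    (x : (∀ i, T i) → O → ℝ) (p : Fin n → (∀ i, T i) → ℝ)
    (hx0 : ∀ t o, 0 ≤ x t o) (hx1 : ∀ t, ∑ o, x t o = 1)
    -- M is ε-BIC
    (hBIC : ∀ (i : Fin n) (s s' : T i),
      interimU f v x p i s s ≥ interimU f v x p i s s' - ε)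
    -- M is interim IR
    (hIR : ∀ (i : Fin n) (s : T i), 0 ≤ interimU f v x p i s s) :
    ∃ (x' : (∀ i, T i) → O → ℝ) (p' : Fin n → (∀ i, T i) → ℝ),
      (∀ t o, 0 ≤ x' t o) ∧ (∀ t, ∑ o, x' t o = 1) ∧ (∀ i t, 0 ≤ p' i t) ∧
      -- M' is BIC
      (∀ (i : Fin n) (s s' : T i),
        interimU f v x' p' i s s ≥ interimU f v x' p' i s s') ∧
      -- M' is interim IR
      (∀ (i : Fin n) (s : T i), 0 ≤ interimU f v x' p' i s s) ∧
      -- W(M') ≥ W(M)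
      Wel f v x' ≥ Wel f v x ∧
      -- R(M') ≥ R(M) − (∑ i |T i|)·ε
      Rev f p' ≥ Rev f p - (∑ i, (Fintype.card (T i) : ℝ)) * ε ∧
      -- (ex ante) allocation-invariance
      (∀ o, ∑ t : ∀ j, T j, (∏ j, f j (t j)) * x' t o
          = ∑ t : ∀ j, T j, (∏ j, f j (t j)) * x t o) := by
  choose K ρ hK hKBIC hKIR hρ hrev hwel using fun i =>
    exists_isStationaryKernel_incentiveCompatible (u := interimU f v x p i) (hf i) (hf1 i) hε
      (fun s t => by linarith [hBIC i s t]) (hIR i)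
  have hstat := fun i => (hK i).stationary
  refine ⟨resampleAlloc K x, resamplePay f K ρ p,
    resampleAlloc_nonneg (fun i => (hK i).nonneg) hx0,
    sum_resampleAlloc (fun i => (hK i).sum_eq_one) hx1, fun i t => ?_, fun i s s' => ?_,
    fun i s => ?_, Wel_le_Wel_resampleAlloc hf1 hstat hwel, ?_,
    fun o => sum_prod_mul_resample hstat _⟩
  · obtain ⟨s₀, hs₀⟩ := hρ i
    refine sum_nonneg fun τ _ => mul_nonneg ((hK i).nonneg _ _) ?_
    have hvalue := interimValue_nonneg (fun i t => (hf i t).le) hv hx0 i s₀ τ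
    linarith [hs₀ τ, interimU_eq (f := f) v x p i s₀ τ]
  · rw [ge_iff_le, interimU_resample hf1 hstat, interimU_resample hf1 hstat]
    exact hKBIC i s s'
  · rw [interimU_resample hf1 hstat]
    exact hKIR i s
  · have hloss : ∑ i, -((Fintype.card (T i) : ℝ) * ε) ≤ ∑ i, ∑ τ, f i τ * ρ i τ :=
      sum_le_sum fun i _ => by linarith [hrev i]
    rw [sum_neg_distrib, ← sum_mul] at hloss
    rw [ge_iff_le, Rev_resamplePay hf1 hstat]
    linarith

/-- `ε`-BIC to BIC transformation for `n` agents with independent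
full-support type distributions: welfare is preserved, the revenue loss is at most
`(∑ i |T i|)·ε`, and the transformation is (ex ante) allocation-invariant. -/
theorem epsBIC_to_BIC_multi_agent
    {n : ℕ} {T : Fin n → Type} {O : Type}
    [∀ i, Fintype (T i)] [∀ i, Nonempty (T i)] [Fintype O]
    (f : ∀ i, T i → ℝ) (hf : ∀ i t, 0 < f i t) (hf1 : ∀ i, ∑ t, f i t = 1)
    (v : (i : Fin n) → T i → O → ℝ) (hv : ∀ i t o, 0 ≤ v i t o)
    (ε : ℝ) (hε : 0 ≤ ε)
    (x : (∀ i, T i) → O → ℝ) (p : Fin n → (∀ i, T i) → ℝ)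
    (hx0 : ∀ t o, 0 ≤ x t o) (hx1 : ∀ t, ∑ o, x t o = 1)
    (hp : ∀ i t, 0 ≤ p i t)
    -- M is ε-BIC
    (hBIC : ∀ (i : Fin n) (s s' : T i),
      interimU f v x p i s s ≥ interimU f v x p i s s' - ε)
    -- M is interim IR
    (hIR : ∀ (i : Fin n) (s : T i), 0 ≤ interimU f v x p i s s) :
    ∃ (x' : (∀ i, T i) → O → ℝ) (p' : Fin n → (∀ i, T i) → ℝ),
      (∀ t o, 0 ≤ x' t o) ∧ (∀ t, ∑ o, x' t o = 1) ∧ (∀ i t, 0 ≤ p' i t) ∧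
      -- M' is BIC
      (∀ (i : Fin n) (s s' : T i),
        interimU f v x' p' i s s ≥ interimU f v x' p' i s s') ∧
      -- M' is interim IR
      (∀ (i : Fin n) (s : T i), 0 ≤ interimU f v x' p' i s s) ∧
      -- W(M') ≥ W(M)
      Wel f v x' ≥ Wel f v x ∧
      -- R(M') ≥ R(M) − (∑ i |T i|)·ε
      Rev f p' ≥ Rev f p - (∑ i, (Fintype.card (T i) : ℝ)) * ε ∧
      -- (ex ante) allocation-invariance
      (∀ o, ∑ t : ∀ j, T j, (∏ j, f j (t j)) * x' t o
          = ∑ t : ∀ j, T j, (∏ j, f j (t j)) * x t o) :=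
  epsBIC_to_BIC_multi_agent_general f hf hf1 v hv ε hε x p hx0 hx1 hBIC hIR
end

section
/- Let M = (x, p) be an n-agent mechanism on finite type sets T_1, …, T_n where each agent's type is drawn independently from the uniform distribution f_i on T_i, with finite outcome set O and valuations v_1, …, v_n. For every ε ≥ 0, if M is ε-EEIC and interim IR, then there exists an n-agent mechanism M' = (x', p') on the same data that is BIC and interim IR, satisfies W(M') ≥ W(M) and R(M') ≥ R(M) − (∑_{i=1}^n |T_i|)·ε, and is (ex ante) allocation-invariant: E_{t∼f}[x'(t)] = E_{t∼f}[x(t)] as distributions over O. -/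
namespace EEICaux
set_option linter.unusedSectionVars false

variable {S : Type} [DecidableEq S] (g : S → S → ℝ)

/-- weight of a walk given by its list of nodes -/
def wsum : List S → ℝ
  | [] => 0
  | [_] => 0
  | a :: b :: t => g a b + wsum (b :: t)

@[simp] lemma wsum_nil : wsum g ([] : List S) = 0 := rfl
@[simp] lemma wsum_single (a : S) : wsum g [a] = 0 := rfl
@[simp] lemma wsum_cons₂ (a b : S) (t : List S) :
    wsum g (a :: b :: t) = g a b + wsum g (b :: t) := rfl

lemma wsum_split (xs : List S) (y : S) (ys : List S) :
    wsum g (xs ++ y :: ys) = wsum g (xs ++ [y]) + wsum g (y :: ys) := by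
  induction xs with
  | nil => simp
  | cons x xs ih =>
    cases xs with
    | nil => simp [wsum]
    | cons x' xs' =>
      simp only [List.cons_append, wsum_cons₂] at *
      rw [ih]; ring

lemma wsum_zip (l : List S) (z : S) :
    wsum g (l ++ [z]) = (List.zipWith g l (l.tail ++ [z])).sum := by
  induction l with
  | nil => simp
  | cons a l ih =>
    cases l with
    | nil => simp [wsum]
    | cons b t =>
      simp only [List.cons_append, wsum_cons₂, List.tail_cons, List.zipWith_cons_cons,
        List.sum_cons] at *
      rw [ih]

/-- duplicate decomposition -/
lemma exists_dup_decomp : ∀ (l : List S), ¬ l.Nodup →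
    ∃ (xs : List S) (c : S) (ys zs : List S), l = xs ++ c :: ys ++ c :: zs := by
  intro l
  induction l with
  | nil => intro h; exact absurd List.nodup_nil h
  | cons x l ih =>
    intro h
    by_cases hx : x ∈ l
    · obtain ⟨s, t, rfl⟩ := List.append_of_mem hx
      exact ⟨[], x, s, t, by simp⟩
    · have : ¬ l.Nodup := fun hn => h (List.nodup_cons.mpr ⟨hx, hn⟩)
      obtain ⟨xs, c, ys, zs, rfl⟩ := ih this
      exact ⟨x :: xs, c, ys, zs, by simp⟩

section withFintype
variable [Fintype S] [Nonempty S]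
variable (hg : ∀ c : Equiv.Perm S, ∑ a, g a (c a) ≤ 0) (hg0 : ∀ a, g a a = 0)

include hg hg0

/-- cycle lemma -/
lemma cycle_le (c : S) (t : List S) (hnd : (c :: t).Nodup) :
    wsum g ((c :: t) ++ [c]) ≤ 0 := by
  set l : List S := c :: t with hl
  have hformsum : ∑ a, g a (l.formPerm a) ≤ 0 := hg _
  have h1 : ∑ a, g a (l.formPerm a) = ∑ a ∈ l.toFinset, g a (l.formPerm a) := by
    refine (Finset.sum_subset (Finset.subset_univ _) ?_).symm
    intro a _ ha
    rw [List.formPerm_apply_of_notMem (by simpa using ha), hg0]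
  have h2 : ∑ a ∈ l.toFinset, g a (l.formPerm a)
      = (l.map (fun a => g a (l.formPerm a))).sum :=
    List.sum_toFinset _ hnd
  have h3 : l.map (fun a => g a (l.formPerm a)) = List.zipWith g l (l.rotate 1) := by
    apply List.ext_getElem
    · simp
    · intro i hi hi'
      have hil : i < l.length := by simpa using hi
      simp only [List.getElem_map, List.getElem_zipWith]
      rw [List.formPerm_apply_getElem _ hnd i hil, List.getElem_rotate]
  have h4 : l.rotate 1 = l.tail ++ [c] := by
    rw [hl, List.rotate_cons_succ, List.rotate_zero, List.tail_cons]
  calc wsum g (l ++ [c]) = (List.zipWith g l (l.tail ++ [c])).sum := wsum_zip g l c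
    _ = ∑ a, g a (l.formPerm a) := by rw [← h4, ← h3, ← h2, ← h1]
    _ ≤ 0 := hformsum

/-- closed walks have nonpositive weight -/
lemma closed_walk_le : ∀ (k : ℕ) (a : S) (t : List S), t.length ≤ k →
    wsum g ((a :: t) ++ [a]) ≤ 0 := by
  intro k
  induction k with
  | zero =>
    intro a t ht
    have : t = [] := List.length_eq_zero_iff.mp (Nat.le_zero.mp ht)
    subst this
    simp [hg0 a]
  | succ k ih =>
    intro a t ht
    by_cases hnd : (a :: t).Nodup
    · exact cycle_le g hg hg0 a t hnd
    · obtain ⟨xs, c, ys, zs, hdec⟩ := exists_dup_decomp (a :: t) hnd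
      cases xs with
      | nil =>
        simp only [List.nil_append] at hdec
        injection hdec with h1 h2
        subst h1; subst h2
        have hlen : ys.length + (zs.length + 1) ≤ k + 1 := by
          simpa using ht
        have e1 : (a :: (ys ++ a :: zs)) ++ [a] = (a :: ys) ++ a :: (zs ++ [a]) := by
          simp
        show wsum g ((a :: (ys ++ a :: zs)) ++ [a]) ≤ 0
        rw [e1, wsum_split g (a :: ys) a (zs ++ [a])]
        have p1 : wsum g ((a :: ys) ++ [a]) ≤ 0 :=
          ih a ys (by omega)
        have p2 : wsum g (a :: (zs ++ [a])) ≤ 0 := by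
          have e2 : a :: (zs ++ [a]) = (a :: zs) ++ [a] := by simp
          rw [e2]; exact ih a zs (by omega)
        linarith
      | cons a' xs' =>
        simp only [List.cons_append] at hdec
        injection hdec with h1 h2
        subst h1; subst h2
        have hlen : xs'.length + (ys.length + (zs.length + 1) + 1) ≤ k + 1 := by
          simpa [List.length_append] using ht
        have e1 : (a :: (xs' ++ c :: ys ++ c :: zs)) ++ [a]
            = (a :: xs') ++ c :: (ys ++ c :: (zs ++ [a])) := by
          simp
        rw [e1, wsum_split g (a :: xs') c (ys ++ c :: (zs ++ [a]))]
        have e2 : c :: (ys ++ c :: (zs ++ [a])) = (c :: ys) ++ c :: (zs ++ [a]) := by simp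
        rw [e2, wsum_split g (c :: ys) c (zs ++ [a])]
        have p2 : wsum g ((c :: ys) ++ [c]) ≤ 0 := ih c ys (by omega)
        have e3 : wsum g ((a :: xs') ++ [c]) + wsum g (c :: (zs ++ [a]))
            = wsum g ((a :: (xs' ++ c :: zs)) ++ [a]) := by
          rw [← wsum_split]
          congr 1
          simp
        have p3 : wsum g ((a :: (xs' ++ c :: zs)) ++ [a]) ≤ 0 := by
          refine ih a (xs' ++ c :: zs) ?_
          simp only [List.length_append, List.length_cons]
          omega
        linarith

/-- any walk is dominated by a walk with nodup interior -/
lemma dedup_walk : ∀ (k : ℕ) (l : List S) (b : S), l.length ≤ k →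
    ∃ l' : List S, l'.Nodup ∧ wsum g (l ++ [b]) ≤ wsum g (l' ++ [b]) := by
  intro k
  induction k with
  | zero =>
    intro l b hl
    have : l = [] := List.length_eq_zero_iff.mp (Nat.le_zero.mp hl)
    exact ⟨[], List.nodup_nil, le_of_eq (by rw [this])⟩
  | succ k ih =>
    intro l b hl
    by_cases hnd : l.Nodup
    · exact ⟨l, hnd, le_refl _⟩
    · obtain ⟨xs, c, ys, zs, rfl⟩ := exists_dup_decomp l hnd
      have hlen : xs.length + (ys.length + (zs.length + 1) + 1) ≤ k + 1 := by
        simpa [List.length_append] using hl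
      have e1 : (xs ++ c :: ys ++ c :: zs) ++ [b]
          = xs ++ c :: (ys ++ c :: (zs ++ [b])) := by simp
      rw [e1, wsum_split g xs c (ys ++ c :: (zs ++ [b]))]
      have e2 : c :: (ys ++ c :: (zs ++ [b])) = (c :: ys) ++ c :: (zs ++ [b]) := by simp
      rw [e2, wsum_split g (c :: ys) c (zs ++ [b])]
      have p2 : wsum g ((c :: ys) ++ [c]) ≤ 0 := closed_walk_le g hg hg0 ys.length c ys le_rfl
      have e3 : wsum g (xs ++ [c]) + wsum g (c :: (zs ++ [b]))
          = wsum g ((xs ++ c :: zs) ++ [b]) := by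
        rw [← wsum_split]
        congr 1
        simp
      obtain ⟨l', hnd', hle'⟩ := ih (xs ++ c :: zs) b (by
        simp only [List.length_append, List.length_cons]; omega)
      exact ⟨l', hnd', by linarith⟩

end withFintype

section Dk
variable [Fintype S] [Nonempty S]

/-- Bellman-Ford style iterate: max weight over walks with at most `k` edges ending at `b`. -/
noncomputable def Dk (g : S → S → ℝ) : ℕ → S → ℝ
  | 0 => fun _ => 0
  | k+1 => fun b => max (Dk g k b)
      (Finset.univ.sup' Finset.univ_nonempty fun a => Dk g k a + g a b)

lemma Dk_nonneg : ∀ (k : ℕ) (b : S), 0 ≤ Dk g k b := by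
  intro k
  induction k with
  | zero => intro b; exact le_refl 0
  | succ k ih => intro b; exact le_trans (ih b) (le_max_left _ _)

lemma Dk_exists_walk : ∀ (k : ℕ) (b : S),
    ∃ l : List S, l.length ≤ k ∧ Dk g k b = wsum g (l ++ [b]) := by
  intro k
  induction k with
  | zero => intro b; exact ⟨[], le_rfl, by simp [Dk]⟩
  | succ k ih =>
    intro b
    have hDk : Dk g (k+1) b = max (Dk g k b)
        (Finset.univ.sup' Finset.univ_nonempty fun a => Dk g k a + g a b) := rfl
    rcases max_cases (Dk g k b)
      (Finset.univ.sup' Finset.univ_nonempty fun a => Dk g k a + g a b) with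
      ⟨hmax, _⟩ | ⟨hmax, _⟩
    · obtain ⟨l, hl, heq⟩ := ih b
      exact ⟨l, le_trans hl (Nat.le_succ k), by rw [hDk, hmax, heq]⟩
    · obtain ⟨a, _, ha⟩ := Finset.exists_mem_eq_sup' Finset.univ_nonempty
        (fun a => Dk g k a + g a b)
      obtain ⟨l, hl, heq⟩ := ih a
      refine ⟨l ++ [a], by simp [List.length_append]; omega, ?_⟩
      have : wsum g ((l ++ [a]) ++ [b]) = wsum g (l ++ [a]) + g a b := by
        have e : (l ++ [a]) ++ [b] = l ++ a :: [b] := by simp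
        rw [e, wsum_split g l a [b]]
        simp [wsum]
      rw [hDk, hmax, ha, this, heq]

lemma walk_le_Dk : ∀ (k : ℕ) (l : List S) (b : S), l.length ≤ k →
    wsum g (l ++ [b]) ≤ Dk g k b := by
  intro k
  induction k with
  | zero =>
    intro l b hl
    have : l = [] := List.length_eq_zero_iff.mp (Nat.le_zero.mp hl)
    subst this
    simp [Dk]
  | succ k ih =>
    intro l b hl
    rcases l.eq_nil_or_concat' with rfl | ⟨l₀, a, rfl⟩
    · simpa using Dk_nonneg g (k+1) b
    · have e : (l₀ ++ [a]) ++ [b] = l₀ ++ a :: [b] := by simp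
      rw [e, wsum_split g l₀ a [b]]
      have h1 : wsum g (l₀ ++ [a]) ≤ Dk g k a := by
        refine ih l₀ a ?_
        simp only [List.length_append, List.length_cons] at hl ⊢
        omega
      have h2 : wsum g (a :: [b]) = g a b := by simp [wsum]
      rw [h2]
      have hDk : Dk g (k+1) b = max (Dk g k b)
          (Finset.univ.sup' Finset.univ_nonempty fun a' => Dk g k a' + g a' b) := rfl
      calc wsum g (l₀ ++ [a]) + g a b ≤ Dk g k a + g a b := by linarith
        _ ≤ Finset.univ.sup' Finset.univ_nonempty (fun a' => Dk g k a' + g a' b) :=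
            Finset.le_sup' (fun a' => Dk g k a' + g a' b) (Finset.mem_univ a)
        _ ≤ Dk g (k+1) b := by rw [hDk]; exact le_max_right _ _

end Dk

lemma sup'_sub_const {ι : Type*} (s : Finset ι) (H : s.Nonempty) (f : ι → ℝ) (r : ℝ) :
    s.sup' H (fun i => f i - r) = s.sup' H f - r := by
  apply le_antisymm
  · exact Finset.sup'_le H _ fun i hi => sub_le_sub_right (Finset.le_sup' f hi) r
  · obtain ⟨i, hi, hEq⟩ := Finset.exists_mem_eq_sup' H f
    rw [hEq]
    exact Finset.le_sup' (fun i => f i - r) hi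

section potential
variable [Fintype S] [Nonempty S]

/-- the `h`-bound for single edges -/
noncomputable def hEdge (g : S → S → ℝ) (a : S) : ℝ :=
  max 0 (Finset.univ.sup' Finset.univ_nonempty fun c => g a c)

lemma hEdge_nonneg (a : S) : 0 ≤ hEdge g a := le_max_left _ _

lemma g_le_hEdge (a b : S) : g a b ≤ hEdge g a :=
  le_trans (Finset.le_sup' _ (Finset.mem_univ b)) (le_max_right _ _)

lemma wsum_le_hsum : ∀ (l : List S) (b : S),
    wsum g (l ++ [b]) ≤ (l.map (hEdge g)).sum := by
  intro l
  induction l with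
  | nil => intro b; simp
  | cons a l ih =>
    intro b
    cases l with
    | nil =>
      simpa [wsum] using g_le_hEdge g a b
    | cons a' l' =>
      have : wsum g ((a :: a' :: l') ++ [b]) = g a a' + wsum g ((a' :: l') ++ [b]) := by
        simp
      rw [this, List.map_cons, List.sum_cons]
      exact add_le_add (g_le_hEdge g a a') (ih b)

noncomputable def beta (g : S → S → ℝ) : S → ℝ := Dk g (Fintype.card S)

lemma beta_nonneg (b : S) : 0 ≤ beta g b := Dk_nonneg g _ b

variable (hg : ∀ c : Equiv.Perm S, ∑ a, g a (c a) ≤ 0) (hg0 : ∀ a, g a a = 0)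
include hg hg0

lemma beta_pot (a b : S) : beta g a + g a b ≤ beta g b := by
  obtain ⟨l, hl, heq⟩ := Dk_exists_walk g (Fintype.card S) a
  have e : wsum g ((l ++ [a]) ++ [b]) = wsum g (l ++ [a]) + g a b := by
    have e0 : (l ++ [a]) ++ [b] = l ++ a :: [b] := by simp
    rw [e0, wsum_split g l a [b]]
    simp [wsum]
  obtain ⟨l', hnd', hle⟩ := dedup_walk g hg hg0 (l ++ [a]).length (l ++ [a]) b le_rfl
  have hcard : l'.length ≤ Fintype.card S := hnd'.length_le_card
  calc beta g a + g a b = wsum g ((l ++ [a]) ++ [b]) := by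
        simp only [beta]; rw [e, heq]
    _ ≤ wsum g (l' ++ [b]) := hle
    _ ≤ Dk g (Fintype.card S) b := walk_le_Dk g (Fintype.card S) l' b hcard
    _ = beta g b := rfl

lemma beta_le (b : S) : beta g b ≤ ∑ a, hEdge g a := by
  obtain ⟨l, hl, heq⟩ := Dk_exists_walk g (Fintype.card S) b
  obtain ⟨l', hnd', hle⟩ := dedup_walk g hg hg0 l.length l b le_rfl
  calc beta g b = wsum g (l ++ [b]) := heq
    _ ≤ wsum g (l' ++ [b]) := hle
    _ ≤ (l'.map (hEdge g)).sum := wsum_le_hsum g l' b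
    _ = ∑ a ∈ l'.toFinset, hEdge g a := (List.sum_toFinset _ hnd').symm
    _ ≤ ∑ a, hEdge g a := Finset.sum_le_sum_of_subset_of_nonneg
        (Finset.subset_univ _) (fun a _ _ => hEdge_nonneg g a)

end potential

/-- Core matching/potential lemma. -/
lemma core {S : Type} [Fintype S] [Nonempty S] (U : S → S → ℝ) :
    ∃ (σ : Equiv.Perm S) (β : S → ℝ),
      (∀ b, 0 ≤ β b) ∧
      (∀ b, β b ≤ ∑ s, ((Finset.univ.sup' Finset.univ_nonempty fun c => U s c) - U s s)) ∧
      (∀ s b, U s b - β b ≤ U s (σ s) - β (σ s)) ∧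
      (∑ s, U s s ≤ ∑ s, U s (σ s)) := by
  classical
  obtain ⟨σ, -, hopt⟩ := Finset.exists_max_image (Finset.univ : Finset (Equiv.Perm S))
    (fun τ => ∑ s, U s (τ s)) ⟨1, Finset.mem_univ 1⟩
  have hopt' : ∀ c : Equiv.Perm S, ∑ s, U s (c (σ s)) ≤ ∑ s, U s (σ s) := fun c => by
    have := hopt (σ.trans c) (Finset.mem_univ _)
    simpa [Equiv.trans_apply] using this
  set g : S → S → ℝ := fun a b => U (σ.symm a) b - U (σ.symm a) a with hgdef
  have hg0 : ∀ a, g a a = 0 := fun a => sub_self _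
  have hg : ∀ c : Equiv.Perm S, ∑ a, g a (c a) ≤ 0 := by
    intro c
    have r1 : ∑ a, g a (c a) = ∑ s, U s (c (σ s)) - ∑ s, U s (σ s) := by
      rw [← Equiv.sum_comp σ (fun a => g a (c a))]
      simp only [hgdef, Equiv.symm_apply_apply]
      rw [Finset.sum_sub_distrib]
    rw [r1]
    exact sub_nonpos.mpr (hopt' c)
  refine ⟨σ, beta g, fun b => beta_nonneg g b, ?_, ?_, ?_⟩
  · intro b
    refine le_trans (beta_le g hg hg0 b) ?_
    have r2 : ∑ a, hEdge g a = ∑ s, hEdge g (σ s) := (Equiv.sum_comp σ (hEdge g)).symm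
    rw [r2]
    have r3 : ∀ s : S, hEdge g (σ s)
        = (Finset.univ.sup' Finset.univ_nonempty fun c => U s c) - U s (σ s) := by
      intro s
      have r4 : (Finset.univ.sup' Finset.univ_nonempty fun c => g (σ s) c)
          = (Finset.univ.sup' Finset.univ_nonempty fun c => U s c) - U s (σ s) := by
        have : (fun c => g (σ s) c) = fun c => U s c - U s (σ s) := by
          funext c; simp [hgdef]
        rw [this, sup'_sub_const]
      rw [hEdge, r4]
      exact max_eq_right (sub_nonneg.mpr (Finset.le_sup' _ (Finset.mem_univ (σ s))))
    rw [Finset.sum_congr rfl fun s _ => r3 s, Finset.sum_sub_distrib,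
      Finset.sum_sub_distrib]
    have hid : ∑ s, U s s ≤ ∑ s, U s (σ s) := by
      have := hopt' σ.symm
      simpa using this
    linarith
  · intro s b
    have hp := beta_pot g hg hg0 (σ s) b
    have : g (σ s) b = U s b - U s (σ s) := by simp [hgdef]
    rw [this] at hp
    linarith
  · have := hopt' σ.symm
    simpa using this



section prob
variable {n : ℕ} {T : Fin n → Type} [∀ j, Fintype (T j)]

/-- marginalization over the `i`-th coordinate (pure counting identity) -/
lemma sum_update_marg (i : Fin n) (G : T i → (∀ j, T j) → ℝ) :
    (Fintype.card (T i) : ℝ) * ∑ t, G (t i) t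
      = ∑ s, ∑ t, G s (Function.update t i s) := by
  classical
  set e := Equiv.piSplitAt i T with he
  have h1 : ∀ (H : (∀ j, T j) → ℝ), ∑ t, H t = ∑ a : T i, ∑ r, H (e.symm (a, r)) := by
    intro H
    rw [← Equiv.sum_comp e.symm H, Fintype.sum_prod_type]
  have hApp : ∀ (a : T i) r, (e.symm (a, r)) i = a := by
    intro a r; simp [he, Equiv.piSplitAt_symm_apply]
  have hUpd : ∀ (a : T i) r (s : T i),
      Function.update (e.symm (a, r)) i s = e.symm (s, r) := by
    intro a r s; funext j
    rcases eq_or_ne j i with rfl | hj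
    · simp [he, Equiv.piSplitAt_symm_apply]
    · simp [he, Function.update_of_ne hj, Equiv.piSplitAt_symm_apply, hj]
  rw [h1 (fun t => G (t i) t)]
  have h2 : ∀ (s : T i), ∑ t, G s (Function.update t i s)
      = (Fintype.card (T i) : ℝ) * ∑ r, G s (e.symm (s, r)) := by
    intro s
    rw [h1 (fun t => G s (Function.update t i s))]
    have : ∀ (a : T i), ∑ r, G s (Function.update (e.symm (a, r)) i s)
        = ∑ r, G s (e.symm (s, r)) := by
      intro a
      exact Finset.sum_congr rfl fun r _ => by rw [hUpd]
    rw [Finset.sum_congr rfl fun a _ => this a, Finset.sum_const, Finset.card_univ,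
      nsmul_eq_mul]
  rw [Finset.sum_congr rfl fun s _ => h2 s, ← Finset.mul_sum]
  congr 1
  exact Finset.sum_congr rfl fun a _ =>
    Finset.sum_congr rfl fun r _ => by rw [hApp]

/-- reindexing a sum over profiles by coordinatewise permutations -/
lemma sum_perm_reindex (σ : ∀ j, Equiv.Perm (T j)) (F : (∀ j, T j) → ℝ) :
    ∑ t : ∀ j, T j, F (fun j => σ j (t j)) = ∑ t, F t :=
  Equiv.sum_comp (Equiv.piCongrRight σ) F

lemma update_perm_comm (σ : ∀ j, Equiv.Perm (T j)) (t : ∀ j, T j) (i : Fin n) (s' : T i) :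
    (fun j => σ j (Function.update t i s' j))
      = Function.update (fun j => σ j (t j)) i (σ i s') := by
  funext j
  rcases eq_or_ne j i with rfl | hj
  · simp
  · simp [Function.update_of_ne hj]

end prob

lemma swap_val {A B : Type} [Fintype A] [Fintype B] (w : A → ℝ) (X : A → B → ℝ)
    (V : B → ℝ) : ∑ b, (∑ a, w a * X a b) * V b = ∑ a, w a * ∑ b, X a b * V b := by
  simp only [Finset.sum_mul, Finset.mul_sum, mul_assoc]
  exact Finset.sum_comm


end EEICaux



open Finset

namespace Stmt7

variable {n : ℕ} {T : Fin n → Type} {O : Type}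

/-- The interim utility `U_i(s, s')` of agent `i` with true type `s` reporting `s'`. -/
noncomputable def interimU [∀ i, Fintype (T i)] [Fintype O]
    (f : ∀ i, T i → ℝ) (v : (i : Fin n) → T i → O → ℝ)
    (x : (∀ i, T i) → O → ℝ) (p : Fin n → (∀ i, T i) → ℝ)
    (i : Fin n) (s s' : T i) : ℝ :=
  (∑ o, (∑ t : ∀ j, T j, (∏ j, f j (t j)) * x (Function.update t i s') o) * v i s o)
    - ∑ t : ∀ j, T j, (∏ j, f j (t j)) * p i (Function.update t i s')

/-- Ex-post utility `u_i(s, M(t̂))` of agent `i` with true type `s` at report profile `t̂`. -/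
noncomputable def expostU [Fintype O]
    (v : (i : Fin n) → T i → O → ℝ)
    (x : (∀ i, T i) → O → ℝ) (p : Fin n → (∀ i, T i) → ℝ)
    (i : Fin n) (s : T i) (th : ∀ j, T j) : ℝ :=
  (∑ o, x th o * v i s o) - p i th

/-- Expected revenue `R(M)`. -/
noncomputable def Rev [∀ i, Fintype (T i)]
    (f : ∀ i, T i → ℝ) (p : Fin n → (∀ i, T i) → ℝ) : ℝ :=
  ∑ t : ∀ j, T j, (∏ j, f j (t j)) * ∑ i, p i t

/-- Expected social welfare `W(M)`. -/
noncomputable def Wel [∀ i, Fintype (T i)] [Fintype O]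
    (f : ∀ i, T i → ℝ) (v : (i : Fin n) → T i → O → ℝ)
    (x : (∀ i, T i) → O → ℝ) : ℝ :=
  ∑ t : ∀ j, T j, (∏ j, f j (t j)) * ∑ i, ∑ o, x t o * v i (t i) o

end Stmt7

open Stmt7

/-- `ε`-EEIC to BIC transformation for `n` agents with independent
uniform type distributions: welfare is preserved, the revenue loss is at most
`(∑ i |T i|)·ε`, and the transformation is (ex ante) allocation-invariant. -/
theorem epsEEIC_to_BIC_multi_agent_uniform
    {n : ℕ} {T : Fin n → Type} {O : Type}
    [∀ i, Fintype (T i)] [∀ i, Nonempty (T i)] [Fintype O]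
    (f : ∀ i, T i → ℝ)
    -- each f i is the uniform distribution on T i
    (hfu : ∀ i (t : T i), f i t = 1 / (Fintype.card (T i) : ℝ))
    (v : (i : Fin n) → T i → O → ℝ) (hv : ∀ i t o, 0 ≤ v i t o)
    (ε : ℝ) (hε : 0 ≤ ε)
    (x : (∀ i, T i) → O → ℝ) (p : Fin n → (∀ i, T i) → ℝ)
    (hx0 : ∀ t o, 0 ≤ x t o) (hx1 : ∀ t, ∑ o, x t o = 1)
    (hp : ∀ i t, 0 ≤ p i t)
    -- M is ε-EEIC
    (hEEIC : ∀ i : Fin n,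
      ∑ t : ∀ j, T j, (∏ j, f j (t j)) *
        ((Finset.univ.sup' Finset.univ_nonempty fun s' : T i =>
            expostU v x p i (t i) (Function.update t i s'))
          - expostU v x p i (t i) t) ≤ ε)
    -- M is interim IR
    (hIR : ∀ (i : Fin n) (s : T i), 0 ≤ interimU f v x p i s s) :
    ∃ (x' : (∀ i, T i) → O → ℝ) (p' : Fin n → (∀ i, T i) → ℝ),
      (∀ t o, 0 ≤ x' t o) ∧ (∀ t, ∑ o, x' t o = 1) ∧ (∀ i t, 0 ≤ p' i t) ∧
      -- M' is BIC
      (∀ (i : Fin n) (s s' : T i),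
        interimU f v x' p' i s s ≥ interimU f v x' p' i s s') ∧
      -- M' is interim IR
      (∀ (i : Fin n) (s : T i), 0 ≤ interimU f v x' p' i s s) ∧
      -- W(M') ≥ W(M)
      Wel f v x' ≥ Wel f v x ∧
      -- R(M') ≥ R(M) − (∑ i |T i|)·ε
      Rev f p' ≥ Rev f p - (∑ i, (Fintype.card (T i) : ℝ)) * ε ∧
      -- (ex ante) allocation-invariance
      (∀ o, ∑ t : ∀ j, T j, (∏ j, f j (t j)) * x' t o
          = ∑ t : ∀ j, T j, (∏ j, f j (t j)) * x t o) := by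
  classical
  -- the constant product weight
  set W0 : ℝ := ∏ j, (1 / (Fintype.card (T j) : ℝ)) with hW0def
  have hW : ∀ t : ∀ j, T j, (∏ j, f j (t j)) = W0 :=
    fun t => Finset.prod_congr rfl fun j _ => hfu j (t j)
  have hW0 : 0 ≤ W0 := Finset.prod_nonneg fun j _ => by positivity
  have hcardpos : ∀ i : Fin n, (0:ℝ) < (Fintype.card (T i) : ℝ) := fun i => by
    exact_mod_cast Fintype.card_pos
  have hsum1 : ∑ _t : ∀ j, T j, W0 = 1 := by
    rw [Finset.sum_const, Finset.card_univ, Fintype.card_pi, nsmul_eq_mul, hW0def]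
    push_cast
    rw [← Finset.prod_mul_distrib,
      Finset.prod_congr rfl (fun j _ => mul_one_div_cancel (ne_of_gt (hcardpos j)))]
    exact Finset.prod_const_one
  -- apply the core matching/potential lemma to each agent
  have hcore := fun i : Fin n => EEICaux.core (fun s b => interimU f v x p i s b)
  choose σ β hβ0 hβle hpot hopt using hcore
  -- interim payments, constants
  set P : (i : Fin n) → T i → ℝ :=
    fun i b => ∑ t : ∀ j, T j, W0 * p i (Function.update t i b) with hPdef
  set K : Fin n → ℝ := fun i => max 0 (Finset.univ.sup' Finset.univ_nonempty fun s =>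
    Finset.univ.inf' Finset.univ_nonempty fun b =>
      β i b - interimU f v x p i s b) with hKdef
  -- basic facts
  have hUW0 : ∀ (i : Fin n) (s b : T i), interimU f v x p i s b
      = (∑ o, (∑ t : ∀ j, T j, W0 * x (Function.update t i b) o) * v i s o)
        - P i b := by
    intro i s b
    simp only [interimU, hW, hPdef]
  have hP0 : ∀ (i : Fin n) (b : T i), 0 ≤ P i b := by
    intro i b
    exact Finset.sum_nonneg fun t _ => mul_nonneg hW0 (hp i _)
  have hVV0 : ∀ (i : Fin n) (s b : T i), 0 ≤ interimU f v x p i s b + P i b := by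
    intro i s b
    have h1 : interimU f v x p i s b + P i b
        = ∑ o, (∑ t : ∀ j, T j, W0 * x (Function.update t i b) o) * v i s o := by
      rw [hUW0]; ring
    rw [h1]
    exact Finset.sum_nonneg fun o _ => mul_nonneg
      (Finset.sum_nonneg fun t _ => mul_nonneg hW0 (hx0 _ _)) (hv i s o)
  have hKle : ∀ (i : Fin n) (b : T i), K i ≤ P i b + β i b := by
    intro i b
    rw [hKdef]
    apply max_le (add_nonneg (hP0 i b) (hβ0 i b))
    apply Finset.sup'_le
    intro s _
    refine le_trans (Finset.inf'_le _ (Finset.mem_univ b)) ?_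
    have := hVV0 i s b
    linarith
  have hKge : ∀ (i : Fin n) (s : T i), ∃ b : T i,
      β i b - interimU f v x p i s b ≤ K i := by
    intro i s
    obtain ⟨b, _, hb⟩ := Finset.exists_mem_eq_inf' (Finset.univ_nonempty)
      (fun b => β i b - interimU f v x p i s b)
    refine ⟨b, ?_⟩
    rw [← hb, hKdef]
    refine le_trans (Finset.le_sup' (f := fun s => Finset.univ.inf' Finset.univ_nonempty
      fun b => β i b - interimU f v x p i s b) (Finset.mem_univ s)) (le_max_right _ _)
  -- interim utility as expectation of ex-post utility
  have hUexp : ∀ (i : Fin n) (s b : T i), interimU f v x p i s b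
      = ∑ t : ∀ j, T j, W0 * expostU v x p i s (Function.update t i b) := by
    intro i s b
    rw [hUW0 i s b]
    simp only [expostU, mul_sub, Finset.sum_sub_distrib]
    rw [EEICaux.swap_val (fun _ : ∀ j, T j => W0)
      (fun t o => x (Function.update t i b) o) (fun o => v i s o)]
  -- total interim regret bound
  have hRho : ∀ i : Fin n,
      ∑ s, ((Finset.univ.sup' Finset.univ_nonempty fun c => interimU f v x p i s c)
        - interimU f v x p i s s) ≤ (Fintype.card (T i) : ℝ) * ε := by
    intro i
    set E : T i → (∀ j, T j) → T i → ℝ :=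
      fun s t b => expostU v x p i s (Function.update t i b) with hEdef
    set G : T i → (∀ j, T j) → ℝ := fun s t =>
      W0 * ((Finset.univ.sup' Finset.univ_nonempty fun b => E s t b) - E s t s) with hGdef
    have hsup : ∀ s : T i,
        (Finset.univ.sup' Finset.univ_nonempty fun c => interimU f v x p i s c)
        ≤ ∑ t : ∀ j, T j, W0 * (Finset.univ.sup' Finset.univ_nonempty fun b => E s t b) := by
      intro s
      apply Finset.sup'_le
      intro b _
      rw [hUexp i s b]
      apply Finset.sum_le_sum
      intro t _
      exact mul_le_mul_of_nonneg_left
        (Finset.le_sup' (fun b => E s t b) (Finset.mem_univ b)) hW0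
    have hstep : ∀ s : T i,
        (Finset.univ.sup' Finset.univ_nonempty fun c => interimU f v x p i s c)
          - interimU f v x p i s s ≤ ∑ t : ∀ j, T j, G s t := by
      intro s
      have h1 := hsup s
      have h2 : ∑ t : ∀ j, T j, G s t
          = (∑ t : ∀ j, T j, W0 * (Finset.univ.sup' Finset.univ_nonempty fun b => E s t b))
            - ∑ t : ∀ j, T j, W0 * E s t s := by
        simp only [hGdef, mul_sub, Finset.sum_sub_distrib]
      have h3 : interimU f v x p i s s = ∑ t : ∀ j, T j, W0 * E s t s := hUexp i s s
      linarith
    have hGinv : ∀ (s : T i) (t : ∀ j, T j), G s (Function.update t i s) = G s t := by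
      intro s t
      simp only [hGdef, hEdef, Function.update_idem]
    have hML := EEICaux.sum_update_marg i G
    have h1 : ∑ s, ∑ t : ∀ j, T j, G s t
        = (Fintype.card (T i) : ℝ) * ∑ t : ∀ j, T j, G (t i) t := by
      rw [hML]
      exact Finset.sum_congr rfl fun s _ =>
        Finset.sum_congr rfl fun t _ => (hGinv s t).symm
    have h2 : ∑ t : ∀ j, T j, G (t i) t ≤ ε := by
      have hmatch : ∀ t : ∀ j, T j, G (t i) t = (∏ j, f j (t j)) *
          ((Finset.univ.sup' Finset.univ_nonempty fun s' =>
            expostU v x p i (t i) (Function.update t i s')) - expostU v x p i (t i) t) := by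
        intro t
        simp only [hGdef, hEdef, hW, Function.update_eq_self]
      rw [Finset.sum_congr rfl fun t _ => hmatch t]
      exact hEEIC i
    calc ∑ s, ((Finset.univ.sup' Finset.univ_nonempty fun c => interimU f v x p i s c)
          - interimU f v x p i s s)
        ≤ ∑ s, ∑ t : ∀ j, T j, G s t := Finset.sum_le_sum fun s _ => hstep s
      _ = (Fintype.card (T i) : ℝ) * ∑ t : ∀ j, T j, G (t i) t := h1
      _ ≤ (Fintype.card (T i) : ℝ) * ε :=
          mul_le_mul_of_nonneg_left h2 (le_of_lt (hcardpos i))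
  -- bound on the constants K
  have hKNe : ∀ i : Fin n, K i ≤ (Fintype.card (T i) : ℝ) * ε := by
    intro i
    rw [hKdef]
    apply max_le (mul_nonneg (le_of_lt (hcardpos i)) hε)
    apply Finset.sup'_le
    intro s _
    refine le_trans (Finset.inf'_le _ (Finset.mem_univ s)) ?_
    have h1 := hIR i s
    have h2 := hβle i s
    have h3 := hRho i
    beta_reduce at h2
    linarith
  -- swapping sums helper
  have hswap : ∀ (A : Fin n → (∀ j, T j) → ℝ),
      ∑ t : ∀ j, T j, W0 * ∑ i, A i t = ∑ i, ∑ t : ∀ j, T j, W0 * A i t := by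
    intro A
    calc ∑ t : ∀ j, T j, W0 * ∑ i, A i t
        = ∑ t : ∀ j, T j, ∑ i, W0 * A i t :=
          Finset.sum_congr rfl fun t _ => Finset.mul_sum _ _ _
      _ = ∑ i, ∑ t : ∀ j, T j, W0 * A i t := Finset.sum_comm
  -- interim characterization of the new mechanism
  have hchar : ∀ (i : Fin n) (s s' : T i),
      interimU f v (fun t => x (fun j => σ j (t j)))
        (fun i t => P i (σ i (t i)) + β i (σ i (t i)) - K i) i s s'
      = interimU f v x p i s (σ i s') - β i (σ i s') + K i := by
    intro i s s'
    have hpay : ∑ t : ∀ j, T j, (∏ j, f j (t j)) *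
        (P i (σ i ((Function.update t i s') i)) + β i (σ i ((Function.update t i s') i)) - K i)
        = P i (σ i s') + β i (σ i s') - K i := by
      have h0 : ∀ t : ∀ j, T j, (∏ j, f j (t j)) *
          (P i (σ i ((Function.update t i s') i)) + β i (σ i ((Function.update t i s') i)) - K i)
          = W0 * (P i (σ i s') + β i (σ i s') - K i) := by
        intro t
        rw [Function.update_self, hW]
      rw [Finset.sum_congr rfl fun t _ => h0 t, ← Finset.sum_mul, hsum1, one_mul]
    have halloc : ∀ o, (∑ t : ∀ j, T j, (∏ j, f j (t j)) *
          x (fun j => σ j (Function.update t i s' j)) o)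
        = ∑ t : ∀ j, T j, W0 * x (Function.update t i (σ i s')) o := by
      intro o
      have h0 : ∀ t : ∀ j, T j, (∏ j, f j (t j)) *
          x (fun j => σ j (Function.update t i s' j)) o
          = W0 * x (Function.update (fun j => σ j (t j)) i (σ i s')) o := by
        intro t
        rw [hW, EEICaux.update_perm_comm]
      rw [Finset.sum_congr rfl fun t _ => h0 t]
      exact EEICaux.sum_perm_reindex σ
        (fun u => W0 * x (Function.update u i (σ i s')) o)
    rw [hUW0 i s (σ i s')]
    simp only [interimU]
    rw [hpay, Finset.sum_congr rfl fun o _ => by rw [halloc o]]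
    ring
  refine ⟨fun t => x (fun j => σ j (t j)),
    fun i t => P i (σ i (t i)) + β i (σ i (t i)) - K i,
    fun t o => hx0 _ o, fun t => hx1 _, ?_, ?_, ?_, ?_, ?_, ?_⟩
  · -- nonnegative payments
    intro i t
    have := hKle i (σ i (t i))
    simp only
    linarith
  · -- BIC
    intro i s s'
    rw [ge_iff_le, hchar i s s, hchar i s s']
    have := hpot i s (σ i s')
    linarith
  · -- IR
    intro i s
    rw [hchar i s s]
    obtain ⟨b, hb⟩ := hKge i s
    have h2 := hpot i s b
    linarith
  · -- welfare
    rw [ge_iff_le]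
    simp only [Wel, hW]
    rw [hswap (fun i t => ∑ o, x t o * v i (t i) o),
      hswap (fun i t => ∑ o, x (fun j => σ j (t j)) o * v i (t i) o)]
    apply Finset.sum_le_sum
    intro i _
    set N : ℝ := (Fintype.card (T i) : ℝ) with hNdef
    set Vp : T i → T i → ℝ :=
      fun s b => ∑ t : ∀ j, T j, W0 * ∑ o, x (Function.update t i b) o * v i s o with hVpdef
    have hA : N * ∑ t : ∀ j, T j, W0 * ∑ o, x t o * v i (t i) o = ∑ s, Vp s s := by
      have hml := EEICaux.sum_update_marg i (fun s t => W0 * ∑ o, x t o * v i s o)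
      beta_reduce at hml
      exact hml
    have hB : N * ∑ t : ∀ j, T j, W0 * ∑ o, x (fun j => σ j (t j)) o * v i (t i) o
        = ∑ s, Vp s (σ i s) := by
      have hre : ∑ t : ∀ j, T j, W0 * ∑ o, x (fun j => σ j (t j)) o * v i (t i) o
          = ∑ t : ∀ j, T j, W0 * ∑ o, x t o * v i ((σ i).symm (t i)) o := by
        rw [← EEICaux.sum_perm_reindex σ
          (fun u => W0 * ∑ o, x u o * v i ((σ i).symm (u i)) o)]
        exact Finset.sum_congr rfl fun t _ => by simp
      rw [hre]
      have hml := EEICaux.sum_update_marg i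
        (fun s t => W0 * ∑ o, x t o * v i ((σ i).symm s) o)
      beta_reduce at hml
      rw [hml]
      calc ∑ s, Vp ((σ i).symm s) s
          = ∑ s, Vp ((σ i).symm (σ i s)) (σ i s) :=
            (Equiv.sum_comp (σ i) (fun s => Vp ((σ i).symm s) s)).symm
        _ = ∑ s, Vp s (σ i s) := by simp
    have hVpU : ∀ s b : T i, Vp s b = interimU f v x p i s b + P i b := by
      intro s b
      calc Vp s b = ∑ o, (∑ t : ∀ j, T j, W0 * x (Function.update t i b) o) * v i s o :=
            (EEICaux.swap_val (fun _ : ∀ j, T j => W0)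
              (fun t o => x (Function.update t i b) o) (fun o => v i s o)).symm
        _ = interimU f v x p i s b + P i b := by rw [hUW0 i s b]; ring
    have hC : ∑ s, Vp s s ≤ ∑ s, Vp s (σ i s) := by
      rw [Finset.sum_congr rfl fun s _ => hVpU s s,
        Finset.sum_congr rfl fun s _ => hVpU s (σ i s),
        Finset.sum_add_distrib, Finset.sum_add_distrib]
      have hPre : ∑ s, P i (σ i s) = ∑ s, P i s := Equiv.sum_comp (σ i) (P i)
      have := hopt i
      beta_reduce at this
      linarith
    have hN : (0:ℝ) < N := hcardpos i
    have hfin : N * (∑ t : ∀ j, T j, W0 * ∑ o, x t o * v i (t i) o)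
        ≤ N * (∑ t : ∀ j, T j, W0 * ∑ o, x (fun j => σ j (t j)) o * v i (t i) o) := by
      rw [hA, hB]; exact hC
    exact le_of_mul_le_mul_left hfin hN
  · -- revenue
    rw [ge_iff_le]
    simp only [Rev, hW]
    rw [hswap (fun i t => p i t),
      hswap (fun i t => P i (σ i (t i)) + β i (σ i (t i)) - K i)]
    have hrev : ∀ i : Fin n,
        (∑ t : ∀ j, T j, W0 * p i t) - (Fintype.card (T i) : ℝ) * ε
          ≤ ∑ t : ∀ j, T j, W0 * (P i (σ i (t i)) + β i (σ i (t i)) - K i) := by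
      intro i
      set N : ℝ := (Fintype.card (T i) : ℝ) with hNdef
      have hq1 : N * ∑ t : ∀ j, T j, W0 * p i t = ∑ s, P i s := by
        have hml := EEICaux.sum_update_marg i (fun s t => W0 * p i (Function.update t i s))
        beta_reduce at hml
        simp only [Function.update_eq_self, Function.update_idem] at hml
        exact hml
      have hq2 : N * ∑ t : ∀ j, T j, W0 * (P i (σ i (t i)) + β i (σ i (t i)) - K i)
          = ∑ s, (P i (σ i s) + β i (σ i s) - K i) := by
        have hml := EEICaux.sum_update_marg i
          (fun s _t => W0 * (P i (σ i s) + β i (σ i s) - K i))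
        beta_reduce at hml
        rw [hml]
        refine Finset.sum_congr rfl fun s _ => ?_
        rw [← Finset.sum_mul, hsum1, one_mul]
      have hq3 : ∑ s, (P i (σ i s) + β i (σ i s) - K i)
          = ∑ s, P i s + ∑ s, β i (σ i s) - N * K i := by
        rw [Finset.sum_sub_distrib, Finset.sum_add_distrib, Finset.sum_const,
          Finset.card_univ, nsmul_eq_mul]
        have hPre : ∑ s, P i (σ i s) = ∑ s, P i s := Equiv.sum_comp (σ i) (P i)
        rw [hPre]
      have hβsum : 0 ≤ ∑ s, β i (σ i s) :=
        Finset.sum_nonneg fun s _ => hβ0 i (σ i s)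
      have hKN := hKNe i
      have hN : (0:ℝ) < N := hcardpos i
      have hfin : N * ((∑ t : ∀ j, T j, W0 * p i t) - N * ε)
          ≤ N * ∑ t : ∀ j, T j, W0 * (P i (σ i (t i)) + β i (σ i (t i)) - K i) := by
        rw [hq2, hq3, mul_sub, hq1]
        have : N * K i ≤ N * (N * ε) := mul_le_mul_of_nonneg_left hKN (le_of_lt hN)
        linarith
      linarith [le_of_mul_le_mul_left hfin hN]
    have htot := Finset.sum_le_sum fun i (_ : i ∈ Finset.univ) => hrev i
    rw [Finset.sum_sub_distrib] at htot
    have hsm : (∑ i, (Fintype.card (T i) : ℝ)) * ε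
        = ∑ i, (Fintype.card (T i) : ℝ) * ε := Finset.sum_mul _ _ _
    linarith
  · -- allocation invariance
    intro o
    simp only [hW]
    exact EEICaux.sum_perm_reindex σ (fun u => W0 * x u o)
end

section
/- For every n ≥ 1, all integers m_1, …, m_n ≥ 2, and every ε > 0, there exist finite type sets T_1, …, T_n with |T_i| = m_i, independent uniform type distributions f_i on T_i, a finite outcome set O, valuations v_1, …, v_n, and an n-agent mechanism M that is ε-BIC (and also ε-EEIC) and interim IR, such that every BIC and interim IR mechanism M' on the same data with W(M') ≥ W(M) satisfies R(M') ≤ R(M) − ∑_{i=1}^n (m_i − 1)·ε/2. In particular, any welfare-preserving transformation must suffer revenue loss Ω((∑_i |T_i|)·ε). -/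
open Finset

namespace Stmt8

/-- Interim utility of agent `i` with true type `s` reporting `s'`, for independent
uniform type distributions on the type sets `Fin (m j)`. -/
noncomputable def iU {n : ℕ} (m : Fin n → ℕ) {k : ℕ}
    (v : (i : Fin n) → Fin (m i) → Fin k → ℝ)
    (x : (∀ i, Fin (m i)) → Fin k → ℝ) (p : Fin n → (∀ i, Fin (m i)) → ℝ)
    (i : Fin n) (s s' : Fin (m i)) : ℝ :=
  (∑ o, (∑ t : ∀ j, Fin (m j), (∏ j, (1 : ℝ) / (m j)) * x (Function.update t i s') o)
      * v i s o)
    - ∑ t : ∀ j, Fin (m j), (∏ j, (1 : ℝ) / (m j)) * p i (Function.update t i s')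

/-- Ex-post utility of agent `i` with true type `s` at report profile `th`. -/
noncomputable def epU {n : ℕ} (m : Fin n → ℕ) {k : ℕ}
    (v : (i : Fin n) → Fin (m i) → Fin k → ℝ)
    (x : (∀ i, Fin (m i)) → Fin k → ℝ) (p : Fin n → (∀ i, Fin (m i)) → ℝ)
    (i : Fin n) (s : Fin (m i)) (th : ∀ j, Fin (m j)) : ℝ :=
  (∑ o, x th o * v i s o) - p i th

/-- Expected revenue under independent uniform distributions. -/
noncomputable def Rev {n : ℕ} (m : Fin n → ℕ)
    (p : Fin n → (∀ i, Fin (m i)) → ℝ) : ℝ :=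
  ∑ t : ∀ j, Fin (m j), (∏ j, (1 : ℝ) / (m j)) * ∑ i, p i t

/-- Expected social welfare under independent uniform distributions. -/
noncomputable def Wel {n : ℕ} (m : Fin n → ℕ) {k : ℕ}
    (v : (i : Fin n) → Fin (m i) → Fin k → ℝ)
    (x : (∀ i, Fin (m i)) → Fin k → ℝ) : ℝ :=
  ∑ t : ∀ j, Fin (m j), (∏ j, (1 : ℝ) / (m j)) * ∑ i, ∑ o, x t o * v i (t i) o

end Stmt8

open Stmt8

/-!
Take the type profiles themselves as outcomes and let agent `i` care only about the `i`-th
coordinate of the outcome: type `s` values coordinate `s` at `(2s+2)ε`, coordinate `s-1` at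
`(2s+1)ε` and every other coordinate at `0`. The mechanism that implements the reported profile
and charges every agent its reported value leaves truthful agents with utility `0`, and a
misreport gains at most `ε`, so it is `ε`-BIC and `ε`-EEIC. Any other outcome loses at least `ε`
of welfare, so a mechanism with at least the same welfare must use the same allocation. For that
allocation IR caps the price of type `0` at `2ε`, and the BIC constraint of type `s+1` against
reporting `s` lets the price rise by at most `ε` per step, so type `s` pays at most `(s+2)ε`
instead of `(2s+2)ε`. Averaging the difference `sε` over the uniform type gives the loss
`(m i - 1)ε/2` for agent `i`.
-/

open Function
open scoped BigOperators

theorem Fintype.expect_expect_update {ι M : Type*} [Fintype ι] [DecidableEq ι] {β : ι → Type*}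
    [∀ i, Fintype (β i)] [AddCommMonoid M] [Module ℚ≥0 M] (i : ι) (g : (∀ j, β j) → M) :
    𝔼 s : β i, 𝔼 t, g (update t i s) = 𝔼 t, g t := by
  set e := Equiv.piSplitAt i β
  have hsplit (h : (∀ j, β j) → M) : 𝔼 t, h t = 𝔼 a, 𝔼 r, h (e.symm (a, r)) := by
    rw [← Fintype.expect_equiv e.symm (fun q => h (e.symm q)) h fun _ => rfl,
      ← univ_product_univ, expect_product' univ univ fun a r => h (e.symm (a, r))]
  have hupdate (a s : β i) r : update (e.symm (a, r)) i s = e.symm (s, r) := by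
    rw [Equiv.eq_symm_apply]; ext j
    · simp [e]
    · simp [e, update_of_ne j.2, dif_neg j.2]
  rcases isEmpty_or_nonempty (β i) with hi | hi
  · have : IsEmpty (∀ j, β j) := ⟨fun t => hi.false (t i)⟩
    simp [expect_empty, Finset.univ_eq_empty]
  · rw [hsplit g]
    refine expect_congr rfl fun s _ => ?_
    simp only [hsplit fun t => g (update t i s), hupdate, Fintype.expect_const]

theorem sum_mul_le_of_forall_le {α : Type*} [Fintype α] {y f : α → ℝ} {a : α}
    (hy₀ : ∀ o, 0 ≤ y o) (hy₁ : ∑ o, y o = 1) (hf : ∀ o, f o ≤ f a) :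
    ∑ o, y o * f o ≤ f a :=
  calc ∑ o, y o * f o ≤ ∑ o, y o * f a :=
        sum_le_sum fun o _ => mul_le_mul_of_nonneg_left (hf o) (hy₀ o)
    _ = f a := by rw [← sum_mul, hy₁, one_mul]

theorem sum_mul_lt_of_ne_indicator {α : Type*} [Fintype α] [DecidableEq α] {y f : α → ℝ}
    {a : α} (hy₀ : ∀ o, 0 ≤ y o) (hy₁ : ∑ o, y o = 1) (hf : ∀ o, o ≠ a → f o < f a)
    (hy : y ≠ fun o => if o = a then 1 else 0) :
    ∑ o, y o * f o < f a := by
  obtain ⟨b, hba, hyb⟩ : ∃ b, b ≠ a ∧ 0 < y b := by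
    by_contra! hzero
    have hoff : ∀ o, o ≠ a → y o = 0 := fun o ho => le_antisymm (hzero o ho) (hy₀ o)
    have hya : y a = 1 := by rwa [sum_eq_single a (fun o _ ho => hoff o ho) (by simp)] at hy₁
    exact hy (funext fun o => by split_ifs with h <;> simp_all)
  have hle (o : α) : f o ≤ f a := by
    rcases eq_or_ne o a with rfl | ho
    exacts [le_rfl, (hf o ho).le]
  calc ∑ o, y o * f o < ∑ o, y o * f a :=
        sum_lt_sum (fun o _ => mul_le_mul_of_nonneg_left (hle o) (hy₀ o))
          ⟨b, mem_univ b, mul_lt_mul_of_pos_left (hf b hba) hyb⟩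
    _ = f a := by rw [← sum_mul, hy₁, one_mul]

theorem Fin.expect_val {M : ℕ} (hM : 0 < M) : 𝔼 s : Fin M, (s : ℝ) = ((M : ℝ) - 1) / 2 := by
  have hsum : ((∑ s : Fin M, (s : ℕ)) * 2 : ℕ) = (M * (M - 1) : ℕ) := by
    rw [Fin.sum_univ_eq_sum_range (fun i => i) M, sum_range_id_mul_two M]
  have hsum' := congrArg (Nat.cast : ℕ → ℝ) hsum
  push_cast [Nat.cast_sub hM] at hsum'
  rw [Fintype.expect_eq_sum_div_card, Fintype.card_fin]
  field_simp
  linarith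

namespace Stmt8

section UniformWeights

variable {n : ℕ} {m : Fin n → ℕ}

theorem sum_uniformWeight_mul (f : (∀ j, Fin (m j)) → ℝ) :
    ∑ t, (∏ j, (1 : ℝ) / m j) * f t = 𝔼 t, f t := by
  rw [Fintype.expect_eq_sum_div_card, Fintype.card_pi, ← mul_sum]
  simp [div_eq_inv_mul, prod_inv_distrib]

theorem iU_eq_expect {k : ℕ} (v : (i : Fin n) → Fin (m i) → Fin k → ℝ)
    (x : (∀ i, Fin (m i)) → Fin k → ℝ) (p : Fin n → (∀ i, Fin (m i)) → ℝ)
    (i : Fin n) (s s' : Fin (m i)) :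
    iU m v x p i s s' =
      ∑ o, (𝔼 t, x (update t i s') o) * v i s o - 𝔼 t, p i (update t i s') := by
  simp only [iU, sum_uniformWeight_mul]

theorem Wel_eq_expect {k : ℕ} (v : (i : Fin n) → Fin (m i) → Fin k → ℝ)
    (x : (∀ i, Fin (m i)) → Fin k → ℝ) :
    Wel m v x = 𝔼 t, ∑ o, x t o * ∑ i, v i (t i) o := by
  rw [Wel, sum_uniformWeight_mul]
  simp only [mul_sum]
  exact expect_congr rfl fun t _ => sum_comm

theorem Rev_eq_sum_expect (p : Fin n → (∀ i, Fin (m i)) → ℝ) :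
    Rev m p = ∑ i, 𝔼 s : Fin (m i), 𝔼 t, p i (update t i s) := by
  rw [Rev, sum_uniformWeight_mul, expect_sum_comm]
  exact sum_congr rfl fun i _ => (Fintype.expect_expect_update i (p i)).symm

end UniformWeights

section ProfileOutcomes

variable {n : ℕ} {m : Fin n → ℕ} {k : ℕ} (e : (∀ j, Fin (m j)) ≃ Fin k)

def profileAlloc (t : ∀ j, Fin (m j)) (o : Fin k) : ℝ := if o = e t then 1 else 0

def coordVal (w : (i : Fin n) → Fin (m i) → Fin (m i) → ℝ) (i : Fin n) (s : Fin (m i))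
    (o : Fin k) : ℝ :=
  w i s (e.symm o i)

def ownValuePay (w : (i : Fin n) → Fin (m i) → Fin (m i) → ℝ) (i : Fin n)
    (t : ∀ j, Fin (m j)) : ℝ :=
  w i (t i) (t i)

theorem profileAlloc_nonneg (t : ∀ j, Fin (m j)) (o : Fin k) : 0 ≤ profileAlloc e t o := by
  unfold profileAlloc; split_ifs <;> norm_num

theorem sum_profileAlloc_mul (t : ∀ j, Fin (m j)) (f : Fin k → ℝ) :
    ∑ o, profileAlloc e t o * f o = f (e t) := by
  simp [profileAlloc]

theorem sum_profileAlloc (t : ∀ j, Fin (m j)) : ∑ o, profileAlloc e t o = 1 := by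
  simpa using sum_profileAlloc_mul e t 1

theorem epU_profileAlloc (w : (i : Fin n) → Fin (m i) → Fin (m i) → ℝ)
    (p : Fin n → (∀ i, Fin (m i)) → ℝ) (i : Fin n) (s : Fin (m i)) (t : ∀ j, Fin (m j)) :
    epU m (coordVal e w) (profileAlloc e) p i s t = w i s (t i) - p i t := by
  simp [epU, sum_profileAlloc_mul, coordVal]

theorem iU_profileAlloc [∀ j, NeZero (m j)] (w : (i : Fin n) → Fin (m i) → Fin (m i) → ℝ)
    (p : Fin n → (∀ i, Fin (m i)) → ℝ) (i : Fin n) (s s' : Fin (m i)) :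
    iU m (coordVal e w) (profileAlloc e) p i s s' = w i s s' - 𝔼 t, p i (update t i s') := by
  rw [iU_eq_expect]
  congr 1
  simp only [expect_mul, ← expect_sum_comm, sum_profileAlloc_mul, coordVal,
    Equiv.symm_apply_apply, update_self, Fintype.expect_const]

theorem iU_ownValuePay [∀ j, NeZero (m j)] (w : (i : Fin n) → Fin (m i) → Fin (m i) → ℝ)
    (i : Fin n) (s s' : Fin (m i)) :
    iU m (coordVal e w) (profileAlloc e) (ownValuePay w) i s s' = w i s s' - w i s' s' := by
  simp [iU_profileAlloc, ownValuePay]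

theorem eq_profileAlloc_of_Wel_le (w : (i : Fin n) → Fin (m i) → Fin (m i) → ℝ)
    (hw : ∀ t u : ∀ j, Fin (m j), u ≠ t → ∑ i, w i (t i) (u i) < ∑ i, w i (t i) (t i))
    (x : (∀ i, Fin (m i)) → Fin k → ℝ) (hx₀ : ∀ t o, 0 ≤ x t o) (hx₁ : ∀ t, ∑ o, x t o = 1)
    (hW : Wel m (coordVal e w) (profileAlloc e) ≤ Wel m (coordVal e w) x) :
    x = profileAlloc e := by
  set S : (∀ j, Fin (m j)) → Fin k → ℝ := fun t o => ∑ i, w i (t i) (e.symm o i)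
  have hS (t : ∀ j, Fin (m j)) (o : Fin k) (ho : o ≠ e t) : S t o < S t (e t) := by
    simpa [S] using hw t (e.symm o) (by rwa [Ne, Equiv.symm_apply_eq])
  by_contra hne
  obtain ⟨t, ht⟩ := ne_iff.mp hne
  refine hW.not_gt ?_
  simp only [Wel_eq_expect, coordVal, sum_profileAlloc_mul]
  refine expect_lt_expect (fun t _ => sum_mul_le_of_forall_le (hx₀ t) (hx₁ t) fun o => ?_)
    ⟨t, mem_univ t, sum_mul_lt_of_ne_indicator (hx₀ t) (hx₁ t) (hS t) ht⟩
  rcases eq_or_ne o (e t) with rfl | ho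
  exacts [le_rfl, (hS t o ho).le]

theorem expected_exPostRegret_ownValuePay_le [∀ j, NeZero (m j)]
    (w : (i : Fin n) → Fin (m i) → Fin (m i) → ℝ) {ε : ℝ}
    (hgain : ∀ i s a, w i s a - w i a a ≤ ε) (i : Fin n)
    (hne : (univ : Finset (Fin (m i))).Nonempty) :
    ∑ t : ∀ j, Fin (m j), (∏ j, (1 : ℝ) / (m j)) *
      ((univ.sup' hne fun s' =>
          epU m (coordVal e w) (profileAlloc e) (ownValuePay w) i (t i) (update t i s'))
        - epU m (coordVal e w) (profileAlloc e) (ownValuePay w) i (t i) t) ≤ ε := by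
  rw [sum_uniformWeight_mul]
  refine expect_le univ_nonempty fun t _ => ?_
  simp only [epU_profileAlloc, ownValuePay, update_self, sub_self, sub_zero]
  exact sup'_le hne _ fun a _ => hgain i (t i) a

end ProfileOutcomes

section Ladder

variable {M : ℕ} {ε : ℝ}

variable (ε) in
def ladderVal (s a : Fin M) : ℝ :=
  if a = s then (2 * s + 2) * ε else if (a : ℕ) + 1 = s then (2 * s + 1) * ε else 0

theorem ladderVal_self (s : Fin M) : ladderVal ε s s = (2 * s + 2) * ε := by
  simp [ladderVal]

theorem ladderVal_nonneg (hε : 0 ≤ ε) (s a : Fin M) : 0 ≤ ladderVal ε s a := by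
  unfold ladderVal; split_ifs <;> positivity

theorem ladderVal_add_le_self (hε : 0 ≤ ε) {s a : Fin M} (h : a ≠ s) :
    ladderVal ε s a + ε ≤ ladderVal ε s s := by
  rw [ladderVal_self, ladderVal, if_neg h]
  split_ifs
  · linarith
  · nlinarith [(s : ℕ).cast_nonneg (α := ℝ)]

theorem ladderVal_sub_self_le (hε : 0 ≤ ε) (s a : Fin M) :
    ladderVal ε s a - ladderVal ε a a ≤ ε := by
  rw [ladderVal_self, ladderVal]
  split_ifs with h₁ h₂
  · subst h₁; linarith
  · have : (s : ℝ) = a + 1 := by exact_mod_cast h₂.symm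
    rw [this]; linarith
  · nlinarith [(a : ℕ).cast_nonneg (α := ℝ)]

theorem ladderVal_of_succ_eq {s a : Fin M} (h : (a : ℕ) + 1 = s) :
    ladderVal ε s a = (2 * s + 1) * ε := by
  rw [ladderVal, if_neg (by rintro rfl; omega), if_pos h]

theorem le_ladderVal_sub_of_ic_ir (P : Fin M → ℝ) (hIR : ∀ s, P s ≤ ladderVal ε s s)
    (hIC : ∀ s a, ladderVal ε s a - P a ≤ ladderVal ε s s - P s) (s : Fin M) :
    P s ≤ ladderVal ε s s - s * ε := by
  obtain ⟨j, hj⟩ := s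
  induction j with
  | zero => simpa using hIR ⟨0, hj⟩
  | succ j ih =>
    have hstep := hIC ⟨j + 1, hj⟩ ⟨j, by omega⟩
    have hprev := ih (by omega)
    rw [ladderVal_of_succ_eq rfl, ladderVal_self] at hstep
    rw [ladderVal_self] at hprev ⊢
    push_cast at hstep hprev ⊢
    linarith

end Ladder

section LadderMechanism

variable {n : ℕ} {m : Fin n → ℕ} {ε : ℝ}

theorem sum_ladderVal_lt (hε : 0 < ε) {t u : ∀ j, Fin (m j)} (h : u ≠ t) :
    ∑ i, ladderVal ε (t i) (u i) < ∑ i, ladderVal ε (t i) (t i) := by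
  obtain ⟨i, hi⟩ := ne_iff.mp h
  refine sum_lt_sum (fun j _ => ?_) ⟨i, mem_univ i, ?_⟩
  · rcases eq_or_ne (u j) (t j) with hj | hj
    · rw [hj]
    · linarith [ladderVal_add_le_self hε.le hj]
  · linarith [ladderVal_add_le_self hε.le hi]

variable {k : ℕ} (e : (∀ j, Fin (m j)) ≃ Fin k)

theorem Rev_le_ownValuePay_ladderVal_sub [∀ j, NeZero (m j)] (p : Fin n → (∀ i, Fin (m i)) → ℝ)
    (hIC : ∀ i (s s' : Fin (m i)), iU m (coordVal e fun _ => ladderVal ε) (profileAlloc e) p i s s'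
      ≤ iU m (coordVal e fun _ => ladderVal ε) (profileAlloc e) p i s s)
    (hIR : ∀ i (s : Fin (m i)),
      0 ≤ iU m (coordVal e fun _ => ladderVal ε) (profileAlloc e) p i s s) :
    Rev m p ≤ Rev m (ownValuePay fun _ => ladderVal ε) - ∑ i, ((m i : ℝ) - 1) * ε / 2 := by
  simp only [iU_profileAlloc] at hIC hIR
  have hprice (i : Fin n) (s : Fin (m i)) := le_ladderVal_sub_of_ic_ir
    (fun s => 𝔼 t, p i (update t i s)) (fun s => by linarith [hIR i s]) (hIC i) s
  have hmean (i : Fin n) : 𝔼 s : Fin (m i), (s * ε : ℝ) = ((m i : ℝ) - 1) * ε / 2 := by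
    rw [← expect_mul, Fin.expect_val (Nat.pos_of_neZero _)]; ring
  simp only [Rev_eq_sum_expect, ownValuePay, update_self, Fintype.expect_const, ← hmean,
    ← sum_sub_distrib, ← expect_sub_distrib]
  exact sum_le_sum fun i _ => expect_le_expect fun s _ => hprice i s

end LadderMechanism

end Stmt8

/-- Lower bound on revenue loss for multiple agents: for every `n ≥ 1`,
type-set sizes `m i ≥ 2` and `ε > 0`, there is an instance with independent uniform
type distributions and an `ε`-BIC, `ε`-EEIC and interim IR mechanism such that every
welfare-preserving BIC and interim IR mechanism loses at least `∑ i (m i − 1)·ε/2`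
revenue. -/
theorem lower_bound_revenue_loss_multi_agent
    (n : ℕ) (m : Fin n → ℕ) (hm : ∀ i, 2 ≤ m i)
    (ε : ℝ) (hε : 0 < ε) :
    ∃ (k : ℕ) (v : (i : Fin n) → Fin (m i) → Fin k → ℝ)
      (x : (∀ i, Fin (m i)) → Fin k → ℝ) (p : Fin n → (∀ i, Fin (m i)) → ℝ),
      (∀ i t o, 0 ≤ v i t o) ∧
      (∀ t o, 0 ≤ x t o) ∧ (∀ t, ∑ o, x t o = 1) ∧ (∀ i t, 0 ≤ p i t) ∧
      -- M is ε-BIC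
      (∀ (i : Fin n) (s s' : Fin (m i)), iU m v x p i s s ≥ iU m v x p i s s' - ε) ∧
      -- M is ε-EEIC
      (∀ i : Fin n,
        ∑ t : ∀ j, Fin (m j), (∏ j, (1 : ℝ) / (m j)) *
          ((Finset.univ.sup'
              (Finset.univ_nonempty_iff.mpr ⟨⟨0, by have := hm i; omega⟩⟩)
              fun s' : Fin (m i) => epU m v x p i (t i) (Function.update t i s'))
            - epU m v x p i (t i) t) ≤ ε) ∧
      -- M is interim IR
      (∀ (i : Fin n) (s : Fin (m i)), 0 ≤ iU m v x p i s s) ∧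
      -- every welfare-preserving BIC and interim IR mechanism loses revenue
      (∀ (x' : (∀ i, Fin (m i)) → Fin k → ℝ) (p' : Fin n → (∀ i, Fin (m i)) → ℝ),
        (∀ t o, 0 ≤ x' t o) → (∀ t, ∑ o, x' t o = 1) → (∀ i t, 0 ≤ p' i t) →
        (∀ (i : Fin n) (s s' : Fin (m i)), iU m v x' p' i s s ≥ iU m v x' p' i s s') →
        (∀ (i : Fin n) (s : Fin (m i)), 0 ≤ iU m v x' p' i s s) →
        Wel m v x' ≥ Wel m v x →
        Rev m p' ≤ Rev m p - ∑ i, ((m i : ℝ) - 1) * ε / 2) := by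
  have (j : Fin n) : NeZero (m j) := ⟨by have := hm j; omega⟩
  let e := Fintype.equivFin (∀ j, Fin (m j))
  have hgain (i : Fin n) (s a : Fin (m i)) := ladderVal_sub_self_le hε.le s a
  refine ⟨_, coordVal e fun _ => ladderVal ε, profileAlloc e, ownValuePay fun _ => ladderVal ε,
    fun i s o => ladderVal_nonneg hε.le _ _, profileAlloc_nonneg e, sum_profileAlloc e,
    fun i t => ladderVal_nonneg hε.le _ _, fun i s s' => ?_,
    fun i => expected_exPostRegret_ownValuePay_le e _ hgain i _, fun i s => ?_, ?_⟩
  · rw [iU_ownValuePay, iU_ownValuePay, sub_self]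
    linarith [hgain i s s']
  · rw [iU_ownValuePay, sub_self]
  · intro x p hx₀ hx₁ _ hIC hIR hW
    obtain rfl := eq_profileAlloc_of_Wel_le e _ (fun t u => sum_ladderVal_lt hε) x hx₀ hx₁ hW
    exact Rev_le_ownValuePay_ladderVal_sub e p hIC hIR
end

section
/- (Rotation step.) Let T be a finite type set, f the uniform distribution on T, O a finite outcome set, v a valuation, and M = (x, p) a mechanism. Let t^(1), …, t^(l) ∈ T be distinct types forming a cycle, i.e., u(t^(j), M(t^(j+1))) ≥ u(t^(j), M(t^(j))) for all j ∈ {1, …, l} with indices taken modulo l. Define M' = (x', p') by x'(t^(j)) = x(t^(j+1)) and p'(t^(j)) = p(t^(j+1)) for j ∈ {1, …, l}, and M'(t) = M(t) for all other t ∈ T. Then R(M') = R(M), u(t, M'(t)) ≥ u(t, M(t)) for every t ∈ T (so W(M') ≥ W(M)), and if M is IR then M' is IR. -/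
open Finset

/-- Rotation step: rotating the allocation and payment of a mechanism
along a cycle in the type graph (uniform type distribution) preserves revenue, weakly
improves every type's truthful utility (hence welfare), and preserves IR. -/
theorem rotation_step
    {T O : Type} [Fintype T] [Fintype O] [Nonempty T]
    (v : T → O → ℝ)
    (x : T → O → ℝ) (p : T → ℝ)
    (l : ℕ) [NeZero l] (c : ZMod l → T) (hc : Function.Injective c)
    -- t^(1), …, t^(l) form a cycle: each weakly prefers the outcome of its successor
    (hcycle : ∀ j : ZMod l,
      (∑ o, x (c (j + 1)) o * v (c j) o) - p (c (j + 1))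
        ≥ (∑ o, x (c j) o * v (c j) o) - p (c j))
    (x' : T → O → ℝ) (p' : T → ℝ)
    -- M' rotates the outcomes along the cycle ...
    (hx'c : ∀ j : ZMod l, x' (c j) = x (c (j + 1)))
    (hp'c : ∀ j : ZMod l, p' (c j) = p (c (j + 1)))
    -- ... and agrees with M elsewhere
    (hx'o : ∀ t, (∀ j, c j ≠ t) → x' t = x t)
    (hp'o : ∀ t, (∀ j, c j ≠ t) → p' t = p t) :
    -- R(M') = R(M)
    (∑ t, (1 / (Fintype.card T : ℝ)) * p' t) = (∑ t, (1 / (Fintype.card T : ℝ)) * p t) ∧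
    -- every type is weakly better off
    (∀ t, (∑ o, x' t o * v t o) - p' t ≥ (∑ o, x t o * v t o) - p t) ∧
    -- W(M') ≥ W(M)
    (∑ t, (1 / (Fintype.card T : ℝ)) * ∑ o, x' t o * v t o)
      ≥ (∑ t, (1 / (Fintype.card T : ℝ)) * ∑ o, x t o * v t o) ∧
    -- IR is preserved
    ((∀ t, 0 ≤ (∑ o, x t o * v t o) - p t) → ∀ t, 0 ≤ (∑ o, x' t o * v t o) - p' t) := by
  classical
  have hutil : ∀ t, (∑ o, x' t o * v t o) - p' t ≥ (∑ o, x t o * v t o) - p t := by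
    intro t
    by_cases h : ∃ j, c j = t
    · obtain ⟨j, rfl⟩ := h
      rw [hx'c j, hp'c j]
      exact hcycle j
    · push_neg at h
      rw [hx'o t h, hp'o t h]
  have hsum : ∀ (q q' : T → ℝ), (∀ j, q' (c j) = q (c (j + 1))) →
      (∀ t, (∀ j, c j ≠ t) → q' t = q t) → ∑ t, q' t = ∑ t, q t := by
    intro q q' h1 h2
    set s : Finset T := Finset.univ.image c with hs
    have hsplit : ∀ r : T → ℝ, ∑ t, r t = ∑ t ∈ s, r t + ∑ t ∈ sᶜ, r t :=
      fun r => (Finset.sum_add_sum_compl s r).symm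
    rw [hsplit q', hsplit q]
    have hin : ∑ t ∈ s, q' t = ∑ t ∈ s, q t := by
      rw [Finset.sum_image (fun a _ b _ h => hc h), Finset.sum_image (fun a _ b _ h => hc h)]
      calc ∑ j, q' (c j) = ∑ j, q (c (j + 1)) := by simp [h1]
        _ = ∑ j, q (c j) := Fintype.sum_equiv (Equiv.addRight 1) _ _ (fun j => rfl)
    have hout : ∑ t ∈ sᶜ, q' t = ∑ t ∈ sᶜ, q t := by
      apply Finset.sum_congr rfl
      intro t ht
      apply h2
      intro j hj
      simp only [Finset.mem_compl, hs, Finset.mem_image] at ht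
      exact ht ⟨j, Finset.mem_univ j, hj⟩
    rw [hin, hout]
  have hκ : (0:ℝ) ≤ 1 / (Fintype.card T : ℝ) := by positivity
  have hrev : (∑ t, (1 / (Fintype.card T : ℝ)) * p' t)
      = (∑ t, (1 / (Fintype.card T : ℝ)) * p t) :=
    hsum (fun t => (1 / (Fintype.card T : ℝ)) * p t)
      (fun t => (1 / (Fintype.card T : ℝ)) * p' t)
      (fun j => by simp only [hp'c j]) (fun t ht => by simp only [hp'o t ht])
  refine ⟨hrev, hutil, ?_, ?_⟩
  · have h1 : ∑ t, (1 / (Fintype.card T : ℝ)) * ((∑ o, x' t o * v t o) - p' t)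
        ≥ ∑ t, (1 / (Fintype.card T : ℝ)) * ((∑ o, x t o * v t o) - p t) := by
      apply Finset.sum_le_sum
      intro t _
      exact mul_le_mul_of_nonneg_left (hutil t) hκ
    simp only [mul_sub, Finset.sum_sub_distrib] at h1
    linarith
  · intro hIR t
    have := hutil t
    have := hIR t
    linarith
end

section
/- (Payment reducing step.) Let T be a finite type set, O a finite outcome set, v a valuation, and M = (x, p) a mechanism. Let S ⊆ T be nonempty with T∖S nonempty, and suppose u(t', M(t̄)) < u(t', M(t')) for all t' ∈ T∖S and t̄ ∈ S. Let ε* = min_{t'∈T∖S, t̄∈S} (u(t', M(t')) − u(t', M(t̄))) > 0, let 0 ≤ δ ≤ ε*, and define M' = (x', p') by x' = x, p'(t̄) = p(t̄) − δ for t̄ ∈ S, and p'(t) = p(t) for t ∈ T∖S. Then: (i) u(t', M'(t̄)) ≤ u(t', M'(t')) for all t' ∈ T∖S and t̄ ∈ S (only zero- or negative-weight preferences toward S are created); (ii) W(M') = W(M) and u(t, M'(t)) ≥ u(t, M(t)) for all t; (iii) for every t̄ ∈ S and t'' ∈ T∖S, the regret satisfies u(t̄, M'(t'')) − u(t̄,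 M'(t̄)) = u(t̄, M(t'')) − u(t̄, M(t̄)) − δ. -/
open Finset

/-- Payment reducing step: uniformly reducing the payments of a set `S`
of types (containing a node and its ancestors) by `δ ≤ ε*` creates no strict preference
from outside `S` toward `S`, preserves welfare, weakly improves truthful utilities, and
reduces the regret of each type in `S` toward each type outside `S` by exactly `δ`. -/
theorem payment_reducing_step
    {T O : Type} [Fintype T] [Fintype O]
    (f : T → ℝ) (hf : ∀ t, 0 < f t) (hf1 : ∑ t, f t = 1)
    (v : T → O → ℝ)
    (x : T → O → ℝ) (p : T → ℝ)
    (S : Finset T) (hS : S.Nonempty) (hSc : ∃ t, t ∉ S)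
    -- every type outside S strictly prefers its own outcome to every outcome of S
    (hstrict : ∀ t' ∉ S, ∀ tb ∈ S,
      (∑ o, x tb o * v t' o) - p tb < (∑ o, x t' o * v t' o) - p t')
    (δ : ℝ) (hδ0 : 0 ≤ δ)
    -- δ ≤ ε* = min over t' ∉ S, tb ∈ S of the utility gaps
    (hδε : ∀ t' ∉ S, ∀ tb ∈ S,
      δ ≤ ((∑ o, x t' o * v t' o) - p t') - ((∑ o, x tb o * v t' o) - p tb))
    (p' : T → ℝ)
    -- M' = (x, p') reduces payments on S by δ and keeps the rest
    (hp'S : ∀ t ∈ S, p' t = p t - δ)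
    (hp'c : ∀ t ∉ S, p' t = p t) :
    -- (i) no type outside S strictly prefers any outcome of S under M'
    (∀ t' ∉ S, ∀ tb ∈ S,
      (∑ o, x tb o * v t' o) - p' tb ≤ (∑ o, x t' o * v t' o) - p' t') ∧
    -- (ii) W(M') = W(M) and truthful utilities weakly improve
    (∑ t, f t * ∑ o, x t o * v t o) = (∑ t, f t * ∑ o, x t o * v t o) ∧
    (∀ t, (∑ o, x t o * v t o) - p' t ≥ (∑ o, x t o * v t o) - p t) ∧
    -- (iii) regret from S toward T∖S drops by exactly δ
    (∀ tb ∈ S, ∀ t'' ∉ S,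
      ((∑ o, x t'' o * v tb o) - p' t'') - ((∑ o, x tb o * v tb o) - p' tb)
        = ((∑ o, x t'' o * v tb o) - p t'') - ((∑ o, x tb o * v tb o) - p tb) - δ) := by
  refine ⟨?_, rfl, ?_, ?_⟩
  · intro t' ht' tb htb
    rw [hp'S tb htb, hp'c t' ht']
    have := hδε t' ht' tb htb
    linarith
  · intro t
    by_cases h : t ∈ S
    · rw [hp'S t h]; linarith
    · rw [hp'c t h]
  · intro tb htb t'' ht''
    rw [hp'S tb htb, hp'c t'' ht'']
    ring
end

section
/- (Fractional rotation preserves revenue and ex-ante allocation.) Let T be a finite type set, f a full-support probability distribution on T, O a finite outcome set, and M = (x, p) a mechanism. Let t^(1), …, t^(l) ∈ T be distinct, let k ∈ {1, …, l} satisfy f(t^(k)) = min_{j∈[l]} f(t^(j)), and define M' = (x', p') by x'(t^(j)) = ((f(t^(j)) − f(t^(k)))·x(t^(j)) + f(t^(k))·x(t^(j+1)))/f(t^(j)) and p'(t^(j)) = ((f(t^(j)) − f(t^(k)))·p(t^(j)) + f(t^(k))·p(t^(j+1)))/f(t^(j)) for j ∈ {1, …, l} (indices modulo l), and M'(t) =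 M(t) otherwise. Then ∑_{j=1}^l f(t^(j))·p'(t^(j)) = ∑_{j=1}^l f(t^(j))·p(t^(j)) and ∑_{j=1}^l f(t^(j))·x'(t^(j)) = ∑_{j=1}^l f(t^(j))·x(t^(j)) as vectors in ℝ^O; consequently R(M') = R(M) and ∑_{t∈T} f(t)·x'(t) = ∑_{t∈T} f(t)·x(t). -/
open Finset

/-- Fractional rotation preserves revenue and the ex-ante allocation:
the fractional rotation of a mechanism along distinct types `c 0, …, c (l-1)` with
rotation fraction `f(c k)/f(c j)`, where `f (c k)` is minimal, preserves the
`f`-weighted sum of payments and of allocations over the cycle, hence preserves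
expected revenue and the ex-ante allocation. -/
theorem fractional_rotation_revenue_allocation
    {T O : Type} [Fintype T] [Fintype O]
    (f : T → ℝ) (hf : ∀ t, 0 < f t) (hf1 : ∑ t, f t = 1)
    (x : T → O → ℝ) (p : T → ℝ)
    (l : ℕ) [NeZero l] (c : ZMod l → T) (hc : Function.Injective c)
    (k : ZMod l) (hk : ∀ j, f (c k) ≤ f (c j))
    (x' : T → O → ℝ) (p' : T → ℝ)
    -- fractional rotation along the cycle ...
    (hx'c : ∀ (j : ZMod l) (o : O),
      x' (c j) o = ((f (c j) - f (c k)) * x (c j) o + f (c k) * x (c (j + 1)) o) / f (c j))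
    (hp'c : ∀ j : ZMod l,
      p' (c j) = ((f (c j) - f (c k)) * p (c j) + f (c k) * p (c (j + 1))) / f (c j))
    -- ... and unchanged elsewhere
    (hx'o : ∀ t, (∀ j, c j ≠ t) → x' t = x t)
    (hp'o : ∀ t, (∀ j, c j ≠ t) → p' t = p t) :
    (∑ j : ZMod l, f (c j) * p' (c j) = ∑ j : ZMod l, f (c j) * p (c j)) ∧
    (∀ o, ∑ j : ZMod l, f (c j) * x' (c j) o = ∑ j : ZMod l, f (c j) * x (c j) o) ∧
    -- consequently R(M') = R(M) ...
    (∑ t, f t * p' t = ∑ t, f t * p t) ∧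
    -- ... and the ex-ante allocation is preserved
    (∀ o, ∑ t, f t * x' t o = ∑ t, f t * x t o) := by
  classical
  have hfc : ∀ t, f t ≠ 0 := fun t => (hf t).ne'
  have key : ∀ (g g' : T → ℝ),
      (∀ j : ZMod l, g' (c j) = ((f (c j) - f (c k)) * g (c j) + f (c k) * g (c (j+1))) / f (c j)) →
      ∑ j : ZMod l, f (c j) * g' (c j) = ∑ j : ZMod l, f (c j) * g (c j) := by
    intro g g' h
    have h1 : ∀ j : ZMod l, f (c j) * g' (c j)
        = f (c j) * g (c j) - f (c k) * g (c j) + f (c k) * g (c (j+1)) := by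
      intro j
      rw [h j, mul_div_cancel₀ _ (hfc (c j))]
      ring
    simp_rw [h1]
    rw [Finset.sum_add_distrib, Finset.sum_sub_distrib]
    have h2 : ∑ j : ZMod l, f (c k) * g (c (j+1)) = ∑ j : ZMod l, f (c k) * g (c j) :=
      Fintype.sum_equiv (Equiv.addRight 1) _ _ (fun j => rfl)
    rw [h2]; ring
  have full : ∀ (g g' : T → ℝ),
      (∑ j : ZMod l, f (c j) * g' (c j) = ∑ j : ZMod l, f (c j) * g (c j)) →
      (∀ t, (∀ j, c j ≠ t) → g' t = g t) →
      ∑ t, f t * g' t = ∑ t, f t * g t := by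
    intro g g' hcyc ho
    have him : ∀ (h : T → ℝ), ∑ t ∈ Finset.univ.image c, f t * h t
        = ∑ j : ZMod l, f (c j) * h (c j) :=
      fun h => Finset.sum_image (fun a _ b _ hab => hc hab)
    have hcompl : ∀ t ∈ (Finset.univ.image c)ᶜ, f t * g' t = f t * g t := by
      intro t ht
      simp only [Finset.mem_compl, Finset.mem_image, Finset.mem_univ, true_and, not_exists] at ht
      rw [ho t ht]
    calc ∑ t, f t * g' t
        = ∑ t ∈ Finset.univ.image c, f t * g' t + ∑ t ∈ (Finset.univ.image c)ᶜ, f t * g' t := by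
          rw [Finset.sum_add_sum_compl]
      _ = ∑ t ∈ Finset.univ.image c, f t * g t + ∑ t ∈ (Finset.univ.image c)ᶜ, f t * g t := by
          rw [him, him, hcyc, Finset.sum_congr rfl hcompl]
      _ = ∑ t, f t * g t := Finset.sum_add_sum_compl _ _
  have hP := key p p' hp'c
  have hX : ∀ o, ∑ j : ZMod l, f (c j) * x' (c j) o = ∑ j : ZMod l, f (c j) * x (c j) o :=
    fun o => key (fun t => x t o) (fun t => x' t o) (fun j => hx'c j o)
  refine ⟨hP, hX, full p p' hP hp'o, fun o =>
    full (fun t => x t o) (fun t => x' t o) (hX o) (fun t ht => congrFun (hx'o t ht) o)⟩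
end

section
/- (Fractional rotation does not increase incoming regret weight from outside the cycle.) Let T be a finite type set, f a full-support probability distribution on T, O a finite outcome set, v a valuation, and M = (x, p) a mechanism. Let C = {t^(1), …, t^(l)} ⊆ T be distinct types, let k satisfy f(t^(k)) = min_{j∈[l]} f(t^(j)), and let M' = (x', p') be the fractional rotation of M along C: x'(t^(j)) = ((f(t^(j)) − f(t^(k)))·x(t^(j)) + f(t^(k))·x(t^(j+1)))/f(t^(j)), p'(t^(j)) = ((f(t^(j)) − f(t^(k)))·p(t^(j)) + f(t^(k))·p(t^(j+1)))/f(t^(j)) (indices modulo l), with M' = M outside C. Then for every t ∈ T∖C: ∑_{j=1}^l f(t^(j))·f(t)·[u(t, M'(t^(j))) − u(t, M'(t))]₊ ≤ ∑_{j=1}^l f(t^(j))·f(t)·[u(t, M(t^(j))) − u(t, M(t))]₊, where [z]₊ = max(z, 0). -/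
open Finset

/-!
Utility is affine in the allocation and payment of the reported type, so the regret of an
outside type `t` towards the rotated `c j` is the convex combination, with weights
`(f (c j) - f (c k)) / f (c j)` and `f (c k) / f (c j)`, of its regrets towards `c j` and
`c (j + 1)`. The positive part is convex, and after multiplying by `f (c j)` and summing over
the cycle the shifted terms `f (c k) · [regret towards c (j + 1)]₊` reindex to
`f (c k) · [regret towards c j]₊`, which recombine with the first terms into the original sum.
-/

section Utility

variable {T O : Type} [Fintype O]

/-- The paper's `u(t, M(s))` for `M = (x, p)`. -/
def utility (v : T → O → ℝ) (x : T → O → ℝ) (p : T → ℝ) (t s : T) : ℝ :=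
  ∑ o, x s o * v t o - p s

theorem utility_of_mix {v x x' : T → O → ℝ} {p p' : T → ℝ} {t s s₁ s₂ : T} {a b d : ℝ}
    (hx' : ∀ o, x' s o = (a * x s₁ o + b * x s₂ o) / d)
    (hp' : p' s = (a * p s₁ + b * p s₂) / d) :
    utility v x' p' t s = (a * utility v x p t s₁ + b * utility v x p t s₂) / d := by
  simp only [utility, hx', hp', div_mul_eq_mul_div, ← Finset.sum_div, add_mul, mul_assoc,
    Finset.sum_add_distrib, ← Finset.mul_sum]
  ring

end Utility

theorem mul_max_mix_div_le {a b d u w : ℝ} (ha : 0 ≤ a) (hb : 0 ≤ b) (hd : 0 < d) :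
    d * max ((a * u + b * w) / d) 0 ≤ a * max u 0 + b * max w 0 := by
  rw [mul_max_of_nonneg _ _ hd.le, mul_div_cancel₀ _ hd.ne', mul_zero]
  refine max_le ?_ (by positivity)
  gcongr <;> exact le_max_left _ _

theorem sum_sub_mul_add_mul_shift {G : Type*} [AddGroup G] [Fintype G]
    (w m : G → ℝ) (a : ℝ) (g : G) :
    ∑ j, ((w j - a) * m j + a * m (j + g)) = ∑ j, w j * m j := by
  have h_shift : ∑ j, m (j + g) = ∑ j, m j := Equiv.sum_comp (Equiv.addRight g) m
  rw [Finset.sum_add_distrib, ← Finset.mul_sum, h_shift, Finset.mul_sum, ← Finset.sum_add_distrib]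
  exact Finset.sum_congr rfl fun j _ => by ring

theorem fractional_rotation_incoming_weight_general
    {T O : Type} [Fintype O]
    (f : T → ℝ) (hf : ∀ t, 0 < f t)
    (v : T → O → ℝ)
    (x : T → O → ℝ) (p : T → ℝ)
    (l : ℕ) [NeZero l] (c : ZMod l → T)
    (k : ZMod l) (hk : ∀ j, f (c k) ≤ f (c j))
    (x' : T → O → ℝ) (p' : T → ℝ)
    -- fractional rotation along the cycle ...
    (hx'c : ∀ (j : ZMod l) (o : O),
      x' (c j) o = ((f (c j) - f (c k)) * x (c j) o + f (c k) * x (c (j + 1)) o) / f (c j))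
    (hp'c : ∀ j : ZMod l,
      p' (c j) = ((f (c j) - f (c k)) * p (c j) + f (c k) * p (c (j + 1))) / f (c j))
    -- ... and unchanged elsewhere
    (hx'o : ∀ t, (∀ j, c j ≠ t) → x' t = x t)
    (hp'o : ∀ t, (∀ j, c j ≠ t) → p' t = p t) :
    ∀ t, (∀ j, c j ≠ t) →
      ∑ j : ZMod l, f (c j) * f t *
          max (((∑ o, x' (c j) o * v t o) - p' (c j)) - ((∑ o, x' t o * v t o) - p' t)) 0
        ≤ ∑ j : ZMod l, f (c j) * f t *
            max (((∑ o, x (c j) o * v t o) - p (c j)) - ((∑ o, x t o * v t o) - p t)) 0 := by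
  intro t ht
  set u := utility v x p t
  set regret : ZMod l → ℝ := fun j => max (u (c j) - u t) 0
  have h_term : ∀ j, f (c j) * max (utility v x' p' t (c j) - utility v x' p' t t) 0
      ≤ (f (c j) - f (c k)) * regret j + f (c k) * regret (j + 1) := by
    intro j
    have hf_cj := hf (c j)
    have h_mix : utility v x' p' t (c j) - utility v x' p' t t
        = ((f (c j) - f (c k)) * (u (c j) - u t) + f (c k) * (u (c (j + 1)) - u t)) / f (c j) := by
      have h_out : utility v x' p' t t = u t := by simp only [u, utility, hx'o t ht, hp'o t ht]
      rw [utility_of_mix (hx'c j) (hp'c j), h_out]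
      field_simp
      ring
    rw [h_mix]
    exact mul_max_mix_div_le (sub_nonneg.mpr (hk j)) (hf (c k)).le hf_cj
  calc _ ≤ ∑ j, f t * ((f (c j) - f (c k)) * regret j + f (c k) * regret (j + 1)) := by
        refine Finset.sum_le_sum fun j _ => ?_
        rw [mul_right_comm, mul_comm _ (f t)]
        exact mul_le_mul_of_nonneg_left (h_term j) (hf t).le
    _ = f t * ∑ j, f (c j) * regret j := by
        rw [← Finset.mul_sum, sum_sub_mul_add_mul_shift (fun j => f (c j)) regret]
    _ = _ := by
        rw [Finset.mul_sum]
        exact Finset.sum_congr rfl fun j _ => by simp only [regret, u, utility]; ring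

/-- Fractional rotation does not increase incoming regret weight from
outside the cycle: for every type `t` outside the cycle, the total weight of the
edges in the type graph from `t` into the cycle does not increase under fractional
rotation. -/
theorem fractional_rotation_incoming_weight
    {T O : Type} [Fintype T] [Fintype O]
    (f : T → ℝ) (hf : ∀ t, 0 < f t) (hf1 : ∑ t, f t = 1)
    (v : T → O → ℝ)
    (x : T → O → ℝ) (p : T → ℝ)
    (l : ℕ) [NeZero l] (c : ZMod l → T) (hc : Function.Injective c)
    (k : ZMod l) (hk : ∀ j, f (c k) ≤ f (c j))
    (x' : T → O → ℝ) (p' : T → ℝ)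
    -- fractional rotation along the cycle ...
    (hx'c : ∀ (j : ZMod l) (o : O),
      x' (c j) o = ((f (c j) - f (c k)) * x (c j) o + f (c k) * x (c (j + 1)) o) / f (c j))
    (hp'c : ∀ j : ZMod l,
      p' (c j) = ((f (c j) - f (c k)) * p (c j) + f (c k) * p (c (j + 1))) / f (c j))
    -- ... and unchanged elsewhere
    (hx'o : ∀ t, (∀ j, c j ≠ t) → x' t = x t)
    (hp'o : ∀ t, (∀ j, c j ≠ t) → p' t = p t) :
    ∀ t, (∀ j, c j ≠ t) →
      ∑ j : ZMod l, f (c j) * f t *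
          max (((∑ o, x' (c j) o * v t o) - p' (c j)) - ((∑ o, x' t o * v t o) - p' t)) 0
        ≤ ∑ j : ZMod l, f (c j) * f t *
            max (((∑ o, x (c j) o * v t o) - p (c j)) - ((∑ o, x t o * v t o) - p t)) 0 :=
  fractional_rotation_incoming_weight_general f hf v x p l c k hk x' p' hx'c hp'c hx'o hp'o
end

section
/- (Fractional rotation weakly improves every type in the cycle.) Let T be a finite type set, f a full-support probability distribution on T, O a finite outcome set, v a valuation, and M = (x, p) a mechanism. Let t^(1), …, t^(l) ∈ T be distinct types forming a cycle, i.e., u(t^(j), M(t^(j+1))) ≥ u(t^(j), M(t^(j))) for all j (indices modulo l), let k satisfy f(t^(k)) = min_{j∈[l]} f(t^(j)), and let M' be the fractional rotation of M along the cycle: x'(t^(j)) = ((f(t^(j)) − f(t^(k)))·x(t^(j)) + f(t^(k))·x(t^(j+1)))/f(t^(j)), p'(t^(j)) = ((f(t^(j)) − f(t^(k)))·p(t^(j)) + f(t^(k))·p(t^(j+1)))/f(t^(j)), with M' = M outside the cycle. Then u(t^(j), M'(t^(j))) ≥ u(t^(j), M(t^(j))) for every j ∈ {1, …, l}; consequently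 u(t, M'(t)) ≥ u(t, M(t)) for all t ∈ T, W(M') ≥ W(M), and if M is IR then M' is IR. -/
open Finset

/-- Fractional rotation weakly improves every type in the cycle:
if `c 0, …, c (l-1)` form a cycle of weak preferences, then after fractional rotation
each type in the cycle is weakly better off; consequently every type's truthful utility
weakly improves, welfare weakly increases, and IR is preserved. -/
theorem fractional_rotation_improves_cycle
    {T O : Type} [Fintype T] [Fintype O]
    (f : T → ℝ) (hf : ∀ t, 0 < f t) (hf1 : ∑ t, f t = 1)
    (v : T → O → ℝ)
    (x : T → O → ℝ) (p : T → ℝ)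
    (l : ℕ) [NeZero l] (c : ZMod l → T) (hc : Function.Injective c)
    -- the types form a cycle: each weakly prefers the outcome of its successor
    (hcycle : ∀ j : ZMod l,
      (∑ o, x (c (j + 1)) o * v (c j) o) - p (c (j + 1))
        ≥ (∑ o, x (c j) o * v (c j) o) - p (c j))
    (k : ZMod l) (hk : ∀ j, f (c k) ≤ f (c j))
    (x' : T → O → ℝ) (p' : T → ℝ)
    -- fractional rotation along the cycle ...
    (hx'c : ∀ (j : ZMod l) (o : O),
      x' (c j) o = ((f (c j) - f (c k)) * x (c j) o + f (c k) * x (c (j + 1)) o) / f (c j))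
    (hp'c : ∀ j : ZMod l,
      p' (c j) = ((f (c j) - f (c k)) * p (c j) + f (c k) * p (c (j + 1))) / f (c j))
    -- ... and unchanged elsewhere
    (hx'o : ∀ t, (∀ j, c j ≠ t) → x' t = x t)
    (hp'o : ∀ t, (∀ j, c j ≠ t) → p' t = p t) :
    -- every type in the cycle is weakly better off
    (∀ j : ZMod l,
      (∑ o, x' (c j) o * v (c j) o) - p' (c j) ≥ (∑ o, x (c j) o * v (c j) o) - p (c j)) ∧
    -- every type's truthful utility weakly improves
    (∀ t, (∑ o, x' t o * v t o) - p' t ≥ (∑ o, x t o * v t o) - p t) ∧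
    -- W(M') ≥ W(M)
    (∑ t, f t * ∑ o, x' t o * v t o) ≥ (∑ t, f t * ∑ o, x t o * v t o) ∧
    -- IR is preserved
    ((∀ t, 0 ≤ (∑ o, x t o * v t o) - p t) → ∀ t, 0 ≤ (∑ o, x' t o * v t o) - p' t) := by
  have hfk : 0 < f (c k) := hf (c k)
  -- value of x' at cycle points
  have hval : ∀ j : ZMod l, (∑ o, x' (c j) o * v (c j) o)
      = ((f (c j) - f (c k)) * (∑ o, x (c j) o * v (c j) o)
        + f (c k) * (∑ o, x (c (j + 1)) o * v (c j) o)) / f (c j) := by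
    intro j
    rw [Finset.mul_sum, Finset.mul_sum, ← Finset.sum_add_distrib, Finset.sum_div]
    refine Finset.sum_congr rfl fun o _ => ?_
    rw [hx'c j o]
    ring
  -- part 1
  have part1 : ∀ j : ZMod l,
      (∑ o, x' (c j) o * v (c j) o) - p' (c j)
        ≥ (∑ o, x (c j) o * v (c j) o) - p (c j) := by
    intro j
    have hfj : 0 < f (c j) := hf (c j)
    rw [hval j, hp'c j, ge_iff_le, div_sub_div_same, le_div_iff₀ hfj]
    have h1 := hcycle j
    have h2 := hk j
    nlinarith [hcycle j, hk j, hfk]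
  refine ⟨part1, ?_, ?_, ?_⟩
  · -- every type
    intro t
    by_cases h : ∃ j, c j = t
    · obtain ⟨j, rfl⟩ := h; exact part1 j
    · push_neg at h
      rw [hx'o t h, hp'o t h]
  · -- welfare
    rw [ge_iff_le, ← sub_nonneg, ← Finset.sum_sub_distrib]
    set g : T → ℝ := fun t => f t * (∑ o, x' t o * v t o) - f t * (∑ o, x t o * v t o) with hg
    have himg : ∑ t, g t = ∑ j : ZMod l, g (c j) := by
      classical
      rw [← Finset.sum_image (g := c) (f := g) (fun a _ b _ h => hc h)]
      refine (Finset.sum_subset (Finset.subset_univ _) ?_).symm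
      intro t _ ht
      have h : ∀ j, c j ≠ t := by
        intro j hj
        exact ht (Finset.mem_image.2 ⟨j, Finset.mem_univ j, hj⟩)
      simp [hg, hx'o t h]
    have hgj : ∀ j : ZMod l, g (c j)
        = f (c k) * ((∑ o, x (c (j + 1)) o * v (c j) o) - (∑ o, x (c j) o * v (c j) o)) := by
      intro j
      have hfj : (f (c j)) ≠ 0 := (hf (c j)).ne'
      rw [hg]
      simp only
      rw [hval j]
      field_simp
      ring
    have htel : ∑ j : ZMod l, (p (c (j + 1)) - p (c j)) = 0 := by
      rw [Finset.sum_sub_distrib, sub_eq_zero]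
      exact Fintype.sum_equiv (Equiv.addRight 1) _ _ (fun j => rfl)
    calc (0:ℝ) = f (c k) * ∑ j : ZMod l, (p (c (j + 1)) - p (c j)) := by rw [htel, mul_zero]
      _ ≤ ∑ t, g t := by
          rw [himg, Finset.mul_sum]
          refine Finset.sum_le_sum fun j _ => ?_
          rw [hgj j]
          have := hcycle j
          nlinarith [hcycle j, hfk]
  · -- IR
    intro hIR t
    have h2 : (∑ o, x' t o * v t o) - p' t ≥ (∑ o, x t o * v t o) - p t := by
      by_cases h : ∃ j, c j = t
      · obtain ⟨j, rfl⟩ := h; exact part1 j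
      · push_neg at h
        rw [hx'o t h, hp'o t h]
    exact le_trans (hIR t) h2
end
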